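/- arXiv:1002.3610 — 11 statements merged into one kernel-verified Lean document; each statement's English description precedes it below -/
import Mathlib

section
/- Let B be the closed unit ball of a real Hilbert space H and let δ > 0. Let z ∈ B with ‖z‖ > 1 − δ, and let μ be a Borel probability measure on B whose barycenter is z. Then the μ-measure of the closed ball of radius δ centered at z is at least (δ² − (1 − ‖z‖²)) / (δ² − (1 − ‖z‖)²). -/
open MeasureTheory

/-- Lemma `hilbertball`: lower bound on the measure of the ball of radius `δ`
around the barycenter `z` of a probability measure on the unit ball. -/
theorem stmt_0 {H : Type*} [NormedAddCommGroup H] [InnerProductSpace ℝ H]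
    [CompleteSpace H] [MeasurableSpace H] [BorelSpace H]
    (δ : ℝ) (hδ : 0 < δ) (z : H) (hz1 : ‖z‖ ≤ 1) (hz2 : 1 - δ < ‖z‖)
    (μ : Measure H) [IsProbabilityMeasure μ]
    (hsupp : μ (Metric.closedBall (0 : H) 1) = 1)
    (hbar : ∫ x, x ∂μ = z) :
    ENNReal.ofReal ((δ ^ 2 - (1 - ‖z‖ ^ 2)) / (δ ^ 2 - (1 - ‖z‖) ^ 2)) ≤
      μ (Metric.closedBall z δ) := by
  set a := ‖z‖ with ha
  have ha0 : 0 ≤ a := norm_nonneg z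
  set A := Metric.closedBall z δ with hA
  have hAmeas : MeasurableSet A := measurableSet_closedBall
  -- a.e. x is in the unit ball
  have hae : ∀ᵐ x ∂μ, ‖x‖ ≤ 1 := by
    have h0 : μ (Metric.closedBall (0:H) 1)ᶜ = 0 := by
      rw [measure_compl measurableSet_closedBall (measure_ne_top μ _), hsupp, measure_univ]
      simp
    filter_upwards [measure_eq_zero_iff_ae_notMem.mp h0] with x hx
    simpa [Metric.mem_closedBall, dist_zero_right] using hx
  -- case on integrability of id (H may be non-separable)
  by_cases hid : Integrable (id : H → H) μ
  case neg =>
    have hz0 : z = 0 := by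
      have h := integral_undef hid
      simp only [id_eq] at h
      rw [← hbar, h]
    have ha0' : a = 0 := by rw [ha, hz0, norm_zero]
    have hδ1 : 1 < δ := by linarith [hz2, ha0'.symm ▸ hz2]
    have hsub : Metric.closedBall (0 : H) 1 ⊆ Metric.closedBall z δ := by
      rw [hz0]; exact Metric.closedBall_subset_closedBall (le_of_lt hδ1)
    have h1 : (1 : ENNReal) ≤ μ (Metric.closedBall z δ) := by
      rw [← hsupp]; exact measure_mono hsub
    refine le_trans ?_ h1
    rw [ha0']
    have : ((δ ^ 2 - (1 - (0:ℝ) ^ 2)) / (δ ^ 2 - (1 - 0) ^ 2)) = 1 := by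
      rw [div_eq_one_iff_eq (by nlinarith)]; ring
    rw [this]
    simp
  -- ∫ ⟪z,x⟫ = ‖z‖²
  have hint : ∫ x, (inner ℝ z x : ℝ) ∂μ = a ^ 2 := by
    have h := (innerSL ℝ z).integral_comp_comm hid
    simp only [innerSL_apply_apply, id] at h
    rw [h, hbar, real_inner_self_eq_norm_sq]
  set c : ℝ := (a ^ 2 + 1 - δ ^ 2) / 2 with hc
  set g : H → ℝ := fun x => A.indicator (fun _ => a) x + Aᶜ.indicator (fun _ => c) x with hg
  have hgint : Integrable g μ := by
    exact ((integrable_const a).indicator hAmeas).add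
      ((integrable_const c).indicator hAmeas.compl)
  have hfint : Integrable (fun x => (inner ℝ z x : ℝ)) μ := by
    have := (innerSL ℝ z).integrable_comp hid
    simpa [innerSL_apply_apply, id] using this
  -- pointwise a.e. bound
  have hle : ∀ᵐ x ∂μ, (inner ℝ z x : ℝ) ≤ g x := by
    filter_upwards [hae] with x hx
    by_cases hxA : x ∈ A
    · have h1 : (inner ℝ z x : ℝ) ≤ a * ‖x‖ := real_inner_le_norm z x
      have h2 : a * ‖x‖ ≤ a := by nlinarith
      have hgx : g x = a := by simp [hg, hxA]
      rw [hgx]; linarith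
    · have hd : δ ≤ ‖z - x‖ := by
        have := hxA
        simp only [hA, Metric.mem_closedBall, not_le] at this
        rw [dist_eq_norm, ← norm_neg, neg_sub] at this
        linarith
      have hsq : δ ^ 2 ≤ ‖z - x‖ ^ 2 := by nlinarith [norm_nonneg (z - x)]
      have hident : ‖z - x‖ ^ 2 = a ^ 2 - 2 * (inner ℝ z x : ℝ) + ‖x‖ ^ 2 := by
        rw [norm_sub_sq_real]
      have hx2 : ‖x‖ ^ 2 ≤ 1 := by nlinarith [norm_nonneg x]
      have hgx : g x = c := by simp [hg, hxA]
      rw [hgx, hc]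
      nlinarith
  have hmono : a ^ 2 ≤ ∫ x, g x ∂μ := by
    rw [← hint]; exact integral_mono_ae hfint hgint hle
  set p : ℝ := (μ A).toReal with hp
  have hp0 : 0 ≤ p := ENNReal.toReal_nonneg
  have hpc : (μ Aᶜ).toReal = 1 - p := by
    rw [measure_compl hAmeas (measure_ne_top μ _), measure_univ]
    rw [ENNReal.toReal_sub_of_le (prob_le_one) (by simp)]
    simp [hp]
  have hgval : ∫ x, g x ∂μ = a * p + c * (1 - p) := by
    rw [hg, integral_add (((integrable_const a).indicator hAmeas))
      ((integrable_const c).indicator hAmeas.compl),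
      integral_indicator_const _ hAmeas, integral_indicator_const _ hAmeas.compl, Measure.real, Measure.real, hpc]
    simp [hp, mul_comm]
  rw [hgval] at hmono
  -- arithmetic
  have hD : 0 < δ ^ 2 - (1 - a) ^ 2 := by nlinarith
  have hratio : (δ ^ 2 - (1 - a ^ 2)) / (δ ^ 2 - (1 - a) ^ 2) ≤ p := by
    rw [div_le_iff₀ hD]
    nlinarith
  calc ENNReal.ofReal ((δ ^ 2 - (1 - a ^ 2)) / (δ ^ 2 - (1 - a) ^ 2))
      ≤ ENNReal.ofReal p := ENNReal.ofReal_le_ofReal hratio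
    _ = μ A := by rw [hp, ENNReal.ofReal_toReal (measure_ne_top μ A)]
end

section
/- Every convex closed pointed cone in ℝ^d (a closed convex cone containing no line) is μ̃-compact: for every compact set K contained in the cone C and every ε > 0, there exists a compact set K_ε ⊆ C such that for every x ∈ K and every representation x = Σᵢ λᵢ xᵢ as a finite convex combination of points xᵢ ∈ C, the total weight Σ { λᵢ : xᵢ ∉ K_ε } is less than ε. -/
open scoped Classical

open scoped RealInnerProductSpace in
/-- Key functional lemma: a closed convex pointed cone admits a vector `e` with
`c * ‖z‖ ≤ ⟪e, z⟫` on the cone, for some `c > 0`. -/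
theorem stmt_3_aux (d : ℕ) (C : Set (EuclideanSpace ℝ (Fin d)))
    (hclosed : IsClosed C) (hconv : Convex ℝ C)
    (hcone : ∀ x ∈ C, ∀ t : ℝ, 0 ≤ t → t • x ∈ C)
    (hanti : ∀ v ∈ C, -v ∈ C → v = 0)
    (x0 : EuclideanSpace ℝ (Fin d)) (hx0 : x0 ∈ C) (hx0ne : x0 ≠ 0) :
    ∃ (e : EuclideanSpace ℝ (Fin d)) (c : ℝ), 0 < c ∧ ∀ z ∈ C, c * ‖z‖ ≤ ⟪e, z⟫ := by
  classical
  -- the cone as a `ConvexCone`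
  have hadd : ∀ x ∈ C, ∀ y ∈ C, x + y ∈ C := by
    intro x hx y hy
    have h2 : (2:ℝ) • ((1/2 : ℝ) • x + (1/2 : ℝ) • y) ∈ C := by
      refine hcone _ ?_ 2 (by norm_num)
      exact hconv hx hy (by norm_num) (by norm_num) (by norm_num)
    have : (2:ℝ) • ((1/2 : ℝ) • x + (1/2 : ℝ) • y) = x + y := by
      rw [smul_add, smul_smul, smul_smul]; norm_num
    rwa [this] at h2
  set K : ConvexCone ℝ (EuclideanSpace ℝ (Fin d)) :=
    { carrier := C
      smul_mem' := fun c hc x hx => hcone x hx c hc.le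
      add_mem' := fun x hx y hy => hadd x hx y hy } with hK
  have hKC : (K : Set (EuclideanSpace ℝ (Fin d))) = C := rfl
  have hKne : (K : Set (EuclideanSpace ℝ (Fin d))).Nonempty := ⟨x0, hx0⟩
  have hKcl : IsClosed (K : Set (EuclideanSpace ℝ (Fin d))) := hclosed
  set S : Set (EuclideanSpace ℝ (Fin d)) := C ∩ Metric.sphere 0 1 with hS
  have hCS : IsCompact S := (isCompact_sphere 0 1).inter_left hclosed
  -- for each unit vector in the cone, a strictly positive functional
  have hsep : ∀ x : S, ∃ y : EuclideanSpace ℝ (Fin d), (∀ z ∈ C, 0 ≤ ⟪z, y⟫) ∧ 0 < ⟪y, (x : EuclideanSpace ℝ (Fin d))⟫ := by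
    rintro ⟨x, hxC, hxS⟩
    have hxne : x ≠ 0 := by
      intro h
      rw [h] at hxS
      simp at hxS
    have hnx : -x ∉ K := by
      intro h
      exact hxne (hanti x hxC h)
    obtain ⟨y, hy1, hy2⟩ := ProperCone.hyperplane_separation' (⟨K.toPointedCone (.of_nonempty_of_isClosed hKne hKcl), hKcl⟩ : ProperCone ℝ (EuclideanSpace ℝ (Fin d))) hnx
    refine ⟨y, fun z hz => hy1 z hz, ?_⟩
    rw [inner_neg_left, real_inner_comm] at hy2
    linarith
  choose y hy1 hy2 using hsep
  -- finite subcover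
  have hopen : ∀ i : S, IsOpen {v : EuclideanSpace ℝ (Fin d) | 0 < ⟪y i, v⟫} :=
    fun i => isOpen_lt continuous_const (continuous_const.inner continuous_id)
  have hcover : S ⊆ ⋃ i : S, {v : EuclideanSpace ℝ (Fin d) | 0 < ⟪y i, v⟫} := by
    intro x hx
    exact Set.mem_iUnion.2 ⟨⟨x, hx⟩, hy2 ⟨x, hx⟩⟩
  obtain ⟨t, ht⟩ := hCS.elim_finite_subcover _ hopen hcover
  set e : EuclideanSpace ℝ (Fin d) := ∑ i ∈ t, y i with he
  have he0 : ∀ z ∈ C, 0 ≤ ⟪e, z⟫ := by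
    intro z hz
    rw [he, sum_inner]
    exact Finset.sum_nonneg fun i _ => by rw [real_inner_comm]; exact hy1 i z hz
  have hepos : ∀ x ∈ S, 0 < ⟪e, x⟫ := by
    intro x hx
    obtain ⟨i, hit, hi⟩ := Set.mem_iUnion₂.1 (ht hx)
    rw [he, sum_inner]
    refine Finset.sum_pos' (fun j _ => by rw [real_inner_comm]; exact hy1 j x hx.1) ⟨i, hit, hi⟩
  -- minimum on the compact set S
  have hSne : S.Nonempty := by
    refine ⟨‖x0‖⁻¹ • x0, hcone x0 hx0 _ (inv_nonneg.2 (norm_nonneg _)), ?_⟩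
    simp only [Metric.mem_sphere, dist_zero_right, norm_smul, norm_inv, norm_norm]
    rw [inv_mul_cancel₀ (norm_ne_zero_iff.2 hx0ne)]
  have hconte : Continuous (fun v : EuclideanSpace ℝ (Fin d) => ⟪e, v⟫) :=
    continuous_const.inner continuous_id
  obtain ⟨x1, hx1S, hx1min⟩ := hCS.exists_isMinOn hSne hconte.continuousOn
  refine ⟨e, ⟪e, x1⟫, hepos x1 hx1S, ?_⟩
  intro z hz
  rcases eq_or_ne z 0 with rfl | hzne
  · simp
  · have hzS : ‖z‖⁻¹ • z ∈ S := by
      refine ⟨hcone z hz _ (inv_nonneg.2 (norm_nonneg _)), ?_⟩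
      simp only [Metric.mem_sphere, dist_zero_right, norm_smul, norm_inv, norm_norm]
      rw [inv_mul_cancel₀ (norm_ne_zero_iff.2 hzne)]
    have hmin : ⟪e, x1⟫ ≤ ⟪e, ‖z‖⁻¹ • z⟫ := hx1min hzS
    have : ⟪e, ‖z‖⁻¹ • z⟫ = ‖z‖⁻¹ * ⟪e, z⟫ := real_inner_smul_right e z _
    rw [this] at hmin
    have hnz : 0 < ‖z‖ := norm_pos_iff.2 hzne
    calc ⟪e, x1⟫ * ‖z‖ ≤ (‖z‖⁻¹ * ⟪e, z⟫) * ‖z‖ := by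
          exact mul_le_mul_of_nonneg_right hmin hnz.le
      _ = ⟪e, z⟫ := by field_simp

open scoped RealInnerProductSpace in
/-- Every closed convex pointed cone in `ℝ^d` is `μ̃`-compact. -/
theorem stmt_3 (d : ℕ) (C : Set (EuclideanSpace ℝ (Fin d)))
    (hclosed : IsClosed C) (hconv : Convex ℝ C)
    (hcone : ∀ x ∈ C, ∀ t : ℝ, 0 ≤ t → t • x ∈ C)
    (hpointed : ¬ ∃ x v : EuclideanSpace ℝ (Fin d), v ≠ 0 ∧ ∀ t : ℝ, x + t • v ∈ C) :
    ∀ K : Set (EuclideanSpace ℝ (Fin d)), IsCompact K → K ⊆ C →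
    ∀ ε : ℝ, 0 < ε →
    ∃ Kε : Set (EuclideanSpace ℝ (Fin d)), IsCompact Kε ∧ Kε ⊆ C ∧
      ∀ x ∈ K, ∀ (n : ℕ) (l : Fin n → ℝ) (xs : Fin n → EuclideanSpace ℝ (Fin d)),
        (∀ i, 0 ≤ l i) → (∑ i, l i) = 1 → (∀ i, xs i ∈ C) → (∑ i, l i • xs i) = x →
        (∑ i ∈ Finset.univ.filter (fun i => xs i ∉ Kε), l i) < ε := by
  classical
  intro K hK hKC ε hε
  have hanti : ∀ v ∈ C, -v ∈ C → v = 0 := by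
    intro v hv hnv
    by_contra hvne
    apply hpointed
    refine ⟨0, v, hvne, fun t => ?_⟩
    rcases le_or_gt 0 t with ht | ht
    · simpa using hcone v hv t ht
    · have : (0 : EuclideanSpace ℝ (Fin d)) + t • v = (-t) • (-v) := by
        rw [smul_neg, neg_smul, neg_neg, zero_add]
      rw [this]
      exact hcone _ hnv _ (by linarith)
  by_cases htriv : ∀ z ∈ C, z = 0
  · -- trivial cone: C ⊆ {0}
    refine ⟨C, ?_, le_refl _, ?_⟩
    · refine Metric.isCompact_of_isClosed_isBounded hclosed ?_
      refine (Metric.isBounded_closedBall (x := (0 : EuclideanSpace ℝ (Fin d))) (r := 1)).subset ?_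
      intro z hz
      rw [htriv z hz]
      simp
    · intro x hx n l xs hl0 hl1 hxsC hsum
      have : (∑ i ∈ Finset.univ.filter (fun i => xs i ∉ C), l i) = 0 := by
        apply Finset.sum_eq_zero
        intro i hi
        rw [Finset.mem_filter] at hi
        exact absurd (hxsC i) hi.2
      rw [this]; exact hε
  · push_neg at htriv
    obtain ⟨x0, hx0, hx0ne⟩ := htriv
    obtain ⟨e, c, hc, hlow⟩ := stmt_3_aux d C hclosed hconv hcone hanti x0 hx0 hx0ne
    have hconte : Continuous (fun v : EuclideanSpace ℝ (Fin d) => ⟪e, v⟫) :=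
      continuous_const.inner continuous_id
    have he0 : ∀ z ∈ C, 0 ≤ ⟪e, z⟫ := fun z hz =>
      le_trans (mul_nonneg hc.le (norm_nonneg z)) (hlow z hz)
    -- bound of the functional on K
    obtain ⟨M0, hM0⟩ := (hK.image hconte).bddAbove
    set M : ℝ := max M0 0 with hM
    have hMnn : 0 ≤ M := le_max_right _ _
    have hfK : ∀ x ∈ K, ⟪e, x⟫ ≤ M :=
      fun x hx => le_trans (hM0 ⟨x, hx, rfl⟩) (le_max_left _ _)
    set R : ℝ := M / ε + 1 with hR
    have hRpos : 0 < R := by positivity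
    refine ⟨C ∩ {z | ⟪e, z⟫ ≤ R}, ?_, Set.inter_subset_left, ?_⟩
    · refine Metric.isCompact_of_isClosed_isBounded
        (hclosed.inter (isClosed_le hconte continuous_const)) ?_
      refine (Metric.isBounded_closedBall (x := (0 : EuclideanSpace ℝ (Fin d))) (r := R / c)).subset ?_
      rintro z ⟨hzC, hzR⟩
      rw [Metric.mem_closedBall, dist_zero_right]
      rw [le_div_iff₀ hc, mul_comm]
      exact le_trans (hlow z hzC) hzR
    · intro x hx n l xs hl0 hl1 hxsC hsum
      set F := Finset.univ.filter (fun i => xs i ∉ C ∩ {z | ⟪e, z⟫ ≤ R}) with hF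
      have key : (∑ i ∈ F, l i) * R ≤ ⟪e, x⟫ := by
        rw [Finset.sum_mul]
        have step1 : ∑ i ∈ F, l i * R ≤ ∑ i ∈ F, l i * ⟪e, xs i⟫ := by
          refine Finset.sum_le_sum fun i hi => ?_
          rw [hF, Finset.mem_filter] at hi
          have : R < ⟪e, xs i⟫ := by
            by_contra h
            push_neg at h
            exact hi.2 ⟨hxsC i, h⟩
          exact mul_le_mul_of_nonneg_left this.le (hl0 i)
        have step2 : ∑ i ∈ F, l i * ⟪e, xs i⟫ ≤ ∑ i, l i * ⟪e, xs i⟫ := by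
          refine Finset.sum_le_sum_of_subset_of_nonneg (Finset.filter_subset _ _) ?_
          intro i _ _
          exact mul_nonneg (hl0 i) (he0 _ (hxsC i))
        have step3 : ∑ i, l i * ⟪e, xs i⟫ = ⟪e, x⟫ := by
          rw [← hsum, inner_sum]
          exact Finset.sum_congr rfl fun i _ => (real_inner_smul_right e (xs i) (l i)).symm
        linarith
      have hMlt : M < ε * R := by
        rw [hR, mul_add, mul_one, mul_div_cancel₀ _ hε.ne']
        linarith
      have hprod : (∑ i ∈ F, l i) * R < ε * R := lt_of_le_of_lt (le_trans key (hfK x hx)) hMlt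
      have hlt := lt_of_mul_lt_mul_right hprod hRpos.le
      convert hlt using 3
      rfl
end

section
/- For every p > 1, the simplex Δ_p = { x ∈ l^p : x ≥ 0 coordinatewise, Σᵢ xᵢ ≤ 1 } is not μ-compact in the norm topology of l^p. Specifically, there exist a compact set K ⊆ Δ_p and ε > 0 such that no compact set K_ε ⊆ Δ_p satisfies: for every x ∈ K and every representation x = Σᵢ λᵢ xᵢ as a finite convex combination of points of Δ_p, the total weight of the xᵢ outside K_ε is less than ε. -/
open scoped Classical ENNReal
open Filter Topology

set_option synthInstance.maxHeartbeats 1000000 in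
/-- For `p > 1` the simplex `Δ_p ⊆ l^p` is not `μ`-compact. -/
theorem stmt_6 (p : ℝ≥0∞) [Fact (1 ≤ p)] (hp : 1 < p) (hp' : p ≠ ⊤) :
    ∃ K : Set (lp (fun _ : ℕ => ℝ) p), IsCompact K ∧
      K ⊆ {x : lp (fun _ : ℕ => ℝ) p | (∀ i, 0 ≤ (x : ∀ _ : ℕ, ℝ) i) ∧
          Summable (fun i => (x : ∀ _ : ℕ, ℝ) i) ∧ (∑' i, (x : ∀ _ : ℕ, ℝ) i) ≤ 1} ∧
      ∃ ε : ℝ, 0 < ε ∧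
        ∀ Kε : Set (lp (fun _ : ℕ => ℝ) p), IsCompact Kε →
          Kε ⊆ {x : lp (fun _ : ℕ => ℝ) p | (∀ i, 0 ≤ (x : ∀ _ : ℕ, ℝ) i) ∧
              Summable (fun i => (x : ∀ _ : ℕ, ℝ) i) ∧ (∑' i, (x : ∀ _ : ℕ, ℝ) i) ≤ 1} →
          ¬ (∀ x ∈ K, ∀ (n : ℕ) (l : Fin n → ℝ) (xs : Fin n → lp (fun _ : ℕ => ℝ) p),
              (∀ i, 0 ≤ l i) → (∑ i, l i) = 1 →
              (∀ i, xs i ∈ {x : lp (fun _ : ℕ => ℝ) p | (∀ j, 0 ≤ (x : ∀ _ : ℕ, ℝ) j) ∧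
                  Summable (fun j => (x : ∀ _ : ℕ, ℝ) j) ∧ (∑' j, (x : ∀ _ : ℕ, ℝ) j) ≤ 1}) →
              (∑ i, l i • xs i) = x →
              (∑ i ∈ Finset.univ.filter (fun i => xs i ∉ Kε), l i) < ε) := by
  set q := p.toReal with hqdef
  have hq1 : 1 < q := by
    rw [hqdef, ← ENNReal.toReal_one]
    exact (ENNReal.toReal_lt_toReal (by simp) hp').mpr hp
  have hq0 : (0:ℝ) < q := lt_trans one_pos hq1
  set e : ℕ → lp (fun _ : ℕ => ℝ) p := fun i => lp.single p i (1 : ℝ) with he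
  set xseq : ℕ → lp (fun _ : ℕ => ℝ) p :=
    fun n => ∑ i ∈ Finset.range n, lp.single p i ((n : ℝ)⁻¹) with hxs
  have hcoord : ∀ n j, (xseq n : ∀ _ : ℕ, ℝ) j = if j < n then (n:ℝ)⁻¹ else 0 := by
    intro n j
    simp only [hxs]
    rw [lp.coeFn_sum, Finset.sum_apply]
    simp [lp.single_apply, Pi.single_apply]
  -- membership of xseq n in the simplex
  have hmem : ∀ n, (∀ i, 0 ≤ (xseq n : ∀ _ : ℕ, ℝ) i) ∧
      Summable (fun i => (xseq n : ∀ _ : ℕ, ℝ) i) ∧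
      (∑' i, (xseq n : ∀ _ : ℕ, ℝ) i) ≤ 1 := by
    intro n
    have hs : ∀ i ∉ Finset.range n, (xseq n : ∀ _ : ℕ, ℝ) i = 0 := by
      intro i hi
      rw [hcoord, if_neg]
      simpa using hi
    refine ⟨?_, summable_of_ne_finset_zero hs, ?_⟩
    · intro i; rw [hcoord]; split <;> positivity
    · rw [tsum_eq_sum hs]
      have hcc : ∀ i ∈ Finset.range n, (xseq n : ∀ _ : ℕ, ℝ) i = (n:ℝ)⁻¹ := by
        intro i hi
        rw [hcoord, if_pos (Finset.mem_range.mp hi)]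
      rw [Finset.sum_congr rfl hcc, Finset.sum_const, Finset.card_range, nsmul_eq_mul]
      rcases Nat.eq_zero_or_pos n with h | h
      · simp [h]
      · rw [mul_inv_cancel₀ (by exact_mod_cast h.ne')]
  -- the norm of xseq n
  have hnorm : ∀ n : ℕ, 1 ≤ n → ‖xseq n‖ = (n:ℝ) ^ ((1 - q) / q) := by
    intro n hn
    have hn0 : (0:ℝ) < n := by exact_mod_cast hn
    have h1 : ‖xseq n‖ ^ q = (n:ℝ) ^ (1 - q) := by
      rw [hxs]
      rw [lp.norm_sum_single hq0 (fun _ : ℕ => ((n : ℝ)⁻¹)) (Finset.range n)]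
      simp only [Real.norm_eq_abs, abs_inv, Nat.abs_cast]
      rw [Finset.sum_const, Finset.card_range, nsmul_eq_mul,
        Real.inv_rpow hn0.le, ← Real.rpow_neg hn0.le]
      nth_rewrite 1 [← Real.rpow_one (n:ℝ)]
      rw [← Real.rpow_add hn0]
      ring_nf
      rfl
    calc ‖xseq n‖ = (‖xseq n‖ ^ q) ^ q⁻¹ :=
          (Real.rpow_rpow_inv (norm_nonneg _) hq0.ne').symm
      _ = ((n:ℝ) ^ (1 - q)) ^ q⁻¹ := by rw [h1]
      _ = (n:ℝ) ^ ((1 - q) / q) := by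
          rw [← Real.rpow_mul hn0.le, div_eq_mul_inv]
  have hx0 : Tendsto xseq atTop (𝓝 0) := by
    rw [tendsto_zero_iff_norm_tendsto_zero]
    have h2 : Tendsto (fun x : ℝ => x ^ (-((q - 1) / q))) atTop (𝓝 (0:ℝ)) :=
      tendsto_rpow_neg_atTop (div_pos (by linarith) hq0)
    have h3 : Tendsto (fun n : ℕ => ((n:ℝ)) ^ (-((q - 1) / q))) atTop (𝓝 (0:ℝ)) :=
      h2.comp tendsto_natCast_atTop_atTop
    refine h3.congr' ?_
    filter_upwards [eventually_ge_atTop 1] with n hn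
    rw [hnorm n hn]
    congr 1
    ring
  refine ⟨insert 0 (Set.range xseq), hx0.isCompact_insert_range, ?_, 1/2, by norm_num, ?_⟩
  · rintro x (rfl | ⟨n, rfl⟩)
    · refine ⟨fun i => le_of_eq ?_, ?_, ?_⟩
      · simp [lp.coeFn_zero]
      · simpa [lp.coeFn_zero] using summable_zero
      · simp [lp.coeFn_zero]
    · exact hmem n
  intro Kε hKε hKεsub H
  -- unit vectors are 1-separated
  have hsep : ∀ a b : ℕ, a ≠ b → (1:ℝ) ≤ dist (e a) (e b) := by
    intro a b hab
    rw [dist_eq_norm]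
    have h := lp.norm_apply_le_norm ((one_pos.trans hp).ne' : p ≠ 0) (e a - e b) a
    have hc : ((e a - e b : lp (fun _ : ℕ => ℝ) p) : ∀ _ : ℕ, ℝ) a = 1 := by
      simp only [he, lp.coeFn_sub, Pi.sub_apply]
      rw [lp.single_apply_self, lp.single_apply_ne p b _ hab]
      norm_num
    rw [hc] at h
    simpa using h
  -- only finitely many unit vectors lie in Kε
  have hfin : {i : ℕ | e i ∈ Kε}.Finite := by
    by_contra hinf
    have hinf' : {i : ℕ | e i ∈ Kε}.Infinite := hinf
    set f := hinf'.natEmbedding with hf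
    obtain ⟨a, -, φ, hφ, hconv⟩ := hKε.tendsto_subseq (x := fun j => e ((f j : ℕ)))
      (fun j => (f j).2)
    obtain ⟨N, hN⟩ := Metric.tendsto_atTop.mp hconv (1/2) (by norm_num)
    have h1 := hN N le_rfl
    have h2 := hN (N+1) (by omega)
    have hne : ((f (φ N) : ℕ)) ≠ ((f (φ (N+1)) : ℕ)) := by
      intro hEq
      have h3 : φ N = φ (N + 1) := f.injective (Subtype.ext hEq)
      have h4 := hφ (lt_add_one N)
      omega
    have h5 := hsep _ _ hne
    have hd : dist (e ((f (φ N) : ℕ))) (e ((f (φ (N+1)) : ℕ))) < 1 := by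
      calc dist (e ((f (φ N) : ℕ))) (e ((f (φ (N+1)) : ℕ)))
          ≤ dist (e ((f (φ N) : ℕ))) a + dist (e ((f (φ (N+1)) : ℕ))) a :=
            dist_triangle_right _ _ _
        _ < 1/2 + 1/2 := add_lt_add h1 h2
        _ = 1 := by norm_num
    linarith
  obtain ⟨N, hNb⟩ := hfin.bddAbove
  -- apply the hypothesis with n = 2*N+2
  set n : ℕ := 2 * N + 2 with hn
  have hn0 : (0:ℝ) < (n:ℝ) := by positivity
  have hxK : xseq n ∈ insert 0 (Set.range xseq) := Set.mem_insert_iff.mpr (Or.inr ⟨n, rfl⟩)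
  have hemem : ∀ i : ℕ, (∀ j, 0 ≤ ((e i : lp (fun _ : ℕ => ℝ) p) : ∀ _ : ℕ, ℝ) j) ∧
      Summable (fun j => ((e i : lp (fun _ : ℕ => ℝ) p) : ∀ _ : ℕ, ℝ) j) ∧
      (∑' j, ((e i : lp (fun _ : ℕ => ℝ) p) : ∀ _ : ℕ, ℝ) j) ≤ 1 := by
    intro i
    have hs : ∀ j ∉ ({i} : Finset ℕ), ((e i : lp (fun _ : ℕ => ℝ) p) : ∀ _ : ℕ, ℝ) j = 0 := by
      intro j hj
      exact lp.single_apply_ne p i _ (by simpa using hj)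
    refine ⟨?_, summable_of_ne_finset_zero hs, ?_⟩
    · intro j
      rcases eq_or_ne j i with rfl | hji
      · rw [he]; simp only; rw [lp.single_apply_self]; norm_num
      · rw [he]; simp only; rw [lp.single_apply_ne p i _ hji]
    · rw [tsum_eq_sum hs, Finset.sum_singleton, he]
      simp only
      rw [lp.single_apply_self]
  have hdecomp : (∑ i : Fin n, ((n:ℝ)⁻¹) • e (i : ℕ)) = xseq n := by
    rw [hxs]
    simp only
    rw [← Fin.sum_univ_eq_sum_range (fun i => lp.single p i ((n : ℝ)⁻¹)) n]
    refine Finset.sum_congr rfl fun i _ => ?_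
    rw [he]
    simp only
    rw [← lp.single_smul, smul_eq_mul, mul_one]
  have key := H (xseq n) hxK n (fun _ => (n:ℝ)⁻¹) (fun i => e (i : ℕ))
    (fun _ => by positivity)
    (by rw [Finset.sum_const, Finset.card_univ, Fintype.card_fin, nsmul_eq_mul,
          mul_inv_cancel₀ hn0.ne'])
    (fun i => hemem (i : ℕ)) hdecomp
  -- count: at most N+1 of the e i's (i < n) lie in Kε
  have hcard_in : (Finset.univ.filter (fun i : Fin n => e (i : ℕ) ∈ Kε)).card ≤ N + 1 := by
    have hsub : ∀ i ∈ Finset.univ.filter (fun i : Fin n => e (i : ℕ) ∈ Kε),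
        (i : ℕ) ∈ Finset.range (N + 1) := by
      intro i hi
      rw [Finset.mem_filter] at hi
      have : (i : ℕ) ∈ {j : ℕ | e j ∈ Kε} := hi.2
      have := hNb this
      simp only [Finset.mem_range]
      omega
    calc (Finset.univ.filter (fun i : Fin n => e (i : ℕ) ∈ Kε)).card
        ≤ (Finset.range (N + 1)).card :=
          Finset.card_le_card_of_injOn (fun i => (i : ℕ)) hsub
            (Fin.val_injective.injOn)
      _ = N + 1 := Finset.card_range _
  have hcard_out : N + 1 ≤ (Finset.univ.filter (fun i : Fin n => e (i : ℕ) ∉ Kε)).card := by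
    have htot := Finset.card_filter_add_card_filter_not
      (s := (Finset.univ : Finset (Fin n))) (p := fun i : Fin n => e (i : ℕ) ∈ Kε)
    rw [Finset.card_univ, Fintype.card_fin] at htot
    omega
  rw [Finset.sum_const, nsmul_eq_mul] at key
  have hge : ((N:ℝ) + 1) * (n:ℝ)⁻¹ ≤
      ((Finset.univ.filter (fun i : Fin n => e (i : ℕ) ∉ Kε)).card : ℝ) * (n:ℝ)⁻¹ := by
    have : ((N:ℝ) + 1) ≤ ((Finset.univ.filter (fun i : Fin n => e (i : ℕ) ∉ Kε)).card : ℝ) := by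
      exact_mod_cast hcard_out
    exact mul_le_mul_of_nonneg_right this (by positivity)
  have heq : ((N:ℝ) + 1) * (n:ℝ)⁻¹ = 1/2 := by
    rw [hn]
    push_cast
    field_simp
  linarith
end

section
/- For every p > 1, the set A_p = { x ∈ l^p : x ≥ 0 coordinatewise, ‖x‖_p ≤ 1 } fails the finite-decomposition compactness criterion: there exists a point x ∈ A_p with ‖x‖_p < 1/3 and Σᵢ xᵢ = +∞, and for such x, taking ε = 1/3, no compact set K_ε ⊆ A_p has the property that every finite convex decomposition of x into points of A_p carries total weight less than ε outside K_ε. -/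
open scoped Classical ENNReal

set_option maxHeartbeats 1000000

/-- For `p > 1`, the bounded part of the positive cone of `l^p` fails the
finite-decomposition (`μ`-compactness) criterion at a suitable point, with `ε = 1/3`. -/
theorem stmt_7 (p : ℝ≥0∞) [Fact (1 ≤ p)] (hp : 1 < p) (hp' : p ≠ ⊤) :
    (∃ x : lp (fun _ : ℕ => ℝ) p, (∀ i, 0 ≤ (x : ∀ _ : ℕ, ℝ) i) ∧ ‖x‖ ≤ 1 ∧
      ‖x‖ < 1 / 3 ∧ ¬ Summable (fun i => (x : ∀ _ : ℕ, ℝ) i)) ∧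
    ∀ x : lp (fun _ : ℕ => ℝ) p, (∀ i, 0 ≤ (x : ∀ _ : ℕ, ℝ) i) → ‖x‖ ≤ 1 →
      ‖x‖ < 1 / 3 → ¬ Summable (fun i => (x : ∀ _ : ℕ, ℝ) i) →
      ∀ Kε : Set (lp (fun _ : ℕ => ℝ) p), IsCompact Kε →
        Kε ⊆ {y : lp (fun _ : ℕ => ℝ) p | (∀ i, 0 ≤ (y : ∀ _ : ℕ, ℝ) i) ∧ ‖y‖ ≤ 1} →
        ∃ (n : ℕ) (l : Fin n → ℝ) (xs : Fin n → lp (fun _ : ℕ => ℝ) p),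
          (∀ i, 0 ≤ l i) ∧ (∑ i, l i) = 1 ∧
          (∀ i, (∀ j, 0 ≤ (xs i : ∀ _ : ℕ, ℝ) j) ∧ ‖xs i‖ ≤ 1) ∧
          (∑ i, l i • xs i) = x ∧
          ¬ ((∑ i ∈ Finset.univ.filter (fun i => xs i ∉ Kε), l i) < 1 / 3) := by
  have hr : 1 < p.toReal := by
    rw [← ENNReal.toReal_one]
    exact (ENNReal.toReal_lt_toReal (by simp) hp').mpr hp
  have hr0 : 0 < p.toReal := by linarith
  constructor
  · -- existence part
    have hsum : Summable fun n : ℕ => ‖((n : ℝ) + 1)⁻¹‖ ^ p.toReal := by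
      have h1 : Summable fun n : ℕ => 1 / (n : ℝ) ^ p.toReal :=
        Real.summable_one_div_nat_rpow.mpr hr
      have h2 := (summable_nat_add_iff 1).mpr h1
      refine h2.congr fun n => ?_
      rw [Real.norm_of_nonneg (by positivity)]
      push_cast
      rw [one_div, ← Real.inv_rpow (by positivity)]
    have hy : Memℓp (fun n : ℕ => ((n : ℝ) + 1)⁻¹) p := memℓp_gen hsum
    set Y : lp (fun _ : ℕ => ℝ) p := ⟨_, hy⟩ with hY
    have hYnn : 0 ≤ ‖Y‖ := norm_nonneg _
    set c : ℝ := (3 * (‖Y‖ + 1))⁻¹ with hc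
    have hc0 : 0 < c := by positivity
    refine ⟨c • Y, ?_, ?_, ?_, ?_⟩
    · intro i
      rw [lp.coeFn_smul]
      have : (Y : ∀ _ : ℕ, ℝ) i = ((i : ℝ) + 1)⁻¹ := rfl
      simp only [Pi.smul_apply, smul_eq_mul, this]
      positivity
    · have : ‖c • Y‖ = c * ‖Y‖ := by
        rw [norm_smul, Real.norm_of_nonneg hc0.le]
      rw [this, hc]
      rw [inv_mul_le_iff₀ (by positivity)]
      nlinarith
    · have : ‖c • Y‖ = c * ‖Y‖ := by
        rw [norm_smul, Real.norm_of_nonneg hc0.le]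
      rw [this, hc]
      rw [inv_mul_lt_iff₀ (by positivity)]
      nlinarith
    · intro hS
      have hS' : Summable fun i : ℕ => c * ((i : ℝ) + 1)⁻¹ := by
        refine hS.congr fun i => ?_
        rw [lp.coeFn_smul]
        rfl
      have h3 : Summable fun n : ℕ => ((n : ℝ) + 1)⁻¹ := by
        refine (hS'.mul_left c⁻¹).congr fun n => ?_
        field_simp
      have h4 : Summable fun n : ℕ => (((n + 1 : ℕ) : ℝ))⁻¹ := by
        refine h3.congr fun n => ?_
        push_cast; ring_nf
      have := (summable_nat_add_iff (f := fun n : ℕ => ((n : ℝ))⁻¹) 1).mp h4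
      exact Real.not_summable_natCast_inv this
  · -- main part
    intro x hx0 hx1 hx13 hxns Kε hKc hKsub
    -- Step 1: the set of i with (2/3)·eᵢ ∈ Kε is finite
    have hsep : ∀ i j : ℕ, i ≠ j →
        (2/3 : ℝ) ≤ dist (lp.single (E := fun _ : ℕ => ℝ) p i (2/3 : ℝ)) (lp.single (E := fun _ : ℕ => ℝ) p j (2/3 : ℝ)) := by
      intro i j hij
      have h := lp.norm_apply_le_norm (by positivity : p ≠ 0)
        (lp.single (E := fun _ : ℕ => ℝ) p i (2/3 : ℝ) - lp.single (E := fun _ : ℕ => ℝ) p j (2/3 : ℝ)) i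
      rw [lp.coeFn_sub, Pi.sub_apply, lp.single_apply_self,
        lp.single_apply_ne (E := fun _ : ℕ => ℝ) p j (2/3 : ℝ) hij, sub_zero,
        Real.norm_of_nonneg (by norm_num)] at h
      rw [dist_eq_norm]
      exact h
    have hIfin : {i : ℕ | lp.single (E := fun _ : ℕ => ℝ) p i (2/3 : ℝ) ∈ Kε}.Finite := by
      obtain ⟨t, htf, hts⟩ := (Metric.totallyBounded_iff.mp hKc.totallyBounded)
        (1/4) (by norm_num)
      have hsub : {i : ℕ | lp.single (E := fun _ : ℕ => ℝ) p i (2/3 : ℝ) ∈ Kε} ⊆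
          ⋃ c ∈ t, {i : ℕ | lp.single (E := fun _ : ℕ => ℝ) p i (2/3 : ℝ) ∈ Metric.ball c (1/4)} := by
        intro i hi
        have := hts hi
        simpa using this
      refine Set.Finite.subset (Set.Finite.biUnion htf fun c _ => ?_) hsub
      refine Set.Subsingleton.finite ?_
      intro i hi j hj
      by_contra hij
      have h1 : dist (lp.single (E := fun _ : ℕ => ℝ) p i (2/3 : ℝ)) (lp.single (E := fun _ : ℕ => ℝ) p j (2/3 : ℝ)) < 1/2 := by
        calc dist (lp.single (E := fun _ : ℕ => ℝ) p i (2/3 : ℝ)) (lp.single (E := fun _ : ℕ => ℝ) p j (2/3 : ℝ))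
            ≤ dist (lp.single (E := fun _ : ℕ => ℝ) p i (2/3 : ℝ)) c + dist c (lp.single (E := fun _ : ℕ => ℝ) p j (2/3 : ℝ)) :=
              dist_triangle _ _ _
          _ < 1/4 + 1/4 := by
              rw [dist_comm c]
              exact add_lt_add hi hj
          _ = 1/2 := by norm_num
      have := hsep i j hij
      linarith
    -- Step 2: coordinates tend to zero
    have hxsum : Summable fun i => ‖(x : ∀ _ : ℕ, ℝ) i‖ ^ p.toReal :=
      (lp.memℓp x).summable hr0
    have hsmall : ∀ᶠ i in Filter.atTop, (x : ∀ _ : ℕ, ℝ) i < 2/9 := by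
      have h29 : (0:ℝ) < (2/9 : ℝ) ^ p.toReal := Real.rpow_pos_of_pos (by norm_num) _
      filter_upwards [hxsum.tendsto_atTop_zero.eventually (gt_mem_nhds h29)] with i hi
      by_contra hcon
      push_neg at hcon
      have : (2/9 : ℝ) ^ p.toReal ≤ ‖(x : ∀ _ : ℕ, ℝ) i‖ ^ p.toReal :=
        Real.rpow_le_rpow (by norm_num)
          (by rw [Real.norm_of_nonneg (hx0 i)]; exact hcon) hr0.le
      linarith
    obtain ⟨N₀, hN₀⟩ := Filter.eventually_atTop.mp hsmall
    obtain ⟨N₁, hN₁⟩ := hIfin.bddAbove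
    set N : ℕ := max N₀ (N₁ + 1) with hN
    have hNI : ∀ i, N ≤ i → lp.single (E := fun _ : ℕ => ℝ) p i (2/3 : ℝ) ∉ Kε := by
      intro i hi hmem
      have h1 := hN₁ hmem
      have h2 : N₁ + 1 ≤ i := le_trans (le_max_right _ _) hi
      omega
    have hNx : ∀ i, N ≤ i → (x : ∀ _ : ℕ, ℝ) i < 2/9 :=
      fun i hi => hN₀ i (le_trans (le_max_left _ _) hi)
    -- Step 3: partial sums of the tail
    have hdiv := (not_summable_iff_tendsto_nat_atTop_of_nonneg hx0).mp hxns
    set g : ℕ → ℝ := fun m => ∑ i ∈ Finset.Ico N m, (x : ∀ _ : ℕ, ℝ) i with hg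
    have hgex : ∃ m, 2/9 ≤ g m := by
      have hev := hdiv.eventually_ge_atTop
        (2/9 + ∑ i ∈ Finset.range N, (x : ∀ _ : ℕ, ℝ) i)
      obtain ⟨m, hm1, hm2⟩ := (hev.and (Filter.eventually_ge_atTop N)).exists
      refine ⟨m, ?_⟩
      have hgm : g m = ∑ i ∈ Finset.range m, (x : ∀ _ : ℕ, ℝ) i
          - ∑ i ∈ Finset.range N, (x : ∀ _ : ℕ, ℝ) i :=
        Finset.sum_Ico_eq_sub _ hm2
      linarith
    set M : ℕ := Nat.find hgex with hMdef
    have hgM : 2/9 ≤ g M := Nat.find_spec hgex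
    have hglt : ∀ m, m < M → g m < 2/9 := fun m hm =>
      lt_of_not_ge (Nat.find_min hgex hm)
    have hNM : N < M := by
      by_contra hcon
      push_neg at hcon
      have : g M = 0 := by
        rw [hg]
        simp [Finset.Ico_eq_empty (by omega : ¬ N < M)]
      linarith
    have hgM2 : g M < 4/9 := by
      have hMM : M - 1 + 1 = M := by omega
      have htop : g M = g (M - 1) + (x : ∀ _ : ℕ, ℝ) (M - 1) := by
        conv_lhs => rw [← hMM]
        exact Finset.sum_Ico_succ_top (by omega) _
      have h1 := hglt (M - 1) (by omega)
      have h2 := hNx (M - 1) (by omega)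
      linarith
    -- Step 4: the decomposition
    set S : Finset ℕ := Finset.Ico N M with hS
    have hgMS : g M = ∑ i ∈ S, (x : ∀ _ : ℕ, ℝ) i := rfl
    set σ : ℝ := (3/2) * g M with hσ
    have hσ1 : 1/3 ≤ σ := by rw [hσ]; linarith
    have hσ2 : σ < 2/3 := by rw [hσ]; linarith
    have hl0pos : (1/3 : ℝ) < 1 - σ := by linarith
    have hl0ne : (1 - σ) ≠ 0 := by linarith
    set ι : Fin S.card → ℕ := fun k => ((S.equivFin.symm k : S) : ℕ) with hι
    have hιS : ∀ k, ι k ∈ S := fun k => (S.equivFin.symm k).2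
    have hιsumR : ∀ f : ℕ → ℝ, ∑ k : Fin S.card, f (ι k) = ∑ i ∈ S, f i := by
      intro f
      rw [← Finset.sum_coe_sort S f]
      exact Fintype.sum_equiv S.equivFin.symm _ _ (fun k => rfl)
    have hιsumL : ∀ f : ℕ → lp (fun _ : ℕ => ℝ) p,
        ∑ k : Fin S.card, f (ι k) = ∑ i ∈ S, f i := by
      intro f
      rw [← Finset.sum_coe_sort S f]
      exact Fintype.sum_equiv S.equivFin.symm _ _ (fun k => rfl)
    set D : lp (fun _ : ℕ => ℝ) p :=
      x - ∑ i ∈ S, lp.single (E := fun _ : ℕ => ℝ) p i ((x : ∀ _ : ℕ, ℝ) i) with hD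
    have hDco : ∀ j, (D : ∀ _ : ℕ, ℝ) j =
        if j ∈ S then 0 else (x : ∀ _ : ℕ, ℝ) j := by
      intro j
      rw [hD, lp.coeFn_sub, Pi.sub_apply, lp.coeFn_sum, Finset.sum_apply]
      by_cases hj : j ∈ S
      · rw [if_pos hj, Finset.sum_eq_single_of_mem j hj
          (fun i _ hij => lp.single_apply_ne (E := fun _ : ℕ => ℝ) p i _ (Ne.symm hij)),
          lp.single_apply_self]
        ring
      · rw [if_neg hj, Finset.sum_eq_zero
          (fun i hi => lp.single_apply_ne (E := fun _ : ℕ => ℝ) p i _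
            (fun h => hj (by rw [h]; exact hi))), sub_zero]
    have hDnorm : ‖D‖ ≤ ‖x‖ := by
      have h := lp.norm_compl_sum_single hr0 x S
      rw [← hD] at h
      have hnn : 0 ≤ ∑ i ∈ S, ‖(x : ∀ _ : ℕ, ℝ) i‖ ^ p.toReal := by positivity
      by_contra hcon
      push_neg at hcon
      have h2 := Real.rpow_lt_rpow (norm_nonneg x) hcon hr0
      linarith
    set u₀ : lp (fun _ : ℕ => ℝ) p := (1 - σ)⁻¹ • D with hu₀
    refine ⟨S.card + 1, Fin.cons (1 - σ) (fun k => (3/2) * (x : ∀ _ : ℕ, ℝ) (ι k)),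
      Fin.cons u₀ (fun k => lp.single (E := fun _ : ℕ => ℝ) p (ι k) (2/3 : ℝ)),
      ?_, ?_, ?_, ?_, ?_⟩
    · intro i
      refine Fin.cases ?_ (fun k => ?_) i
      · rw [Fin.cons_zero]; linarith
      · rw [Fin.cons_succ]
        have := hx0 (ι k)
        linarith
    · rw [Fin.sum_cons]
      have h1 : ∑ k : Fin S.card, (3/2) * (x : ∀ _ : ℕ, ℝ) (ι k) = σ := by
        rw [hιsumR (fun i => (3/2) * (x : ∀ _ : ℕ, ℝ) i), ← Finset.mul_sum, ← hgMS, hσ]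
      rw [h1]
      ring
    · intro i
      refine Fin.cases ?_ (fun k => ?_) i
      · rw [Fin.cons_zero]
        constructor
        · intro j
          rw [hu₀, lp.coeFn_smul, Pi.smul_apply, smul_eq_mul, hDco j]
          by_cases hj : j ∈ S
          · rw [if_pos hj]; ring_nf; norm_num
          · rw [if_neg hj]
            have h1 := hx0 j
            have h2 : (0:ℝ) ≤ (1 - σ)⁻¹ := by positivity
            positivity
        · rw [hu₀, norm_smul, Real.norm_of_nonneg (by positivity : (0:ℝ) ≤ (1 - σ)⁻¹)]
          have h2 : (1 - σ)⁻¹ ≤ 3 := by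
            rw [inv_le_comm₀ (by linarith) (by norm_num)]
            linarith
          have h3 : ‖D‖ ≤ 1/3 := le_trans hDnorm hx13.le
          have h4 : (0:ℝ) ≤ (1 - σ)⁻¹ := by positivity
          nlinarith [norm_nonneg D]
      · rw [Fin.cons_succ]
        constructor
        · intro j
          by_cases hj : j = ι k
          · subst hj
            rw [lp.single_apply_self]
            norm_num
          · rw [lp.single_apply_ne (E := fun _ : ℕ => ℝ) p (ι k) _ hj]
        · rw [lp.norm_single (E := fun _ : ℕ => ℝ) (zero_lt_one.trans hp) (ι k) (2/3 : ℝ),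
            Real.norm_of_nonneg (by norm_num)]
          norm_num
    · rw [Fin.sum_univ_succ]
      simp only [Fin.cons_zero, Fin.cons_succ]
      have h1 : ∀ k : Fin S.card,
          ((3/2) * (x : ∀ _ : ℕ, ℝ) (ι k)) • lp.single (E := fun _ : ℕ => ℝ) p (ι k) (2/3 : ℝ)
          = lp.single (E := fun _ : ℕ => ℝ) p (ι k) ((x : ∀ _ : ℕ, ℝ) (ι k)) := by
        intro k
        rw [← lp.single_smul]
        congr 1
        rw [smul_eq_mul]
        ring
      rw [Finset.sum_congr rfl (fun k _ => h1 k)]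
      rw [hιsumL (fun i => lp.single (E := fun _ : ℕ => ℝ) p i ((x : ∀ _ : ℕ, ℝ) i))]
      rw [hu₀, smul_inv_smul₀ hl0ne, hD]
      abel
    · intro hlt
      have hsub : Finset.univ.image (Fin.succ : Fin S.card → Fin (S.card + 1)) ⊆
          Finset.univ.filter (fun i =>
            Fin.cons (α := fun _ : Fin (S.card + 1) => lp (fun _ : ℕ => ℝ) p) u₀
              (fun k => lp.single (E := fun _ : ℕ => ℝ) p (ι k) (2/3 : ℝ)) i ∉ Kε) := by
        intro i hi
        obtain ⟨k, _, rfl⟩ := Finset.mem_image.mp hi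
        rw [Finset.mem_filter]
        refine ⟨Finset.mem_univ _, ?_⟩
        rw [Fin.cons_succ]
        have hk := hιS k
        rw [hS, Finset.mem_Ico] at hk
        exact hNI (ι k) hk.1
      have hinj : ∑ i ∈ Finset.univ.image (Fin.succ : Fin S.card → Fin (S.card + 1)),
          Fin.cons (α := fun _ : Fin (S.card + 1) => ℝ) (1 - σ)
            (fun k => (3/2) * (x : ∀ _ : ℕ, ℝ) (ι k)) i
          = ∑ k : Fin S.card, (3/2) * (x : ∀ _ : ℕ, ℝ) (ι k) := by
        rw [Finset.sum_image (fun a _ b _ h => Fin.succ_injective _ h)]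
        exact Finset.sum_congr rfl (fun k _ => by rw [Fin.cons_succ])
      have hσval : ∑ k : Fin S.card, (3/2) * (x : ∀ _ : ℕ, ℝ) (ι k) = σ := by
        rw [hιsumR (fun i => (3/2) * (x : ∀ _ : ℕ, ℝ) i), ← Finset.mul_sum, ← hgMS, hσ]
      have hmono := Finset.sum_le_sum_of_subset_of_nonneg
        (f := fun i => Fin.cons (α := fun _ : Fin (S.card + 1) => ℝ) (1 - σ)
          (fun k => (3/2) * (x : ∀ _ : ℕ, ℝ) (ι k)) i) hsub
        (fun i _ _ => by
          refine Fin.cases ?_ (fun k => ?_) i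
          · simp only [Fin.cons_zero]; linarith
          · simp only [Fin.cons_succ]
            have := hx0 (ι k)
            linarith)
      rw [hinj, hσval] at hmono
      linarith
end

section
/- Let {b_k} be a sequence in a Hilbert space with ε ≤ ‖b_k‖ ≤ 1 for all k and |⟨b_i, b_j⟩| ≤ ε² 2^{−i−j} for all i ≠ j, where 0 < ε ≤ 1. Then for every square-summable sequence x = (x^i), one has (ε/2)‖x‖₂ ≤ ‖Σᵢ x^i b_i‖ ≤ 2‖x‖₂; i.e., {b_k} is a Riesz basic sequence. -/
private lemma geo_tail (r : ℝ) (h0 : 0 ≤ r) (h1 : r < 1) (t : Finset ℕ) (h : 0 ∉ t) :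
    ∑ i ∈ t, r ^ i ≤ r / (1 - r) := by
  have hr : 0 < 1 - r := by linarith
  have hsub : t ⊆ (Finset.range (t.sup id + 1)).erase 0 := by
    intro i hi
    refine Finset.mem_erase.2 ⟨?_, Finset.mem_range.2 ?_⟩
    · rintro rfl; exact h hi
    · exact Nat.lt_succ_of_le (Finset.le_sup (f := id) hi)
  set n := t.sup id + 1 with hn
  have hgeom : ∑ i ∈ Finset.range n, r ^ i ≤ 1 / (1 - r) := by
    rw [geom_sum_eq h1.ne]
    have hp : (0:ℝ) ≤ r ^ n := pow_nonneg h0 n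
    have : (r ^ n - 1) / (r - 1) = (1 - r ^ n) / (1 - r) := by
      rw [← neg_div_neg_eq]; ring_nf
    rw [this]
    gcongr
    linarith
  calc ∑ i ∈ t, r ^ i ≤ ∑ i ∈ (Finset.range n).erase 0, r ^ i :=
        Finset.sum_le_sum_of_subset_of_nonneg hsub (fun i _ _ => pow_nonneg h0 i)
    _ = (∑ i ∈ Finset.range n, r ^ i) - 1 := by
        rw [Finset.sum_erase_eq_sub (Finset.mem_range.2 (Nat.succ_pos _))]; norm_num; rfl
    _ ≤ 1/(1-r) - 1 := by linarith
    _ = r/(1-r) := by field_simp; ring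

private lemma offdiag_bound (x : ℕ → ℝ) (t : Finset ℕ) :
    ∑ i ∈ t, ∑ j ∈ t.erase i, (|x i| * (2⁻¹:ℝ)^i) * (|x j| * (2⁻¹:ℝ)^j)
      ≤ 3/4 * ∑ i ∈ t, x i ^ 2 := by
  set a : ℕ → ℝ := fun i => |x i| * (2⁻¹:ℝ)^i with ha
  have ha0 : ∀ i, 0 ≤ a i := fun i => mul_nonneg (abs_nonneg _) (by positivity)
  have key : ∑ i ∈ t, ∑ j ∈ t.erase i, a i * a j
      = (∑ i ∈ t, a i)^2 - ∑ i ∈ t, a i^2 := by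
    rw [sq, Finset.sum_mul_sum]
    rw [← Finset.sum_sub_distrib]
    refine Finset.sum_congr rfl fun i hi => ?_
    rw [Finset.sum_erase_eq_sub hi, ← sq]
  rw [key]
  -- tail quantities
  set t' := t.erase 0 with ht'
  have h0t' : 0 ∉ t' := Finset.notMem_erase _ _
  set B := ∑ i ∈ t', a i with hB
  set Q := ∑ i ∈ t', a i ^ 2 with hQ
  set R := ∑ i ∈ t', x i ^ 2 with hR
  have hR0 : 0 ≤ R := Finset.sum_nonneg fun i _ => sq_nonneg _
  have hB0 : 0 ≤ B := Finset.sum_nonneg fun i _ => ha0 i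
  -- B^2 ≤ R/3
  have hBR : B ^ 2 ≤ R * (1/3) := by
    have hcs := Finset.sum_mul_sq_le_sq_mul_sq t' (fun i => |x i|) (fun i => (2⁻¹:ℝ)^i)
    have hg : ∑ i ∈ t', ((2⁻¹:ℝ)^i)^2 ≤ 1/3 := by
      have : ∀ i : ℕ, (((2:ℝ)⁻¹)^i)^2 = ((4:ℝ)⁻¹)^i := by
        intro i; rw [← pow_mul, pow_mul']; norm_num
      rw [Finset.sum_congr rfl fun i _ => this i]
      refine le_trans (geo_tail (4⁻¹:ℝ) (by norm_num) (by norm_num) t' h0t') (by norm_num)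
    calc B^2 ≤ (∑ i ∈ t', |x i|^2) * ∑ i ∈ t', ((2⁻¹:ℝ)^i)^2 := hcs
      _ ≤ R * (1/3) := by
          rw [show ∑ i ∈ t', |x i|^2 = R by rw [hR]; exact Finset.sum_congr rfl fun i _ => sq_abs _]
          exact mul_le_mul_of_nonneg_left hg hR0
  -- B^2 - Q ≤ R/4
  have hBQ : B ^ 2 - Q ≤ R / 4 := by
    have hcs := Finset.sum_mul_sq_le_sq_mul_sq t'
      (fun i => |x i| * (Real.sqrt 2⁻¹)^i) (fun i => (Real.sqrt 2⁻¹)^i)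
    have hsq : ((Real.sqrt 2⁻¹) : ℝ)^2 = 2⁻¹ := Real.sq_sqrt (by norm_num)
    have hfg : ∀ i : ℕ, (|x i| * (Real.sqrt 2⁻¹)^i) * (Real.sqrt 2⁻¹)^i = a i := by
      intro i; rw [mul_assoc, ← pow_add, ← two_mul, pow_mul, hsq]
    have hf2 : ∀ i : ℕ, (|x i| * (Real.sqrt 2⁻¹)^i)^2 = x i ^2 * (2⁻¹:ℝ)^i := by
      intro i; rw [mul_pow, ← pow_mul, mul_comm i 2, pow_mul, hsq, sq_abs]
    have hg2 : ∀ i : ℕ, (((Real.sqrt 2⁻¹):ℝ)^i)^2 = (2⁻¹:ℝ)^i := by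
      intro i; rw [← pow_mul, mul_comm i 2, pow_mul, hsq]
    rw [Finset.sum_congr rfl fun i _ => hfg i, Finset.sum_congr rfl fun i _ => hf2 i,
      Finset.sum_congr rfl fun i _ => hg2 i] at hcs
    have hS' : ∑ i ∈ t', (2⁻¹:ℝ)^i ≤ 1 := by
      have := geo_tail (2⁻¹:ℝ) (by norm_num) (by norm_num) t' h0t'
      norm_num at this; linarith
    have hxc0 : 0 ≤ ∑ i ∈ t', x i ^2 * (2⁻¹:ℝ)^i :=
      Finset.sum_nonneg fun i _ => by positivity
    have hB2 : B^2 ≤ ∑ i ∈ t', x i ^2 * (2⁻¹:ℝ)^i := by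
      calc B^2 ≤ (∑ i ∈ t', x i ^2 * (2⁻¹:ℝ)^i) * ∑ i ∈ t', (2⁻¹:ℝ)^i := hcs
        _ ≤ _ * 1 := mul_le_mul_of_nonneg_left hS' hxc0
        _ = _ := mul_one _
    have hQeq : Q = ∑ i ∈ t', x i ^2 * ((2⁻¹:ℝ)^i)^2 := by
      rw [hQ]; exact Finset.sum_congr rfl fun i _ => by simp [ha, mul_pow, sq_abs]
    have hpt : ∑ i ∈ t', (x i ^2 * (2⁻¹:ℝ)^i - x i ^2 * ((2⁻¹:ℝ)^i)^2) ≤ ∑ i ∈ t', x i ^2 * (1/4) := by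
      refine Finset.sum_le_sum fun i _ => ?_
      have hc0 : (0:ℝ) ≤ (2⁻¹:ℝ)^i := by positivity
      nlinarith [sq_nonneg ((2⁻¹:ℝ)^i - 1/2), sq_nonneg (x i)]
    rw [Finset.sum_sub_distrib] at hpt
    rw [← Finset.sum_mul] at hpt
    rw [hQeq]
    linarith [hB2, hpt]
  by_cases h0 : 0 ∈ t
  · have hsum : ∑ i ∈ t, a i = B + a 0 := by
      rw [hB, ht', Finset.sum_erase_add _ _ h0]
    have hsumsq : ∑ i ∈ t, a i ^2 = Q + a 0 ^2 := by
      rw [hQ, ht', Finset.sum_erase_add _ _ h0]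
    have hsumx : ∑ i ∈ t, x i ^2 = R + x 0 ^2 := by
      rw [hR, ht', Finset.sum_erase_add _ _ h0]
    have ha02 : a 0 ^ 2 = x 0 ^ 2 := by rw [ha]; simp [sq_abs]
    have ha00 : 0 ≤ a 0 := ha0 0
    rw [hsum, hsumsq, hsumx]
    nlinarith [sq_nonneg (3 * a 0 - 4 * B), hBQ, hBR, hR0, hB0, ha00]
  · have : t' = t := Finset.erase_eq_of_notMem h0
    rw [← this]
    linarith [hBQ, hBR, hR0]

private lemma finite_bounds {H : Type*} [NormedAddCommGroup H] [InnerProductSpace ℝ H]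
    (ε : ℝ) (hε : 0 < ε) (hε1 : ε ≤ 1) (b : ℕ → H)
    (hlb : ∀ k, ε ≤ ‖b k‖) (hub : ∀ k, ‖b k‖ ≤ 1)
    (horth : ∀ i j : ℕ, i ≠ j →
      |(inner ℝ (b i) (b j) : ℝ)| ≤ ε ^ 2 * (2 : ℝ) ^ (-(i : ℝ) - (j : ℝ)))
    (x : ℕ → ℝ) (t : Finset ℕ) :
    ε^2/4 * ∑ i ∈ t, x i ^ 2 ≤ ‖∑ i ∈ t, x i • b i‖^2 ∧
      ‖∑ i ∈ t, x i • b i‖^2 ≤ 4 * ∑ i ∈ t, x i ^ 2 := by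
  have hinner : ∀ i j : ℕ, i ≠ j →
      |(inner ℝ (b i) (b j) : ℝ)| ≤ ε^2 * ((2⁻¹:ℝ)^i * (2⁻¹)^j) := by
    intro i j hij
    have h := horth i j hij
    have heq : (2:ℝ) ^ (-(i:ℝ) - (j:ℝ)) = (2⁻¹:ℝ)^i * (2⁻¹)^j := by
      rw [show (-(i:ℝ) - j) = (-(i:ℝ)) + (-(j:ℝ)) by ring,
        Real.rpow_add (by norm_num : (0:ℝ) < 2),
        Real.rpow_neg (by norm_num : (0:ℝ) ≤ 2), Real.rpow_neg (by norm_num : (0:ℝ) ≤ 2),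
        Real.rpow_natCast, Real.rpow_natCast, ← inv_pow, ← inv_pow]
    rwa [heq] at h
  set v := ∑ i ∈ t, x i • b i with hv
  set D := ∑ i ∈ t, ∑ j ∈ t.erase i, x i * x j * (inner ℝ (b i) (b j) : ℝ) with hD
  set P := ∑ i ∈ t, x i ^ 2 with hP
  set dsum := ∑ i ∈ t, x i ^ 2 * ‖b i‖^2 with hdsum
  have hP0 : 0 ≤ P := Finset.sum_nonneg fun i _ => sq_nonneg _
  have expand : ‖v‖^2 = dsum + D := by
    rw [← real_inner_self_eq_norm_sq, hv, sum_inner, hdsum, hD, ← Finset.sum_add_distrib]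
    refine Finset.sum_congr rfl fun i hi => ?_
    rw [real_inner_smul_left, inner_sum]
    have hterm : ∀ j : ℕ, (inner ℝ (b i) (x j • b j) : ℝ) = x j * inner ℝ (b i) (b j) :=
      fun j => real_inner_smul_right _ _ _
    rw [Finset.sum_congr rfl fun j _ => hterm j]
    rw [← Finset.sum_erase_add _ _ hi, mul_add, Finset.mul_sum]
    rw [real_inner_self_eq_norm_sq]
    ring_nf
  have hDabs : |D| ≤ ε^2 * (3/4 * P) := by
    calc |D| ≤ ∑ i ∈ t, |∑ j ∈ t.erase i, x i * x j * (inner ℝ (b i) (b j) : ℝ)| :=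
          Finset.abs_sum_le_sum_abs _ _
      _ ≤ ∑ i ∈ t, ∑ j ∈ t.erase i, |x i * x j * (inner ℝ (b i) (b j) : ℝ)| :=
          Finset.sum_le_sum fun i _ => Finset.abs_sum_le_sum_abs _ _
      _ ≤ ∑ i ∈ t, ∑ j ∈ t.erase i, ε^2 * ((|x i| * (2⁻¹:ℝ)^i) * (|x j| * (2⁻¹:ℝ)^j)) := by
          refine Finset.sum_le_sum fun i _ => Finset.sum_le_sum fun j hj => ?_
          have hij : j ≠ i := Finset.ne_of_mem_erase hj
          rw [abs_mul, abs_mul]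
          calc |x i| * |x j| * |(inner ℝ (b i) (b j) : ℝ)|
              ≤ |x i| * |x j| * (ε^2 * ((2⁻¹:ℝ)^i * (2⁻¹)^j)) := by
                exact mul_le_mul_of_nonneg_left (hinner i j (Ne.symm hij))
                  (mul_nonneg (abs_nonneg _) (abs_nonneg _))
            _ = ε^2 * ((|x i| * (2⁻¹:ℝ)^i) * (|x j| * (2⁻¹:ℝ)^j)) := by ring
      _ = ε^2 * ∑ i ∈ t, ∑ j ∈ t.erase i, (|x i| * (2⁻¹:ℝ)^i) * (|x j| * (2⁻¹:ℝ)^j) := by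
          rw [Finset.mul_sum]
          exact Finset.sum_congr rfl fun i _ => by rw [Finset.mul_sum]
      _ ≤ ε^2 * (3/4 * P) := by
          exact mul_le_mul_of_nonneg_left (offdiag_bound x t) (by positivity)
  have hdiag_lb : ε^2 * P ≤ dsum := by
    rw [hdsum, hP, Finset.mul_sum]
    refine Finset.sum_le_sum fun i _ => ?_
    rw [mul_comm]
    refine mul_le_mul_of_nonneg_left ?_ (sq_nonneg _)
    exact pow_le_pow_left₀ hε.le (hlb i) 2
  have hdiag_ub : dsum ≤ P := by
    rw [hdsum, hP]
    refine Finset.sum_le_sum fun i _ => ?_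
    calc x i ^2 * ‖b i‖^2 ≤ x i ^2 * 1 := by
          refine mul_le_mul_of_nonneg_left ?_ (sq_nonneg _)
          calc ‖b i‖^2 ≤ 1^2 := pow_le_pow_left₀ (norm_nonneg _) (hub i) 2
            _ = 1 := one_pow 2
      _ = x i ^2 := mul_one _
  obtain ⟨hD1, hD2⟩ := abs_le.1 hDabs
  have hε2P : ε^2 * P ≤ 1 * P := by
    refine mul_le_mul_of_nonneg_right ?_ hP0
    calc ε^2 ≤ 1^2 := pow_le_pow_left₀ hε.le hε1 2
      _ = 1 := one_pow 2
  constructor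
  · rw [expand]; nlinarith
  · rw [expand]; nlinarith

private lemma finite_norm_bounds {H : Type*} [NormedAddCommGroup H] [InnerProductSpace ℝ H]
    (ε : ℝ) (hε : 0 < ε) (hε1 : ε ≤ 1) (b : ℕ → H)
    (hlb : ∀ k, ε ≤ ‖b k‖) (hub : ∀ k, ‖b k‖ ≤ 1)
    (horth : ∀ i j : ℕ, i ≠ j →
      |(inner ℝ (b i) (b j) : ℝ)| ≤ ε ^ 2 * (2 : ℝ) ^ (-(i : ℝ) - (j : ℝ)))
    (x : ℕ → ℝ) (t : Finset ℕ) :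
    ε/2 * Real.sqrt (∑ i ∈ t, x i ^ 2) ≤ ‖∑ i ∈ t, x i • b i‖ ∧
      ‖∑ i ∈ t, x i • b i‖ ≤ 2 * Real.sqrt (∑ i ∈ t, x i ^ 2) := by
  obtain ⟨h1, h2⟩ := finite_bounds ε hε hε1 b hlb hub horth x t
  set P := ∑ i ∈ t, x i ^ 2 with hP
  have hP0 : 0 ≤ P := Finset.sum_nonneg fun i _ => sq_nonneg _
  constructor
  · have := Real.sqrt_le_sqrt h1
    rwa [show ε^2/4 * P = (ε/2)^2 * P by ring, Real.sqrt_mul (by positivity) P,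
      Real.sqrt_sq (by positivity), Real.sqrt_sq (norm_nonneg _)] at this
  · have := Real.sqrt_le_sqrt h2
    rwa [show (4:ℝ) * P = 2^2 * P by ring, Real.sqrt_mul (by positivity) P,
      Real.sqrt_sq (norm_nonneg _),
      show Real.sqrt (2^2) = 2 from Real.sqrt_sq (by norm_num)] at this

/-- A sequence with norms in `[ε,1]` and rapidly decaying pairwise inner products
is a Riesz basic sequence. -/
theorem stmt_8 {H : Type*} [NormedAddCommGroup H] [InnerProductSpace ℝ H]
    [CompleteSpace H] (ε : ℝ) (hε : 0 < ε) (hε1 : ε ≤ 1) (b : ℕ → H)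
    (hlb : ∀ k, ε ≤ ‖b k‖) (hub : ∀ k, ‖b k‖ ≤ 1)
    (horth : ∀ i j : ℕ, i ≠ j →
      |(inner ℝ (b i) (b j) : ℝ)| ≤ ε ^ 2 * (2 : ℝ) ^ (-(i : ℝ) - (j : ℝ)))
    (x : ℕ → ℝ) (hx : Summable (fun i => x i ^ 2)) :
    ∃ s : H, HasSum (fun i => x i • b i) s ∧
      ε / 2 * Real.sqrt (∑' i, x i ^ 2) ≤ ‖s‖ ∧
      ‖s‖ ≤ 2 * Real.sqrt (∑' i, x i ^ 2) := by
  have key := finite_norm_bounds ε hε hε1 b hlb hub horth x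
  have hsum : Summable (fun i => x i • b i) := by
    rw [summable_iff_vanishing]
    intro e he
    rcases Metric.mem_nhds_iff.1 he with ⟨δ, hδ, hball⟩
    obtain ⟨s, hs⟩ := summable_iff_vanishing.1 hx (Metric.ball 0 ((δ/2)^2))
      (Metric.ball_mem_nhds 0 (by positivity))
    refine ⟨s, fun u hu => hball ?_⟩
    have h2 := (key u).2
    have hsu := hs u hu
    rw [Metric.mem_ball, Real.dist_eq, sub_zero] at hsu
    have hPu : 0 ≤ ∑ i ∈ u, x i ^ 2 := Finset.sum_nonneg fun i _ => sq_nonneg _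
    rw [abs_of_nonneg hPu] at hsu
    rw [Metric.mem_ball, dist_zero_right]
    calc ‖∑ i ∈ u, x i • b i‖ ≤ 2 * Real.sqrt (∑ i ∈ u, x i ^ 2) := h2
      _ < 2 * Real.sqrt ((δ/2)^2) := by
          have := Real.sqrt_lt_sqrt hPu hsu
          linarith
      _ = δ := by rw [Real.sqrt_sq (by positivity)]; ring
  obtain ⟨S, hS⟩ := hsum
  refine ⟨S, hS, ?_, ?_⟩
  · have hnorm : Filter.Tendsto (fun t : Finset ℕ => ‖∑ i ∈ t, x i • b i‖)
        Filter.atTop (nhds ‖S‖) := hS.norm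
    have hxt : Filter.Tendsto (fun t : Finset ℕ => ε/2 * Real.sqrt (∑ i ∈ t, x i ^ 2))
        Filter.atTop (nhds (ε/2 * Real.sqrt (∑' i, x i ^ 2))) :=
      (Real.continuous_sqrt.continuousAt.tendsto.comp hx.hasSum).const_mul (ε/2)
    exact le_of_tendsto_of_tendsto' hxt hnorm fun t => (key t).1
  · have hnorm : Filter.Tendsto (fun t : Finset ℕ => ‖∑ i ∈ t, x i • b i‖)
        Filter.atTop (nhds ‖S‖) := hS.norm
    have hxt : Filter.Tendsto (fun t : Finset ℕ => 2 * Real.sqrt (∑ i ∈ t, x i ^ 2))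
        Filter.atTop (nhds (2 * Real.sqrt (∑' i, x i ^ 2))) :=
      (Real.continuous_sqrt.continuousAt.tendsto.comp hx.hasSum).const_mul 2
    exact le_of_tendsto_of_tendsto' hnorm hxt fun t => (key t).2
end

section
/- Every convex closed bounded subset of a Hilbert space that is μ-compact is compact. Equivalently: a convex closed bounded noncompact subset of a separable Hilbert space is not μ-compact. -/
open MeasureTheory Filter Topology Finset
open scoped ENNReal NNReal

/-- From a non-totally-bounded set, extract an ε-separated sequence. -/
lemma sep_seq {X : Type*} [MetricSpace X] {s : Set X} (h : ¬ TotallyBounded s) :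
    ∃ ε > (0:ℝ), ∃ x : ℕ → X, (∀ n, x n ∈ s) ∧ ∀ i j, i ≠ j → ε ≤ dist (x i) (x j) := by
  rw [Metric.totallyBounded_iff] at h
  push_neg at h
  obtain ⟨ε, hε, hnet⟩ := h
  classical
  have key : ∀ F : Finset X, ∃ p, p ∈ s ∧ ∀ y ∈ F, ε ≤ dist p y := by
    intro F
    obtain ⟨p, hps, hpn⟩ := Set.not_subset.1 (hnet F F.finite_toSet)
    refine ⟨p, hps, fun y hy => ?_⟩
    by_contra hlt
    exact hpn (Set.mem_biUnion hy (Metric.mem_ball.2 (lt_of_not_ge hlt)))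
  set pick : Finset X → X := fun F => (key F).choose with hpick
  set F : ℕ → Finset X := fun n => Nat.rec ∅ (fun _ Fn => insert (pick Fn) Fn) n with hF
  have hFsucc : ∀ n, F (n + 1) = insert (pick (F n)) (F n) := fun n => rfl
  have hFmono : ∀ {n m}, n ≤ m → F n ⊆ F m := by
    intro n m hnm
    induction hnm with
    | refl => exact Finset.Subset.refl _
    | step h ih => rename_i m' hm'; exact ih.trans (by rw [hFsucc]; exact Finset.subset_insert _ _)
  refine ⟨ε, hε, fun n => pick (F n), fun n => (key (F n)).choose_spec.1, ?_⟩
  have main : ∀ i j, i < j → ε ≤ dist (pick (F j)) (pick (F i)) := by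
    intro i j hij
    have : pick (F i) ∈ F j := hFmono hij (by rw [hFsucc]; exact Finset.mem_insert_self _ _)
    exact (key (F j)).choose_spec.2 _ this
  intro i j hij
  rcases lt_or_gt_of_ne hij with h' | h'
  · rw [dist_comm]; exact main i j h'
  · exact main j i h'

/-- Greedy recursion helper. -/
lemma greedy_seq {C : ℕ → ℕ → ℕ → Prop} (h : ∀ k N, ∃ j, N < j ∧ C k N j) :
    ∃ ψ : ℕ → ℕ, StrictMono ψ ∧ C 0 0 (ψ 0) ∧ ∀ k, C (k+1) (ψ k) (ψ (k+1)) := by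
  set ψ : ℕ → ℕ := fun n => Nat.rec (h 0 0).choose (fun k ihk => (h (k+1) ihk).choose) n with hψ
  have hsucc : ∀ k, ψ (k+1) = (h (k+1) (ψ k)).choose := fun k => rfl
  refine ⟨ψ, strictMono_nat_of_lt_succ fun k => ?_, (h 0 0).choose_spec.2, fun k => ?_⟩
  · rw [hsucc]; exact (h (k+1) (ψ k)).choose_spec.1
  · rw [hsucc]; exact (h (k+1) (ψ k)).choose_spec.2

notation "⟪" x ", " y "⟫" => @inner ℝ _ _ x y

lemma diag_extract' {B : ℝ} {g : ℕ → ℕ → ℝ} (hg : ∀ i j, g i j ∈ Set.Icc (-B) B) :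
    ∃ φ : ℕ → ℕ, StrictMono φ ∧ ∃ L : ℕ → ℝ,
      ∀ i, Tendsto (fun j => g i (φ j)) atTop (𝓝 (L i)) := by
  set P : ℕ → (ℕ → Set.Icc (-B) B) := fun j i => ⟨g i j, hg i j⟩ with hP
  obtain ⟨L, φ, hφ, hL⟩ := SeqCompactSpace.tendsto_subseq P
  refine ⟨φ, hφ, fun i => (L i : ℝ), fun i => ?_⟩
  exact (continuous_subtype_val.tendsto _).comp
    ((continuous_apply i).continuousAt.tendsto.comp hL)

lemma greedy_seq' {C : ℕ → ℕ → ℕ → Prop} (h : ∀ k N, ∃ j, N < j ∧ C k N j) :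
    ∃ ψ : ℕ → ℕ, StrictMono ψ ∧ C 0 0 (ψ 0) ∧ ∀ k, C (k+1) (ψ k) (ψ (k+1)) := by
  set ψ : ℕ → ℕ := fun n => Nat.rec (h 0 0).choose (fun k ihk => (h (k+1) ihk).choose) n with hψ
  have hsucc : ∀ k, ψ (k+1) = (h (k+1) (ψ k)).choose := fun k => rfl
  refine ⟨ψ, strictMono_nat_of_lt_succ fun k => ?_, (h 0 0).choose_spec.2, fun k => ?_⟩
  · rw [hsucc]; exact (h (k+1) (ψ k)).choose_spec.1
  · rw [hsucc]; exact (h (k+1) (ψ k)).choose_spec.2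

/-- Extract a subsequence with almost-constant pairwise inner products. -/
lemma inner_subseq {H : Type*} [NormedAddCommGroup H] [InnerProductSpace ℝ H]
    {x : ℕ → H} {M : ℝ} (hx : ∀ n, ‖x n‖ ≤ M) :
    ∃ (θ : ℕ → ℕ) (c : ℝ), StrictMono θ ∧ |c| ≤ M * M ∧
      ∀ i k, i < k → |⟪x (θ i), x (θ k)⟫ - c| ≤ (2:ℝ)⁻¹ ^ i := by
  set B := M * M with hB
  have hgB : ∀ i j, ⟪x i, x j⟫ ∈ Set.Icc (-B) B := by
    intro i j
    rw [Set.mem_Icc, ← abs_le]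
    exact (abs_real_inner_le_norm _ _).trans
      (mul_le_mul (hx i) (hx j) (norm_nonneg _) ((norm_nonneg _).trans (hx i)))
  obtain ⟨φ₁, hφ₁, L, hL⟩ := diag_extract' hgB
  set y : ℕ → H := x ∘ φ₁ with hy
  set d : ℕ → ℝ := fun i => L (φ₁ i) with hd
  have hyd : ∀ i, Tendsto (fun j => ⟪y i, y j⟫) atTop (𝓝 (d i)) :=
    fun i => hL (φ₁ i)
  have hdIcc : ∀ i, d i ∈ Set.Icc (-B) B := fun i =>
    isClosed_Icc.mem_of_tendsto (hyd i) (Eventually.of_forall fun j => hgB _ _)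
  obtain ⟨c, hcmem, φ₂, hφ₂, hdc⟩ :=
    tendsto_subseq_of_bounded (Metric.isBounded_Icc (-B) B) hdIcc
  have hcB : |c| ≤ B := by
    have : c ∈ Set.Icc (-B) B := by rwa [isClosed_Icc.closure_eq] at hcmem
    rw [abs_le]; exact ⟨this.1, this.2⟩
  set w : ℕ → H := y ∘ φ₂ with hw
  set e : ℕ → ℝ := d ∘ φ₂ with he
  have hwe : ∀ i, Tendsto (fun j => ⟪w i, w j⟫) atTop (𝓝 (e i)) :=
    fun i => (hyd (φ₂ i)).comp hφ₂.tendsto_atTop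
  have hec : Tendsto e atTop (𝓝 c) := hdc
  set C : ℕ → ℕ → ℕ → Prop := fun k N j =>
    |e j - c| ≤ (2:ℝ)⁻¹ ^ k / 2 ∧ ∀ m ≤ N, |⟪w m, w j⟫ - e m| ≤ (2:ℝ)⁻¹ ^ k / 2 with hC
  have hCex : ∀ k N, ∃ j, N < j ∧ C k N j := by
    intro k N
    have hpos : (0:ℝ) < (2:ℝ)⁻¹ ^ k / 2 := by positivity
    have ev1 : ∀ᶠ j in atTop, |e j - c| ≤ (2:ℝ)⁻¹ ^ k / 2 := by
      filter_upwards [hec (Metric.closedBall_mem_nhds c hpos)] with j hj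
      rw [Set.mem_preimage, Metric.mem_closedBall, Real.dist_eq] at hj; exact hj
    have ev2 : ∀ᶠ j in atTop, ∀ m ∈ Finset.range (N+1),
        |⟪w m, w j⟫ - e m| ≤ (2:ℝ)⁻¹ ^ k / 2 := by
      rw [Filter.eventually_all_finset]
      intro m _
      filter_upwards [(hwe m) (Metric.closedBall_mem_nhds (e m) hpos)] with j hj
      rw [Set.mem_preimage, Metric.mem_closedBall, Real.dist_eq] at hj; exact hj
    obtain ⟨j, hj1, ⟨hj2, hj3⟩⟩ := ((eventually_gt_atTop N).and (ev1.and ev2)).exists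
    exact ⟨j, hj1, hj2, fun m hm => hj3 m (Finset.mem_range_succ_iff.2 hm)⟩
  obtain ⟨ψ, hψ, hψ0, hψs⟩ := greedy_seq' hCex
  have hecψ : ∀ i, |e (ψ i) - c| ≤ (2:ℝ)⁻¹ ^ i / 2 := by
    intro i
    cases i with
    | zero => exact hψ0.1
    | succ i' => exact (hψs i').1
  refine ⟨φ₁ ∘ φ₂ ∘ ψ, c, hφ₁.comp (hφ₂.comp hψ), hcB, ?_⟩
  intro i k hik
  have hzw : ∀ m, x ((φ₁ ∘ φ₂ ∘ ψ) m) = w (ψ m) := fun m => rfl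
  rw [hzw, hzw]
  obtain ⟨k', rfl⟩ : ∃ k', k = k' + 1 := ⟨k - 1, by omega⟩
  have h1 : |⟪w (ψ i), w (ψ (k'+1))⟫ - e (ψ i)| ≤ (2:ℝ)⁻¹ ^ (k'+1) / 2 :=
    (hψs k').2 (ψ i) (hψ.monotone (by omega))
  have h2 := hecψ i
  have hpow : ((2:ℝ)⁻¹) ^ (k'+1) ≤ (2:ℝ)⁻¹ ^ i :=
    pow_le_pow_of_le_one (by norm_num) (by norm_num) (by omega)
  calc |⟪w (ψ i), w (ψ (k'+1))⟫ - c|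
      ≤ |⟪w (ψ i), w (ψ (k'+1))⟫ - e (ψ i)| + |e (ψ i) - c| := abs_sub_le _ _ _
    _ ≤ (2:ℝ)⁻¹ ^ (k'+1) / 2 + (2:ℝ)⁻¹ ^ i / 2 := add_le_add h1 h2
    _ ≤ (2:ℝ)⁻¹ ^ i / 2 + (2:ℝ)⁻¹ ^ i / 2 := by linarith
    _ = (2:ℝ)⁻¹ ^ i := by ring


lemma barycenter_cauchy {H : Type*} [NormedAddCommGroup H] [InnerProductSpace ℝ H]
    [CompleteSpace H] {z : ℕ → H} {M c : ℝ} (hz : ∀ n, ‖z n‖ ≤ M) (hc : |c| ≤ M * M)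
    (hzc : ∀ i k, i < k → |⟪z i, z k⟫ - c| ≤ (2:ℝ)⁻¹ ^ i) :
    ∃ a : H, Tendsto (fun n : ℕ => ((n:ℝ)+1)⁻¹ • ∑ k ∈ Finset.range (n+1), z k)
      atTop (𝓝 a) := by
  set K : ℝ := M * M + |c| with hK
  set E : ℝ := K + 4 with hE
  have hK0 : 0 ≤ K := add_nonneg (mul_self_nonneg M) (abs_nonneg c)
  have hE0 : 0 < E := by positivity
  set b : ℕ → H := fun n : ℕ => ((n:ℝ)+1)⁻¹ • ∑ k ∈ Finset.range (n+1), z k with hb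
  have habs : ∀ i j, |⟪z i, z j⟫ - c| ≤
      (if i = j then K else 0) + ((2:ℝ)⁻¹ ^ i + (2:ℝ)⁻¹ ^ j) := by
    intro i j
    rcases lt_trichotomy i j with h | h | h
    · simp only [if_neg h.ne]
      have := hzc i j h
      have h2 : (0:ℝ) ≤ (2:ℝ)⁻¹ ^ j := by positivity
      linarith
    · subst h
      have h4 : (if i = i then K else 0) = K := by simp
      rw [h4]
      have h1 : |⟪z i, z i⟫| ≤ M * M := (abs_real_inner_le_norm _ _).trans
        (mul_le_mul (hz i) (hz i) (norm_nonneg _) ((norm_nonneg _).trans (hz i)))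
      have h2 : (0:ℝ) ≤ (2:ℝ)⁻¹ ^ i := by positivity
      have h3 : |⟪z i, z i⟫ - c| ≤ |⟪z i, z i⟫| + |c| := abs_sub _ _
      rw [hK]; linarith
    · simp only [if_neg h.ne']
      rw [real_inner_comm]
      have := hzc j i h
      have h2 : (0:ℝ) ≤ (2:ℝ)⁻¹ ^ i := by positivity
      linarith
  have hgeom : ∀ N : ℕ, ∑ i ∈ Finset.range N, (2:ℝ)⁻¹ ^ i ≤ 2 := by
    intro N
    have := sum_geometric_two_le N
    simpa [one_div] using this
  have key : ∀ m n : ℕ, m ≤ n → |⟪b n, b m⟫ - c| ≤ E / ((m:ℝ)+1) := by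
    intro m n hmn
    have hm1 : (0:ℝ) < (m:ℝ)+1 := by positivity
    have hn1 : (0:ℝ) < (n:ℝ)+1 := by positivity
    have hmn1 : (m:ℝ)+1 ≤ (n:ℝ)+1 := by
      have : (m:ℝ) ≤ (n:ℝ) := by exact_mod_cast hmn
      linarith
    set S : ℝ := ∑ i ∈ Finset.range (n+1), ∑ j ∈ Finset.range (m+1), (⟪z i, z j⟫ - c) with hS
    have expand : ⟪b n, b m⟫ - c = ((n:ℝ)+1)⁻¹ * (((m:ℝ)+1)⁻¹ * S) := by
      have e0 : ⟪∑ i ∈ Finset.range (n+1), z i, ∑ j ∈ Finset.range (m+1), z j⟫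
          = ∑ i ∈ Finset.range (n+1), ∑ j ∈ Finset.range (m+1), ⟪z i, z j⟫ := by
        rw [sum_inner]
        exact Finset.sum_congr rfl fun i _ => inner_sum _ _ _
      have e1 : ⟪b n, b m⟫ = ((n:ℝ)+1)⁻¹ * (((m:ℝ)+1)⁻¹ *
          ∑ i ∈ Finset.range (n+1), ∑ j ∈ Finset.range (m+1), ⟪z i, z j⟫) := by
        rw [hb, real_inner_smul_left, real_inner_smul_right, e0]
      have e2 : S = (∑ i ∈ Finset.range (n+1), ∑ j ∈ Finset.range (m+1), ⟪z i, z j⟫)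
          - ((n:ℝ)+1) * (((m:ℝ)+1) * c) := by
        rw [hS]
        simp only [Finset.sum_sub_distrib, Finset.sum_const, Finset.card_range,
          nsmul_eq_mul]
        push_cast
        ring
      rw [e1]
      rw [eq_sub_iff_add_eq] at e2
      rw [← e2]
      field_simp
      ring
    have hdiag : (∑ i ∈ Finset.range (n+1), ∑ j ∈ Finset.range (m+1),
        (if i = j then K else 0)) = ((m:ℝ)+1) * K := by
      have h1 : ∀ i, (∑ j ∈ Finset.range (m+1), (if i = j then K else 0))
          = if i ∈ Finset.range (m+1) then K else 0 := fun i => Finset.sum_ite_eq _ i _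
      rw [Finset.sum_congr rfl fun i _ => h1 i, Finset.sum_ite_mem,
        Finset.inter_eq_right.mpr (Finset.range_subset_range.mpr (by omega)),
        Finset.sum_const, Finset.card_range, nsmul_eq_mul]
      push_cast; ring
    have hrow : (∑ i ∈ Finset.range (n+1), ∑ j ∈ Finset.range (m+1), (2:ℝ)⁻¹ ^ i)
        ≤ ((m:ℝ)+1) * 2 := by
      simp only [Finset.sum_const, Finset.card_range, nsmul_eq_mul]
      rw [← Finset.mul_sum]
      push_cast
      exact mul_le_mul_of_nonneg_left (hgeom _) (by positivity)
    have hcol : (∑ i ∈ Finset.range (n+1), ∑ j ∈ Finset.range (m+1), (2:ℝ)⁻¹ ^ j)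
        ≤ ((n:ℝ)+1) * 2 := by
      rw [Finset.sum_const, Finset.card_range, nsmul_eq_mul]
      push_cast
      exact mul_le_mul_of_nonneg_left (hgeom _) (le_of_lt hn1)
    have hSabs : |S| ≤ ((m:ℝ)+1) * (K + 2) + ((n:ℝ)+1) * 2 := by
      have c1 : |S| ≤ ∑ i ∈ Finset.range (n+1),
          ∑ j ∈ Finset.range (m+1), |⟪z i, z j⟫ - c| :=
        (Finset.abs_sum_le_sum_abs _ _).trans
          (Finset.sum_le_sum fun i _ => Finset.abs_sum_le_sum_abs _ _)
      have c2 : ∑ i ∈ Finset.range (n+1), ∑ j ∈ Finset.range (m+1), |⟪z i, z j⟫ - c|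
          ≤ ∑ i ∈ Finset.range (n+1), ∑ j ∈ Finset.range (m+1),
            ((if i = j then K else 0) + ((2:ℝ)⁻¹ ^ i + (2:ℝ)⁻¹ ^ j)) :=
        Finset.sum_le_sum fun i _ => Finset.sum_le_sum fun j _ => habs i j
      have c3 : ∑ i ∈ Finset.range (n+1), ∑ j ∈ Finset.range (m+1),
            ((if i = j then K else 0) + ((2:ℝ)⁻¹ ^ i + (2:ℝ)⁻¹ ^ j))
          = (∑ i ∈ Finset.range (n+1), ∑ j ∈ Finset.range (m+1), (if i = j then K else 0))
          + ((∑ i ∈ Finset.range (n+1), ∑ j ∈ Finset.range (m+1), (2:ℝ)⁻¹ ^ i)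
          + (∑ i ∈ Finset.range (n+1), ∑ j ∈ Finset.range (m+1), (2:ℝ)⁻¹ ^ j)) := by
        simp [Finset.sum_add_distrib]
      have c4 : (∑ i ∈ Finset.range (n+1), ∑ j ∈ Finset.range (m+1), (if i = j then K else 0))
          + ((∑ i ∈ Finset.range (n+1), ∑ j ∈ Finset.range (m+1), (2:ℝ)⁻¹ ^ i)
          + (∑ i ∈ Finset.range (n+1), ∑ j ∈ Finset.range (m+1), (2:ℝ)⁻¹ ^ j))
          ≤ ((m:ℝ)+1) * K + (((m:ℝ)+1) * 2 + ((n:ℝ)+1) * 2) := by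
        rw [hdiag]
        exact add_le_add le_rfl (add_le_add hrow hcol)
      have := ((c1.trans c2).trans_eq c3).trans c4
      linarith
    have hα : ((n:ℝ)+1)⁻¹ * ((n:ℝ)+1) = 1 := inv_mul_cancel₀ hn1.ne'
    have hβ : ((m:ℝ)+1)⁻¹ * ((m:ℝ)+1) = 1 := inv_mul_cancel₀ hm1.ne'
    have hαβ : ((n:ℝ)+1)⁻¹ ≤ ((m:ℝ)+1)⁻¹ := by
      apply inv_anti₀ hm1 hmn1
    have hαpos : (0:ℝ) < ((n:ℝ)+1)⁻¹ := inv_pos.2 hn1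
    have hβpos : (0:ℝ) < ((m:ℝ)+1)⁻¹ := inv_pos.2 hm1
    rw [expand, abs_mul, abs_mul, abs_of_pos hαpos, abs_of_pos hβpos]
    have step1 : ((n:ℝ)+1)⁻¹ * (((m:ℝ)+1)⁻¹ * |S|)
        ≤ ((n:ℝ)+1)⁻¹ * (((m:ℝ)+1)⁻¹ * (((m:ℝ)+1) * (K + 2) + ((n:ℝ)+1) * 2)) := by
      gcongr
    have step2 : ((n:ℝ)+1)⁻¹ * (((m:ℝ)+1)⁻¹ * (((m:ℝ)+1) * (K + 2) + ((n:ℝ)+1) * 2))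
        = ((n:ℝ)+1)⁻¹ * (K + 2) + 2 * ((m:ℝ)+1)⁻¹ := by
      field_simp
    have step3 : ((n:ℝ)+1)⁻¹ * (K + 2) ≤ ((m:ℝ)+1)⁻¹ * (K + 2) :=
      mul_le_mul_of_nonneg_right hαβ (by linarith)
    have step4 : ((m:ℝ)+1)⁻¹ * (K + 2) + 2 * ((m:ℝ)+1)⁻¹ = E / ((m:ℝ)+1) := by
      rw [hE, div_eq_mul_inv]
      ring
    linarith [step1, step2.le, step3]
  -- Cauchy sequence
  have hcauchy : CauchySeq b := by
    rw [Metric.cauchySeq_iff']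
    intro δ hδ
    obtain ⟨N, hN⟩ := exists_nat_gt (4 * E / δ ^ 2)
    refine ⟨N, fun n hn => ?_⟩
    have hN1 : (0:ℝ) < (N:ℝ)+1 := by positivity
    have hn1 : (0:ℝ) < (n:ℝ)+1 := by positivity
    have hbound : 4 * E / ((N:ℝ)+1) < δ ^ 2 := by
      rw [div_lt_iff₀ hN1]
      have h1 : 4 * E / δ ^ 2 < (N:ℝ) := hN
      rw [div_lt_iff₀ (by positivity : (0:ℝ) < δ ^ 2)] at h1
      nlinarith
    have hEdiv : E / ((n:ℝ)+1) ≤ E / ((N:ℝ)+1) := by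
      apply div_le_div_of_nonneg_left (le_of_lt hE0) hN1
      have : (N:ℝ) ≤ (n:ℝ) := by exact_mod_cast hn
      linarith
    have k1 := key N n hn
    have k2 := (key n n le_rfl).trans hEdiv
    have k3 := key N N le_rfl
    have hsq : ‖b n - b N‖ ^ 2 ≤ 4 * E / ((N:ℝ)+1) := by
      have e1 : ‖b n - b N‖ ^ 2 = ‖b n‖ ^ 2 - 2 * ⟪b n, b N⟫ + ‖b N‖ ^ 2 :=
        norm_sub_sq_real _ _
      have e2 : ‖b n‖ ^ 2 = ⟪b n, b n⟫ := (real_inner_self_eq_norm_sq _).symm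
      have e3 : ‖b N‖ ^ 2 = ⟪b N, b N⟫ := (real_inner_self_eq_norm_sq _).symm
      rw [e1, e2, e3]
      rw [abs_le] at k1 k2 k3
      have : 4 * E / ((N:ℝ)+1) = 4 * (E / ((N:ℝ)+1)) := by ring
      rw [this]
      linarith [k1.1, k1.2, k2.1, k2.2, k3.1, k3.2]
    rw [dist_eq_norm]
    have : ‖b n - b N‖ ^ 2 < δ ^ 2 := lt_of_le_of_lt hsq hbound
    exact lt_of_pow_lt_pow_left₀ 2 (le_of_lt hδ) this
  exact cauchySeq_tendsto_of_complete hcauchy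


open MeasureTheory

/-- Every `μ`-compact convex closed bounded subset of a separable Hilbert space
is compact. -/
theorem stmt_9 {H : Type*} [NormedAddCommGroup H] [InnerProductSpace ℝ H]
    [CompleteSpace H] [TopologicalSpace.SeparableSpace H]
    [MeasurableSpace H] [BorelSpace H]
    (A : Set H) (hconv : Convex ℝ A) (hclosed : IsClosed A)
    (hbdd : Bornology.IsBounded A)
    (hmu : ∀ V : Set H, IsCompact V →
      IsCompact {μ : ProbabilityMeasure A |
        (∫ x : A, (x : H) ∂(μ : Measure A)) ∈ V}) :
    IsCompact A := by
  by_contra hnc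
  obtain ⟨M, hM⟩ := isBounded_iff_forall_norm_le.1 hbdd
  have htb : ¬ TotallyBounded A := fun h =>
    hnc (isCompact_iff_totallyBounded_isComplete.2 ⟨h, hclosed.isComplete⟩)
  obtain ⟨ε, hε, x, hxA, hxsep⟩ := sep_seq htb
  have hxM : ∀ n, ‖x n‖ ≤ M := fun n => hM _ (hxA n)
  obtain ⟨θ, c, hθ, hcM, hθc⟩ := inner_subseq hxM
  set z : ℕ → H := x ∘ θ with hzdef
  have hzA : ∀ n, z n ∈ A := fun n => hxA _
  have hzM : ∀ n, ‖z n‖ ≤ M := fun n => hxM _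
  have hzsep : ∀ i j, i ≠ j → ε ≤ dist (z i) (z j) :=
    fun i j hij => hxsep _ _ fun hh => hij (hθ.injective hh)
  obtain ⟨a, hba⟩ := barycenter_cauchy hzM hcM hθc
  set b : ℕ → H := fun n : ℕ => ((n:ℝ)+1)⁻¹ • ∑ k ∈ Finset.range (n+1), z k with hbdef
  set zA : ℕ → A := fun n => ⟨z n, hzA n⟩ with hzAdef
  -- the uniform measures on the first n+1 points
  set ν : ℕ → Measure A :=
    fun n => ((n : ℝ≥0∞)+1)⁻¹ • ∑ k ∈ Finset.range (n+1), Measure.dirac (zA k) with hνdef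
  have hprob : ∀ n, IsProbabilityMeasure (ν n) := by
    intro n
    constructor
    rw [hνdef]
    simp only [Measure.smul_apply, Measure.finset_sum_apply, measure_univ,
      Finset.sum_const, Finset.card_range, nsmul_eq_mul, mul_one, smul_eq_mul]
    push_cast
    rw [mul_comm]
    exact ENNReal.mul_inv_cancel (by simp : ((n:ℝ≥0∞)+1) ≠ 0)
      (ENNReal.add_ne_top.2 ⟨ENNReal.natCast_ne_top n, ENNReal.one_ne_top⟩)
  set P : ℕ → ProbabilityMeasure A := fun n => ⟨ν n, hprob n⟩ with hPdef
  have hint : ∀ p : A, Integrable (fun q : A => (q : H)) (Measure.dirac p) := by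
    intro p
    refine Integrable.mono' (integrable_const M)
      continuous_subtype_val.aestronglyMeasurable ?_
    rw [ae_dirac_eq]
    exact Filter.eventually_pure.2 (hM _ p.2)
  have hbar : ∀ n, (∫ q : A, (q : H) ∂(ν n)) = b n := by
    intro n
    rw [hνdef]
    rw [integral_smul_measure, integral_finset_sum_measure fun i _ => hint _]
    simp only [integral_dirac]
    have hsc : (((n : ℝ≥0∞)+1)⁻¹).toReal = ((n:ℝ)+1)⁻¹ := by
      rw [ENNReal.toReal_inv, ENNReal.toReal_add (ENNReal.natCast_ne_top n)
        ENNReal.one_ne_top]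
      simp
    rw [hsc]
  have hV : IsCompact (insert a (Set.range b)) := hba.isCompact_insert_range
  have hS := hmu _ hV
  have hPS : ∀ n, P n ∈ {μ : ProbabilityMeasure A |
      (∫ x : A, (x : H) ∂(μ : Measure A)) ∈ insert a (Set.range b)} := by
    intro n
    show (∫ q : A, (q : H) ∂(ν n)) ∈ insert a (Set.range b)
    rw [hbar n]
    exact Set.mem_insert_of_mem _ ⟨n, rfl⟩
  obtain ⟨μlim, hμS, φ, hφ, hφt⟩ := hS.isSeqCompact hPS
  -- closed tail sets
  set C : ℕ → Set A := fun m => zA '' Set.Ici m with hCdef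
  have hCcl : ∀ m, IsClosed (C m) := by
    intro m
    apply IsSeqClosed.isClosed
    intro u p hu hup
    choose k hk hkz using hu
    obtain ⟨N, hN⟩ := Metric.cauchySeq_iff'.1 hup.cauchySeq ε hε
    have hconst : ∀ j ≥ N, u j = u N := by
      intro j hj
      by_contra hne
      have hkk : k j ≠ k N := fun hkk => hne (by rw [← hkz j, ← hkz N, hkk])
      have h2 : ε ≤ dist (u j) (u N) := by
        rw [← hkz j, ← hkz N, Subtype.dist_eq]
        exact hzsep _ _ hkk
      linarith [hN j hj]
    have hupN : Tendsto u atTop (𝓝 (u N)) := by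
      refine tendsto_const_nhds.congr' ?_
      filter_upwards [eventually_ge_atTop N] with j hj
      exact (hconst j hj).symm
    have hpu : p = u N := tendsto_nhds_unique hup hupN
    rw [hpu, ← hkz N]
    exact ⟨k N, hk N, rfl⟩
  have hμprob : IsProbabilityMeasure (μlim : Measure A) := μlim.prop
  -- the limit measure gives full mass to every tail
  have hμCc : ∀ m, (μlim : Measure A) ((C m)ᶜ) = 0 := by
    intro m
    have hport := ProbabilityMeasure.le_liminf_measure_open_of_tendsto hφt
      (hCcl m).isOpen_compl
    have hub : ∀ n, ((P n : ProbabilityMeasure A) : Measure A) ((C m)ᶜ)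
        ≤ (m : ℝ≥0∞) * ((n : ℝ≥0∞)+1)⁻¹ := by
      intro n
      show (ν n) ((C m)ᶜ) ≤ _
      rw [hνdef]
      simp only [Measure.smul_apply, Measure.finset_sum_apply, smul_eq_mul]
      have hterm : ∀ k ∈ Finset.range (n+1), (Measure.dirac (zA k)) ((C m)ᶜ)
          ≤ if k < m then 1 else 0 := by
        intro k _
        by_cases hk : k < m
        · rw [if_pos hk]
          exact (measure_mono (Set.subset_univ _)).trans (by simp)
        · rw [if_neg hk]
          have hmem : zA k ∈ C m := ⟨k, Set.mem_Ici.2 (by omega), rfl⟩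
          rw [Measure.dirac_apply]
          exact le_of_eq (Set.indicator_of_notMem (by simpa using hmem) _)
      have hsum : (∑ k ∈ Finset.range (n+1), (Measure.dirac (zA k)) ((C m)ᶜ))
          ≤ (m : ℝ≥0∞) := by
        refine (Finset.sum_le_sum hterm).trans ?_
        rw [Finset.sum_boole]
        have hcard : ((Finset.range (n+1)).filter (· < m)).card ≤ m :=
          (Finset.card_le_card fun p hp =>
            Finset.mem_range.2 (Finset.mem_filter.1 hp).2).trans_eq (Finset.card_range m)
        exact_mod_cast Nat.cast_le.2 hcard
      calc ((n : ℝ≥0∞)+1)⁻¹ * ∑ k ∈ Finset.range (n+1), (Measure.dirac (zA k)) ((C m)ᶜ)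
          ≤ ((n : ℝ≥0∞)+1)⁻¹ * (m : ℝ≥0∞) := by
            exact mul_le_mul_right hsum _
        _ = (m : ℝ≥0∞) * ((n : ℝ≥0∞)+1)⁻¹ := mul_comm _ _
    have hzero : Tendsto (fun j : ℕ => (m : ℝ≥0∞) * ((φ j : ℝ≥0∞)+1)⁻¹) atTop (𝓝 0) := by
      have h1 : Tendsto (fun j : ℕ => ((j : ℝ≥0∞)+1)⁻¹) atTop (𝓝 0) := by
        refine tendsto_of_tendsto_of_tendsto_of_le_of_le tendsto_const_nhds
          ENNReal.tendsto_inv_nat_nhds_zero (fun j => zero_le) (fun j => ?_)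
        gcongr
        exact le_self_add
      have h2 : Tendsto (fun j : ℕ => ((φ j : ℝ≥0∞)+1)⁻¹) atTop (𝓝 0) :=
        h1.comp hφ.tendsto_atTop
      have h3 := ENNReal.Tendsto.const_mul h2 (Or.inr (ENNReal.natCast_ne_top m))
      simpa using h3
    have hliminf : (atTop.liminf fun j =>
        ((P (φ j) : ProbabilityMeasure A) : Measure A) ((C m)ᶜ)) ≤ 0 := by
      calc (atTop.liminf fun j => ((P (φ j) : ProbabilityMeasure A) : Measure A) ((C m)ᶜ))
          ≤ atTop.liminf fun j => (m : ℝ≥0∞) * ((φ j : ℝ≥0∞)+1)⁻¹ :=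
            liminf_le_liminf (Eventually.of_forall fun j => hub (φ j))
        _ = 0 := hzero.liminf_eq
    exact le_antisymm (hport.trans hliminf) zero_le
  have hμC : ∀ m, (μlim : Measure A) (C m) = 1 := by
    intro m
    have := prob_compl_eq_zero_iff (μ := (μlim : Measure A)) (hCcl m).measurableSet
    exact this.1 (hμCc m)
  have hCint : ⋂ m, C m = (∅ : Set A) := by
    rw [Set.eq_empty_iff_forall_notMem]
    intro p hp
    obtain ⟨k0, _, h0⟩ := Set.mem_iInter.1 hp 0
    obtain ⟨k1, hk1, h1⟩ := Set.mem_iInter.1 hp (k0 + 1)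
    have hzz : z k1 = z k0 := by
      have : zA k1 = zA k0 := h1.trans h0.symm
      exact Subtype.ext_iff.1 this
    have hk1' : k0 + 1 ≤ k1 := Set.mem_Ici.1 hk1
    have hne : k1 ≠ k0 := by omega
    have := hzsep k1 k0 hne
    rw [hzz, dist_self] at this
    linarith
  have hanti : Antitone C := fun m m' hmm' =>
    Set.image_mono (Set.Ici_subset_Ici.2 hmm')
  have htt := tendsto_measure_iInter_atTop (μ := (μlim : Measure A))
    (fun m => (hCcl m).measurableSet.nullMeasurableSet) hanti
    ⟨0, by rw [hμC 0]; exact ENNReal.one_ne_top⟩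
  rw [hCint] at htt
  simp only [measure_empty] at htt
  have hone : Tendsto (fun m => (μlim : Measure A) (C m)) atTop (𝓝 1) := by
    have : (fun m => (μlim : Measure A) (C m)) = fun _ => (1 : ℝ≥0∞) := funext hμC
    rw [this]
    exact tendsto_const_nhds
  have : (1 : ℝ≥0∞) = 0 := tendsto_nhds_unique hone htt
  exact one_ne_zero this
end

section
/- The bounded part of the positive cone in l¹, namely A₁ = { x ∈ l¹ : x ≥ 0 coordinatewise, ‖x‖₁ ≤ 1 }, satisfies the μ-compactness criterion: for every compact set K ⊆ A₁ and every ε > 0 there exists a compact set K_ε ⊆ A₁ such that for every x ∈ K and every finite convex decomposition x = Σᵢ λᵢ xᵢ with xᵢ ∈ A₁, the total weight of the points xᵢ lying outside K_ε is less than ε. -/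
open scoped Classical

noncomputable section StmtAux

private abbrev E1 := lp (fun _ : ℕ => ℝ) 1

private lemma summable_norm' (f : E1) : Summable fun j => ‖(f : ∀ _ : ℕ, ℝ) j‖ := by
  have := (lp.memℓp f).summable (p := 1) (by norm_num)
  simpa using this

/-- tail sum of an `l¹` element starting at index `N` -/
private def Ttail (N : ℕ) (f : E1) : ℝ := ∑' j, ‖(f : ∀ _ : ℕ, ℝ) (j + N)‖

private lemma summable_Ttail (N : ℕ) (f : E1) :
    Summable fun j => ‖(f : ∀ _ : ℕ, ℝ) (j + N)‖ :=
  (summable_nat_add_iff N).2 (summable_norm' f)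

private lemma norm_eq' (f : E1) : ‖f‖ = ∑' j, ‖(f : ∀ _ : ℕ, ℝ) j‖ := by
  have := lp.norm_eq_tsum_rpow (p := 1) (by norm_num) f
  simpa using this

private lemma Ttail_nonneg (N : ℕ) (f : E1) : 0 ≤ Ttail N f :=
  tsum_nonneg fun _ => norm_nonneg _

private lemma Ttail_eq (N : ℕ) (f : E1) :
    Ttail N f = ‖f‖ - ∑ j ∈ Finset.range N, ‖(f : ∀ _ : ℕ, ℝ) j‖ := by
  have h := Summable.sum_add_tsum_nat_add (f := fun j => ‖(f : ∀ _ : ℕ, ℝ) j‖) N (summable_norm' f)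
  rw [norm_eq', ← h, Ttail]; ring

private lemma Ttail_antitone (f : E1) : Antitone fun N => Ttail N f := by
  intro N M h
  simp only [Ttail_eq]
  have : ∑ j ∈ Finset.range N, ‖(f : ∀ _ : ℕ, ℝ) j‖
      ≤ ∑ j ∈ Finset.range M, ‖(f : ∀ _ : ℕ, ℝ) j‖ :=
    Finset.sum_le_sum_of_subset_of_nonneg (Finset.range_subset_range.2 h) (fun _ _ _ => norm_nonneg _)
  linarith

private lemma Ttail_le_norm (N : ℕ) (f : E1) : Ttail N f ≤ ‖f‖ := by
  rw [Ttail_eq]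
  have : 0 ≤ ∑ j ∈ Finset.range N, ‖(f : ∀ _ : ℕ, ℝ) j‖ :=
    Finset.sum_nonneg fun _ _ => norm_nonneg _
  linarith

private lemma Ttail_sub_le (N : ℕ) (f g : E1) : Ttail N f - Ttail N g ≤ ‖f - g‖ := by
  have h1 : Ttail N f ≤ Ttail N g + Ttail N (f - g) := by
    rw [Ttail, Ttail, Ttail, ← Summable.tsum_add (summable_Ttail N g) (summable_Ttail N (f - g))]
    refine Summable.tsum_le_tsum (fun j => ?_) (summable_Ttail N f)
      ((summable_Ttail N g).add (summable_Ttail N (f - g)))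
    have : (f : ∀ _ : ℕ, ℝ) (j + N) =
        (g : ∀ _ : ℕ, ℝ) (j + N) + ((f - g : E1) : ∀ _ : ℕ, ℝ) (j + N) := by simp
    rw [this]; exact norm_add_le _ _
  have h2 : Ttail N (f - g) ≤ ‖f - g‖ := Ttail_le_norm _ _
  linarith

private lemma Ttail_lipschitz (N : ℕ) (f g : E1) : |Ttail N f - Ttail N g| ≤ ‖f - g‖ := by
  rw [abs_le]
  refine ⟨?_, Ttail_sub_le N f g⟩
  have := Ttail_sub_le N g f
  rw [← norm_neg, neg_sub] at this
  linarith

private lemma Ttail_continuous (N : ℕ) : Continuous (Ttail N) := by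
  have : LipschitzWith 1 (Ttail N) := by
    refine LipschitzWith.of_dist_le_mul fun f g => ?_
    simpa [dist_eq_norm, Real.dist_eq] using Ttail_lipschitz N f g
  exact this.continuous

private lemma Ttail_tendsto (f : E1) :
    Filter.Tendsto (fun N => Ttail N f) Filter.atTop (nhds 0) :=
  tendsto_sum_nat_add (f := fun j => ‖(f : ∀ _ : ℕ, ℝ) j‖)

private lemma eval_continuous' (j : ℕ) : Continuous fun f : E1 => (f : ∀ _ : ℕ, ℝ) j := by
  have : LipschitzWith 1 fun f : E1 => (f : ∀ _ : ℕ, ℝ) j := by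
    refine LipschitzWith.of_dist_le_mul fun f g => ?_
    have := lp.norm_apply_le_norm (p := 1) (by norm_num) (f - g) j
    simpa [dist_eq_norm, Real.dist_eq] using this
  exact this.continuous

private lemma coord_sum' {n : ℕ} (l : Fin n → ℝ) (xs : Fin n → E1) (j : ℕ) :
    ((∑ i, l i • xs i : E1) : ∀ _ : ℕ, ℝ) j = ∑ i, l i * (xs i : ∀ _ : ℕ, ℝ) j := by
  rw [lp.coeFn_sum]
  simp [Finset.sum_apply]

private lemma Ttail_convex {n : ℕ} (N : ℕ) (l : Fin n → ℝ) (xs : Fin n → E1)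
    (hl : ∀ i, 0 ≤ l i) (hxs : ∀ i j, 0 ≤ (xs i : ∀ _ : ℕ, ℝ) j) :
    Ttail N (∑ i, l i • xs i) = ∑ i, l i * Ttail N (xs i) := by
  have key : ∀ j, ‖((∑ i, l i • xs i : E1) : ∀ _ : ℕ, ℝ) (j + N)‖
      = ∑ i, l i * ‖(xs i : ∀ _ : ℕ, ℝ) (j + N)‖ := by
    intro j
    rw [coord_sum']
    rw [Real.norm_of_nonneg (Finset.sum_nonneg fun i _ => mul_nonneg (hl i) (hxs i _))]
    exact Finset.sum_congr rfl fun i _ => by rw [Real.norm_of_nonneg (hxs i _)]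
  unfold Ttail
  simp_rw [key]
  rw [Summable.tsum_finsetSum (fun i _ => (summable_Ttail N (xs i)).mul_left (l i))]
  exact Finset.sum_congr rfl fun i _ => by rw [tsum_mul_left]

private lemma single_add' (i : ℕ) (a b : ℝ) :
    lp.single (E := fun _ : ℕ => ℝ) 1 i (a + b) =
      lp.single 1 i a + lp.single 1 i b := by
  apply lp.ext
  funext m
  by_cases h : m = i
  · subst h; simp [lp.single_apply_self]
  · simp [lp.single_apply_ne _ _ _ h]

private def ext1 (M : ℕ) : (Fin M → ℝ) →ₗ[ℝ] E1 where
  toFun v := ∑ j : Fin M, lp.single 1 (j : ℕ) (v j)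
  map_add' v w := by
    rw [← Finset.sum_add_distrib]
    exact Finset.sum_congr rfl fun j _ => single_add' _ _ _
  map_smul' c v := by
    dsimp only [RingHom.id_apply]
    rw [Finset.smul_sum]
    refine Finset.sum_congr rfl fun j _ => ?_
    apply lp.ext
    funext m
    by_cases h : m = (j : ℕ)
    · subst h; simp [lp.single_apply_self]
    · simp [lp.single_apply_ne _ _ _ h, Pi.single_apply, h]

private lemma ext1_apply (M : ℕ) (v : Fin M → ℝ) (m : ℕ) :
    ((ext1 M v : E1) : ∀ _ : ℕ, ℝ) m = if h : m < M then v ⟨m, h⟩ else 0 := by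
  show ((∑ j : Fin M, lp.single 1 (j : ℕ) (v j) : E1) : ∀ _ : ℕ, ℝ) m = _
  rw [lp.coeFn_sum, Finset.sum_apply]
  by_cases h : m < M
  · rw [dif_pos h]
    rw [Finset.sum_eq_single (⟨m, h⟩ : Fin M)]
    · exact lp.single_apply_self _ _ _
    · intro b _ hb
      exact lp.single_apply_ne _ _ _ (fun he => hb (by apply Fin.ext; simp [← he]))
    · simp
  · rw [dif_neg h]
    exact Finset.sum_eq_zero fun b _ =>
      lp.single_apply_ne _ _ _ (fun he => h (he ▸ b.isLt))

private lemma norm_sub_ext1 (M : ℕ) (f : E1) :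
    ‖f - ext1 M (fun j => (f : ∀ _ : ℕ, ℝ) j)‖ = Ttail M f := by
  set g : E1 := f - ext1 M (fun j => (f : ∀ _ : ℕ, ℝ) j) with hg
  have hcoord : ∀ m, (g : ∀ _ : ℕ, ℝ) m = if m < M then 0 else (f : ∀ _ : ℕ, ℝ) m := by
    intro m
    have : (g : ∀ _ : ℕ, ℝ) m = (f : ∀ _ : ℕ, ℝ) m -
        ((ext1 M (fun j => (f : ∀ _ : ℕ, ℝ) j) : E1) : ∀ _ : ℕ, ℝ) m := by simp [hg]
    rw [this, ext1_apply]
    by_cases h : m < M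
    · simp [h]
    · simp [h]
  rw [norm_eq']
  have h := Summable.sum_add_tsum_nat_add (f := fun j => ‖(g : ∀ _ : ℕ, ℝ) j‖) M (summable_norm' g)
  rw [← h]
  have h1 : ∑ j ∈ Finset.range M, ‖(g : ∀ _ : ℕ, ℝ) j‖ = 0 :=
    Finset.sum_eq_zero fun j hj => by rw [hcoord j, if_pos (Finset.mem_range.1 hj)]; simp
  have h2 : ∀ j : ℕ, ‖(g : ∀ _ : ℕ, ℝ) (j + M)‖ = ‖(f : ∀ _ : ℕ, ℝ) (j + M)‖ := fun j => by
    rw [hcoord, if_neg (by omega)]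
  rw [h1, zero_add]
  exact tsum_congr h2

/-- Uniform smallness of tails on a compact set. -/
private lemma uniform_tail {K : Set E1} (hK : IsCompact K) {δ : ℝ} (hδ : 0 < δ) :
    ∃ N : ℕ, ∀ x ∈ K, Ttail N x ≤ δ := by
  obtain ⟨t, htfin, htcov⟩ :=
    (Metric.totallyBounded_iff.1 hK.totallyBounded) (δ / 2) (by positivity)
  have hc : ∀ c : E1, ∃ N : ℕ, Ttail N c ≤ δ / 2 := by
    intro c
    have := (Ttail_tendsto c).eventually (eventually_le_nhds (show (0:ℝ) < δ / 2 by positivity))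
    obtain ⟨N, hN⟩ := this.exists
    exact ⟨N, hN⟩
  choose Nc hNc using hc
  refine ⟨htfin.toFinset.sup Nc, fun x hx => ?_⟩
  obtain ⟨c, hc, hxc⟩ := Set.mem_iUnion₂.1 (htcov hx)
  have h1 : Ttail (htfin.toFinset.sup Nc) x - Ttail (htfin.toFinset.sup Nc) c ≤ ‖x - c‖ :=
    Ttail_sub_le _ _ _
  have h2 : Ttail (htfin.toFinset.sup Nc) c ≤ Ttail (Nc c) c :=
    Ttail_antitone c (Finset.le_sup (htfin.mem_toFinset.2 hc))
  have h3 : ‖x - c‖ < δ / 2 := by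
    rw [← dist_eq_norm]; exact hxc
  have h4 := hNc c
  linarith

/-- The candidate compact set is closed. -/
private lemma Keps_closed (N : ℕ → ℕ) (t : ℕ → ℝ) :
    IsClosed {y : E1 | (∀ i, 0 ≤ (y : ∀ _ : ℕ, ℝ) i) ∧ ‖y‖ ≤ 1 ∧
      ∀ k, Ttail (N k) y ≤ t k} := by
  have h1 : IsClosed {y : E1 | ∀ i, 0 ≤ (y : ∀ _ : ℕ, ℝ) i} := by
    have : {y : E1 | ∀ i, 0 ≤ (y : ∀ _ : ℕ, ℝ) i}
        = ⋂ i, (fun y : E1 => (y : ∀ _ : ℕ, ℝ) i) ⁻¹' Set.Ici 0 := by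
      ext y; simp [Set.mem_iInter]
    rw [this]
    exact isClosed_iInter fun i => isClosed_Ici.preimage (eval_continuous' i)
  have h2 : IsClosed {y : E1 | ‖y‖ ≤ 1} :=
    isClosed_le continuous_norm continuous_const
  have h3 : IsClosed {y : E1 | ∀ k, Ttail (N k) y ≤ t k} := by
    have : {y : E1 | ∀ k, Ttail (N k) y ≤ t k}
        = ⋂ k, {y : E1 | Ttail (N k) y ≤ t k} := by
      ext y; simp [Set.mem_iInter]
    rw [this]
    exact isClosed_iInter fun k =>
      isClosed_le (Ttail_continuous (N k)) continuous_const
  have : {y : E1 | (∀ i, 0 ≤ (y : ∀ _ : ℕ, ℝ) i) ∧ ‖y‖ ≤ 1 ∧ ∀ k, Ttail (N k) y ≤ t k}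
      = {y : E1 | ∀ i, 0 ≤ (y : ∀ _ : ℕ, ℝ) i} ∩ ({y : E1 | ‖y‖ ≤ 1}
        ∩ {y : E1 | ∀ k, Ttail (N k) y ≤ t k}) := by
    ext y; simp [Set.mem_inter_iff, and_assoc]
  rw [this]
  exact h1.inter (h2.inter h3)

/-- The candidate compact set is totally bounded. -/
private lemma Keps_totallyBounded (N : ℕ → ℕ) :
    TotallyBounded {y : E1 | (∀ i, 0 ≤ (y : ∀ _ : ℕ, ℝ) i) ∧ ‖y‖ ≤ 1 ∧
      ∀ k, Ttail (N k) y ≤ (1/2 : ℝ)^k} := by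
  rw [Metric.totallyBounded_iff]
  intro δ hδ
  obtain ⟨k, hk⟩ := exists_pow_lt_of_lt_one (show (0:ℝ) < δ/2 by positivity)
    (show (1/2 : ℝ) < 1 by norm_num)
  set M := N k with hM
  have hbox : IsCompact (Set.pi Set.univ (fun _ : Fin M => Set.Icc (0:ℝ) 1)) :=
    isCompact_univ_pi fun _ => isCompact_Icc
  have hC : IsCompact (ext1 M '' Set.pi Set.univ (fun _ : Fin M => Set.Icc (0:ℝ) 1)) :=
    hbox.image (ext1 M).continuous_of_finiteDimensional
  obtain ⟨s, hsfin, hscov⟩ :=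
    (Metric.totallyBounded_iff.1 hC.totallyBounded) (δ / 2) (by positivity)
  refine ⟨s, hsfin, fun x hx => ?_⟩
  obtain ⟨hpos, hnorm, htail⟩ := hx
  set v : Fin M → ℝ := fun j => (x : ∀ _ : ℕ, ℝ) (j : ℕ) with hv
  have hvbox : v ∈ Set.pi Set.univ (fun _ : Fin M => Set.Icc (0:ℝ) 1) := by
    intro j _
    refine ⟨hpos _, ?_⟩
    have := lp.norm_apply_le_norm (p := 1) (by norm_num) x (j : ℕ)
    have h2 : ‖(x : ∀ _ : ℕ, ℝ) (j : ℕ)‖ = (x : ∀ _ : ℕ, ℝ) (j : ℕ) :=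
      Real.norm_of_nonneg (hpos _)
    rw [h2] at this
    linarith
  have hhead : (ext1 M v : E1) ∈
      ext1 M '' Set.pi Set.univ (fun _ : Fin M => Set.Icc (0:ℝ) 1) :=
    Set.mem_image_of_mem _ hvbox
  obtain ⟨c, hcs, hcball⟩ := Set.mem_iUnion₂.1 (hscov hhead)
  refine Set.mem_iUnion₂.2 ⟨c, hcs, ?_⟩
  have hd1 : dist x (ext1 M v) = Ttail M x := by
    rw [dist_eq_norm]
    exact norm_sub_ext1 M x
  have hd2 : dist (ext1 M v : E1) c < δ / 2 := hcball
  have h3 : Ttail M x ≤ (1/2 : ℝ)^k := htail k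
  calc dist x c ≤ dist x (ext1 M v) + dist (ext1 M v : E1) c := dist_triangle _ _ _
    _ < (1/2 : ℝ)^k + δ/2 := by rw [hd1]; exact add_lt_add_of_le_of_lt h3 hd2
    _ < δ/2 + δ/2 := by linarith
    _ = δ := by ring

end StmtAux

/-- The bounded part of the positive cone of `l¹` satisfies the
`μ`-compactness criterion. -/
theorem stmt_10 :
    ∀ K : Set (lp (fun _ : ℕ => ℝ) 1), IsCompact K →
      K ⊆ {x : lp (fun _ : ℕ => ℝ) 1 | (∀ i, 0 ≤ (x : ∀ _ : ℕ, ℝ) i) ∧ ‖x‖ ≤ 1} →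
      ∀ ε : ℝ, 0 < ε →
      ∃ Kε : Set (lp (fun _ : ℕ => ℝ) 1), IsCompact Kε ∧
        Kε ⊆ {x : lp (fun _ : ℕ => ℝ) 1 | (∀ i, 0 ≤ (x : ∀ _ : ℕ, ℝ) i) ∧ ‖x‖ ≤ 1} ∧
        ∀ x ∈ K, ∀ (n : ℕ) (l : Fin n → ℝ) (xs : Fin n → lp (fun _ : ℕ => ℝ) 1),
          (∀ i, 0 ≤ l i) → (∑ i, l i) = 1 →
          (∀ i, (∀ j, 0 ≤ (xs i : ∀ _ : ℕ, ℝ) j) ∧ ‖xs i‖ ≤ 1) →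
          (∑ i, l i • xs i) = x →
          (∑ i ∈ Finset.univ.filter (fun i => xs i ∉ Kε), l i) < ε := by
  intro K hK hKA ε hε
  -- choose uniform tail bounds
  have hδ : ∀ k : ℕ, (0:ℝ) < ε/4 * (1/4)^k := fun k => by positivity
  have hN : ∀ k : ℕ, ∃ N : ℕ, ∀ x ∈ K, Ttail N x ≤ ε/4 * (1/4)^k := fun k =>
    uniform_tail hK (hδ k)
  choose N hNspec using hN
  refine ⟨{y : E1 | (∀ i, 0 ≤ (y : ∀ _ : ℕ, ℝ) i) ∧ ‖y‖ ≤ 1 ∧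
      ∀ k, Ttail (N k) y ≤ (1/2 : ℝ)^k}, ?_, ?_, ?_⟩
  · exact TotallyBounded.isCompact_of_isClosed (Keps_totallyBounded N)
      (Keps_closed N (fun k => (1/2 : ℝ)^k))
  · intro y hy
    exact ⟨hy.1, hy.2.1⟩
  · intro x hx n l xs hl hl1 hxs hsum
    set Kε : Set E1 := {y : E1 | (∀ i, 0 ≤ (y : ∀ _ : ℕ, ℝ) i) ∧ ‖y‖ ≤ 1 ∧
      ∀ k, Ttail (N k) y ≤ (1/2 : ℝ)^k} with hKε
    set Bad : Finset (Fin n) := Finset.univ.filter (fun i => xs i ∉ Kε) with hBad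
    -- for every bad index there is a violated tail bound
    have hbadk : ∀ i ∈ Bad, ∃ k : ℕ, (1/2 : ℝ)^k < Ttail (N k) (xs i) := by
      intro i hi
      rw [hBad, Finset.mem_filter] at hi
      by_contra h
      push_neg at h
      exact hi.2 ⟨(hxs i).1, (hxs i).2, fun k => h k⟩
    -- choice of the witness level
    have hκ : ∀ i : Fin n, ∃ k : ℕ, i ∈ Bad → (1/2 : ℝ)^k < Ttail (N k) (xs i) := by
      intro i
      by_cases hi : i ∈ Bad
      · obtain ⟨k, hk⟩ := hbadk i hi
        exact ⟨k, fun _ => hk⟩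
      · exact ⟨0, fun h => absurd h hi⟩
    choose κ hκspec using hκ
    -- Markov inequality at each level
    have markov : ∀ k : ℕ,
        ∑ i ∈ Finset.univ.filter (fun i => (1/2 : ℝ)^k < Ttail (N k) (xs i)), l i
          ≤ ε/4 * (1/2)^k := by
      intro k
      set S := Finset.univ.filter (fun i => (1/2 : ℝ)^k < Ttail (N k) (xs i)) with hS
      have h1 : (1/2 : ℝ)^k * ∑ i ∈ S, l i ≤ ∑ i ∈ S, l i * Ttail (N k) (xs i) := by
        rw [Finset.mul_sum]
        refine Finset.sum_le_sum fun i hi => ?_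
        rw [hS, Finset.mem_filter] at hi
        rw [mul_comm]
        exact mul_le_mul_of_nonneg_left (le_of_lt hi.2) (hl i)
      have h2 : ∑ i ∈ S, l i * Ttail (N k) (xs i)
          ≤ ∑ i, l i * Ttail (N k) (xs i) := by
        refine Finset.sum_le_sum_of_subset_of_nonneg (Finset.subset_univ _) fun i _ _ =>
          mul_nonneg (hl i) (Ttail_nonneg _ _)
      have h3 : ∑ i, l i * Ttail (N k) (xs i) = Ttail (N k) x := by
        rw [← hsum, Ttail_convex (N k) l xs hl (fun i => (hxs i).1)]
      have h4 : Ttail (N k) x ≤ ε/4 * (1/4)^k := hNspec k x hx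
      have h5 : (1/2 : ℝ)^k * ∑ i ∈ S, l i ≤ ε/4 * (1/4)^k := by linarith
      have h6 : (0:ℝ) < (1/2 : ℝ)^k := by positivity
      have h7 : (ε/4 * (1/4)^k) / ((1/2 : ℝ)^k) = ε/4 * (1/2)^k := by
        have h8 : ((1:ℝ)/4)^k = (1/2:ℝ)^k * (1/2)^k := by
          rw [← mul_pow]; norm_num
        rw [h8, div_eq_iff (ne_of_gt h6)]
        ring
      calc ∑ i ∈ S, l i = ((1/2 : ℝ)^k * ∑ i ∈ S, l i) / ((1/2 : ℝ)^k) := by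
            field_simp
        _ ≤ (ε/4 * (1/4)^k) / ((1/2 : ℝ)^k) := by gcongr
        _ = ε/4 * (1/2)^k := h7
    -- fiberwise decomposition of the bad sum
    set Kmax := Bad.sup κ + 1 with hKmax
    have hmaps : ∀ i ∈ Bad, κ i ∈ Finset.range Kmax := fun i hi =>
      Finset.mem_range.2 (Nat.lt_succ_of_le (Finset.le_sup hi))
    have hfiber : ∑ k ∈ Finset.range Kmax, ∑ i ∈ Bad.filter (fun i => κ i = k), l i
        = ∑ i ∈ Bad, l i := Finset.sum_fiberwise_of_maps_to hmaps l
    have hinner : ∀ k ∈ Finset.range Kmax,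
        ∑ i ∈ Bad.filter (fun i => κ i = k), l i ≤ ε/4 * (1/2)^k := by
      intro k _
      refine le_trans ?_ (markov k)
      refine Finset.sum_le_sum_of_subset_of_nonneg ?_ (fun i _ _ => hl i)
      intro i hi
      rw [Finset.mem_filter] at hi
      rw [Finset.mem_filter]
      refine ⟨Finset.mem_univ _, ?_⟩
      have := hκspec i hi.1
      rw [hi.2] at this
      exact this
    have hgeom : ∑ k ∈ Finset.range Kmax, (ε/4 * (1/2 : ℝ)^k) ≤ ε/2 := by
      rw [← Finset.mul_sum]
      have := sum_geometric_two_le Kmax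
      calc ε/4 * ∑ k ∈ Finset.range Kmax, (1/2 : ℝ)^k ≤ ε/4 * 2 :=
            mul_le_mul_of_nonneg_left this (by positivity)
        _ = ε/2 := by ring
    have hfinal : ∑ i ∈ Bad, l i < ε :=
      calc ∑ i ∈ Bad, l i
          = ∑ k ∈ Finset.range Kmax, ∑ i ∈ Bad.filter (fun i => κ i = k), l i := hfiber.symm
        _ ≤ ∑ k ∈ Finset.range Kmax, (ε/4 * (1/2 : ℝ)^k) :=
            Finset.sum_le_sum hinner
        _ ≤ ε/2 := hgeom
        _ < ε := by linarith
    refine lt_of_eq_of_lt (Finset.sum_congr ?_ fun _ _ => rfl) hfinal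
    ext i
    simp [hBad, Finset.mem_filter]
end

section
/- The closed unit ball of l² is not pointwise μ-compact: there exists a point x in the ball such that the set M_x of Borel probability measures on the ball with barycenter x is not compact in the topology of weak convergence of measures. -/
open MeasureTheory

local notation "L" => lp (fun _ : ℕ => ℝ) 2

section Aux

/-- cluster point of a convergent sequence equals the limit -/
lemma aux_clusterPt_eq {X : Type*} [TopologicalSpace X] [T2Space X] {u : ℕ → X} {x y : X}
    (hc : MapClusterPt x Filter.atTop u) (hl : Filter.Tendsto u Filter.atTop (nhds y)) :
    x = y :=
  eq_of_nhds_neBot (ClusterPt.mono hc hl)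

end Aux

set_option maxHeartbeats 1000000 in
set_option synthInstance.maxHeartbeats 400000 in
/-- The closed unit ball of `l²` is not pointwise `μ`-compact: for some point `x`
of the ball, the set of Borel probability measures on the ball with barycenter `x`
is not compact in the weak convergence topology. -/
theorem stmt_11 :
    letI : MeasurableSpace (lp (fun _ : ℕ => ℝ) 2) := borel _
    haveI : BorelSpace (lp (fun _ : ℕ => ℝ) 2) := ⟨rfl⟩
    ∃ x ∈ Metric.closedBall (0 : lp (fun _ : ℕ => ℝ) 2) 1,
      ¬ IsCompact {μ : ProbabilityMeasure (Metric.closedBall (0 : lp (fun _ : ℕ => ℝ) 2) 1) |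
          (∫ y : (Metric.closedBall (0 : lp (fun _ : ℕ => ℝ) 2) 1),
            (y : lp (fun _ : ℕ => ℝ) 2) ∂(μ : Measure _)) = x} := by
  letI : MeasurableSpace (lp (fun _ : ℕ => ℝ) 2) := borel _
  haveI : BorelSpace (lp (fun _ : ℕ => ℝ) 2) := ⟨rfl⟩
  set B := Metric.closedBall (0 : L) 1 with hB
  haveI hBS : BorelSpace B := Subtype.borelSpace _
  haveI : MeasurableSingletonClass B := inferInstance
  refine ⟨0, Metric.mem_closedBall_self (by norm_num), ?_⟩
  set S : Set (ProbabilityMeasure B) :=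
    {μ : ProbabilityMeasure B | (∫ y : B, (y : L) ∂(μ : Measure B)) = 0} with hS
  intro hcomp
  -- the unit vectors
  have hnorm : ∀ n : ℕ, ‖lp.single (E := fun _ : ℕ => ℝ) 2 n (1 : ℝ)‖ = 1 := by
    intro n
    have := lp.norm_single (p := 2) (E := fun _ : ℕ => ℝ) (by norm_num) n (1 : ℝ)
    simpa using this
  have amem : ∀ n : ℕ, lp.single (E := fun _ : ℕ => ℝ) 2 n (1 : ℝ) ∈ B := by
    intro n
    simp [hB, Metric.mem_closedBall, dist_zero_right, hnorm n]
  have bmem : ∀ n : ℕ, -lp.single (E := fun _ : ℕ => ℝ) 2 n (1 : ℝ) ∈ B := by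
    intro n
    simp [hB, Metric.mem_closedBall, dist_zero_right, hnorm n]
  set a : ℕ → B := fun n => ⟨lp.single (E := fun _ : ℕ => ℝ) 2 n (1 : ℝ), amem n⟩ with ha
  set b : ℕ → B := fun n => ⟨-lp.single (E := fun _ : ℕ => ℝ) 2 n (1 : ℝ), bmem n⟩ with hb
  -- the measures
  set ν : ℕ → Measure B := fun n =>
    (2 : ENNReal)⁻¹ • (Measure.dirac (a n) + Measure.dirac (b n)) with hν
  have hprob : ∀ n, IsProbabilityMeasure (ν n) := by
    intro n
    constructor
    simp [hν, Measure.dirac_apply]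
    rw [← two_mul, ENNReal.mul_inv_cancel] <;> norm_num
  set μ : ℕ → ProbabilityMeasure B := fun n => ⟨ν n, hprob n⟩ with hμ
  -- integrals against μ n
  have hint : ∀ (n : ℕ) (E : Type) [NormedAddCommGroup E] [NormedSpace ℝ E] [CompleteSpace E]
      (f : B → E), Integrable f (Measure.dirac (a n)) := by
    intro n E _ _ _ f
    refine (integrable_const (f (a n))).congr ?_
    rw [Filter.eventuallyEq_iff_exists_mem]
    exact ⟨{x | f x = f (a n)}, by rw [ae_dirac_eq]; simp, fun x hx => hx.symm⟩
  have hintb : ∀ (n : ℕ) (E : Type) [NormedAddCommGroup E] [NormedSpace ℝ E] [CompleteSpace E]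
      (f : B → E), Integrable f (Measure.dirac (b n)) := by
    intro n E _ _ _ f
    refine (integrable_const (f (b n))).congr ?_
    rw [Filter.eventuallyEq_iff_exists_mem]
    exact ⟨{x | f x = f (b n)}, by rw [ae_dirac_eq]; simp, fun x hx => hx.symm⟩
  have hkey : ∀ (n : ℕ) (E : Type) [NormedAddCommGroup E] [NormedSpace ℝ E] [CompleteSpace E]
      (f : B → E), (∫ y, f y ∂(ν n)) = (2 : ℝ)⁻¹ • (f (a n) + f (b n)) := by
    intro n E _ _ _ f
    rw [hν]
    simp only [integral_smul_measure]
    rw [integral_add_measure (hint n E f) (hintb n E f)]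
    rw [integral_dirac, integral_dirac]
    norm_num
  -- barycenters are all 0
  have hmem : ∀ n, μ n ∈ S := by
    intro n
    have := hkey n L (fun y => (y : L))
    simp only [hS, Set.mem_setOf_eq]
    rw [show ((μ n : Measure B)) = ν n from rfl, this]
    simp [ha, hb]
  -- cluster point
  have hle : Filter.map μ Filter.atTop ≤ Filter.principal S := by
    rw [Filter.le_principal_iff, Filter.mem_map]
    exact Filter.Eventually.of_forall hmem
  obtain ⟨μlim, hμlimS, hclust⟩ := hcomp.exists_mapClusterPt (f := Filter.atTop) hle
  -- test functions
  have evalcont : ∀ m : ℕ, Continuous (fun y : B => (y : L) m) := by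
    intro m
    have : LipschitzWith 1 (fun f : L => f m) := by
      apply LipschitzWith.of_dist_le_mul
      intro f g
      rw [dist_eq_norm, dist_eq_norm]
      simpa using lp.norm_apply_le_norm (by norm_num) (f - g) m
    exact this.continuous.comp continuous_subtype_val
  have habs : ∀ (m : ℕ) (y : B), |(y : L) m| ≤ 1 := by
    intro m y
    have h1 : ‖(y : L) m‖ ≤ ‖(y : L)‖ := lp.norm_apply_le_norm (by norm_num) _ m
    have h2 : ‖(y : L)‖ ≤ 1 := mem_closedBall_zero_iff.mp y.2
    calc |(y : L) m| = ‖(y : L) m‖ := rfl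
      _ ≤ 1 := h1.trans h2
  set F : ℕ → BoundedContinuousFunction B ℝ := fun m =>
    BoundedContinuousFunction.ofNormedAddCommGroup (fun y : B => ((y : L) m) ^ 2)
      (by continuity) 1
      (fun y => by
        rw [Real.norm_eq_abs, abs_pow, ← one_pow (M := ℝ) 2]
        exact pow_le_pow_left₀ (abs_nonneg _) (habs m y) 2) with hF
  set G : BoundedContinuousFunction B ℝ :=
    BoundedContinuousFunction.ofNormedAddCommGroup (fun y : B => ‖(y : L)‖)
      (continuous_norm.comp continuous_subtype_val) 1
      (fun y => by
        rw [Real.norm_eq_abs, abs_of_nonneg (norm_nonneg _)]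
        exact mem_closedBall_zero_iff.mp y.2) with hG
  -- integrals of F m against μlim vanish
  have hclustF : ∀ f : BoundedContinuousFunction B ℝ,
      MapClusterPt (∫ y, f y ∂(μlim : Measure B)) Filter.atTop
        (fun n => ∫ y, f y ∂(μ n : Measure B)) := by
    intro f
    have hcont := ProbabilityMeasure.continuous_integral_boundedContinuousFunction (X := B) f
    exact hclust.continuousAt_comp hcont.continuousAt
  have hFval : ∀ m n : ℕ, (∫ y, F m y ∂(μ n : Measure B))
      = (2 : ℝ)⁻¹ • ((F m) (a n) + (F m) (b n)) := fun m n => hkey n ℝ _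
  have hFzero : ∀ m : ℕ, (∫ y, F m y ∂(μlim : Measure B)) = 0 := by
    intro m
    refine aux_clusterPt_eq (hclustF (F m)) ?_
    have : ∀ n : ℕ, n ≠ m → (∫ y, F m y ∂(μ n : Measure B)) = 0 := by
      intro n hn
      rw [hFval m n]
      have h1 : (F m) (a n) = 0 := by
        simp only [hF, BoundedContinuousFunction.coe_ofNormedAddCommGroup]
        rw [show ((a n : L) m) = lp.single (E := fun _ : ℕ => ℝ) 2 n (1 : ℝ) m from rfl]
        rw [lp.single_apply_ne 2 n _ (Ne.symm hn)]
        norm_num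
      have h2 : (F m) (b n) = 0 := by
        simp only [hF, BoundedContinuousFunction.coe_ofNormedAddCommGroup]
        have : ((b n : L) m) = -(lp.single (E := fun _ : ℕ => ℝ) 2 n (1 : ℝ) m) := by
          rw [show ((b n : L)) = -(lp.single (E := fun _ : ℕ => ℝ) 2 n (1 : ℝ)) from rfl]
          simp
        rw [this, lp.single_apply_ne 2 n _ (Ne.symm hn)]
        norm_num
      rw [h1, h2]; norm_num
    have : ∀ᶠ n in Filter.atTop, (∫ y, F m y ∂(μ n : Measure B)) = (0 : ℝ) := by
      filter_upwards [Filter.eventually_gt_atTop m] with n hn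
      exact this n (Nat.ne_of_gt hn)
    refine Filter.Tendsto.congr' ?_ tendsto_const_nhds
    filter_upwards [this] with n hn
    exact hn.symm
  -- hence μlim is concentrated at 0
  have hae : ∀ᵐ (y : B) ∂(μlim : Measure B), (y : L) = 0 := by
    have hm : ∀ m : ℕ, ∀ᵐ (y : B) ∂(μlim : Measure B), ((y : L) m) ^ 2 = 0 := by
      intro m
      have hnn : 0 ≤ fun y : B => F m y := fun y => by
        simp only [hF, BoundedContinuousFunction.coe_ofNormedAddCommGroup]
        positivity
      haveI : IsProbabilityMeasure (μlim : Measure B) := μlim.prop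
      have hInt : Integrable (fun y : B => F m y) (μlim : Measure B) :=
        BoundedContinuousFunction.integrable (μlim : Measure B) (F m)
      have := (integral_eq_zero_iff_of_nonneg hnn hInt).mp (hFzero m)
      filter_upwards [this] with y hy
      simpa [hF] using hy
    have := ae_all_iff.mpr hm
    filter_upwards [this] with y hy
    apply lp.ext
    funext m
    have := pow_eq_zero_iff (n := 2) (by norm_num) |>.mp (hy m)
    simpa using this
  have hGzero : (∫ y, G y ∂(μlim : Measure B)) = 0 := by
    rw [← integral_zero B ℝ (μ := (μlim : Measure B))]
    apply integral_congr_ae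
    filter_upwards [hae] with y hy
    simp [hG, hy]
  have hGone : (∫ y, G y ∂(μlim : Measure B)) = 1 := by
    refine aux_clusterPt_eq (hclustF G) ?_
    have : ∀ n : ℕ, (∫ y, G y ∂(μ n : Measure B)) = 1 := by
      intro n
      rw [show (∫ y, G y ∂(μ n : Measure B)) = (2:ℝ)⁻¹ • (G (a n) + G (b n)) from hkey n ℝ G]
      have h1 : G (a n) = 1 := by
        simp only [hG, BoundedContinuousFunction.coe_ofNormedAddCommGroup]
        exact hnorm n
      have h2 : G (b n) = 1 := by
        simp only [hG, BoundedContinuousFunction.coe_ofNormedAddCommGroup]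
        show ‖-(lp.single (E := fun _ : ℕ => ℝ) 2 n (1 : ℝ))‖ = 1
        rw [norm_neg]; exact hnorm n
      rw [h1, h2]; norm_num
    exact Filter.Tendsto.congr (fun n => (this n).symm) tendsto_const_nhds
  rw [hGzero] at hGone
  norm_num at hGone
end

section
/- Let A be a convex μ-compact set (a closed bounded convex subset of a locally convex space whose closed convex hull is a complete separable metric space, with compact barycenter-preimages of compact sets). Then the set of extreme points of A equals the intersection over all concave continuous bounded functions f on A of the sets B_f = { x ∈ A : f(x) = (closed convex hull of f)(x) }. -/
open MeasureTheory Filter Topology Set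
open scoped ProbabilityTheory

section Aux

variable {E : Type*} [AddCommGroup E] [Module ℝ E] [TopologicalSpace E]
    [IsTopologicalAddGroup E] [ContinuousSMul ℝ E] [LocallyConvexSpace ℝ E]
    [T2Space E] [MeasurableSpace E] [BorelSpace E]

/-- Two points agreeing on all continuous functionals are equal. -/
private lemma dual_eq {z w : E} (h : ∀ ℓ : E →L[ℝ] ℝ, ℓ z = ℓ w) : z = w := by
  by_contra hne
  obtain ⟨ℓ, hℓ⟩ := SeparatingDual.exists_separating_of_ne (R := ℝ) hne
  exact hℓ (h ℓ)

private lemma lin_bound {A : Set E} (hbdd : Bornology.IsVonNBounded ℝ A) (ℓ : E →L[ℝ] ℝ) :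
    ∃ C : ℝ, ∀ y ∈ A, |ℓ y| ≤ C := by
  have h1 : Bornology.IsVonNBounded ℝ (ℓ '' A) := hbdd.image ℓ
  rw [NormedSpace.isVonNBounded_iff, isBounded_iff_forall_norm_le] at h1
  obtain ⟨C, hC⟩ := h1
  exact ⟨C, fun y hy => by simpa [Real.norm_eq_abs] using hC _ (mem_image_of_mem ℓ hy)⟩

private lemma integrable_of_bound {A : Set E} {m : Measure A} [IsFiniteMeasure m]
    {h : E → ℝ} (hc : ContinuousOn h A) {M : ℝ} (hM : ∀ y ∈ A, |h y| ≤ M) :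
    Integrable (fun y : A => h ↑y) m :=
  (BoundedContinuousFunction.ofNormedAddCommGroup (fun y : A => h ↑y) hc.restrict M
    (fun y => by simpa [Real.norm_eq_abs] using hM y y.2)).integrable m

private lemma integrable_lin {A : Set E} (hbdd : Bornology.IsVonNBounded ℝ A)
    (ℓ : E →L[ℝ] ℝ) {m : Measure A} [IsFiniteMeasure m] :
    Integrable (fun y : A => ℓ ↑y) m := by
  obtain ⟨C, hC⟩ := lin_bound hbdd ℓ
  exact integrable_of_bound ℓ.continuous.continuousOn hC

variable {A : Set E} (bar : ProbabilityMeasure A → E)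

/-- The barycenter of any probability measure on `A` lies in `A`. -/
private lemma bar_mem (hconv : Convex ℝ A) (hclosed : IsClosed A)
    (hbdd : Bornology.IsVonNBounded ℝ A)
    (hbar : ∀ (μ : ProbabilityMeasure A) (ℓ : E →L[ℝ] ℝ),
      ℓ (bar μ) = ∫ x : A, ℓ (x : E) ∂(μ : Measure A))
    (μ : ProbabilityMeasure A) : bar μ ∈ A := by
  by_contra hnot
  obtain ⟨ℓ, u, hu, hub⟩ := geometric_hahn_banach_closed_point hconv hclosed hnot
  have h1 : ℓ (bar μ) = ∫ x : A, ℓ (x : E) ∂(μ : Measure A) := hbar μ ℓ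
  have h2 : ∫ x : A, ℓ (x : E) ∂(μ : Measure A) ≤ u := by
    calc ∫ x : A, ℓ (x : E) ∂(μ : Measure A)
        ≤ ∫ _ : A, u ∂(μ : Measure A) :=
          integral_mono (integrable_lin hbdd ℓ) (integrable_const u)
            (fun y => (hu _ y.2).le)
      _ = u := by simp
  linarith [h1 ▸ h2]

/-- The barycenter of a Dirac measure. -/
private lemma bar_dirac
    (hbar : ∀ (μ : ProbabilityMeasure A) (ℓ : E →L[ℝ] ℝ),
      ℓ (bar μ) = ∫ x : A, ℓ (x : E) ∂(μ : Measure A)) (a : A) :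
    bar ⟨Measure.dirac a, inferInstance⟩ = (a : E) := by
  apply dual_eq
  intro ℓ
  refine (hbar _ ℓ).trans ?_
  exact (integral_dirac' (fun y : A => ℓ (y : E)) a
    ((ℓ.continuous.comp continuous_subtype_val).stronglyMeasurable)).symm ▸ rfl

private lemma integral_cond {m : Measure A} {B : Set A} (h : A → ℝ) :
    ∫ y, h y ∂(m[|B]) = (m B).toReal⁻¹ * ∫ y in B, h y ∂m := by
  rw [ProbabilityTheory.cond, integral_smul_measure, ENNReal.toReal_inv, smul_eq_mul]

/-- Key lemma: a probability measure whose barycenter is an extreme point of `A`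
is concentrated at that point. -/
private lemma dirac_of_extreme [PolishSpace A]
    (hconv : Convex ℝ A) (hclosed : IsClosed A) (hbdd : Bornology.IsVonNBounded ℝ A)
    (hbar : ∀ (μ : ProbabilityMeasure A) (ℓ : E →L[ℝ] ℝ),
      ℓ (bar μ) = ∫ x : A, ℓ (x : E) ∂(μ : Measure A))
    {x : E} (hx : x ∈ A.extremePoints ℝ)
    (μ : ProbabilityMeasure A) (hbx : bar μ = x) :
    (μ : Measure A) {y : A | (y : E) ≠ x} = 0 := by
  -- Step 1: for every functional, the "strictly above" set is null.
  have key : ∀ ℓ : E →L[ℝ] ℝ, (μ : Measure A) {y : A | ℓ x < ℓ (y : E)} = 0 := by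
    intro ℓ
    by_contra hpos
    -- find a slab of positive measure
    have hcover : {y : A | ℓ x < ℓ (y : E)} =
        ⋃ n : ℕ, {y : A | ℓ x + ((n : ℝ) + 1)⁻¹ ≤ ℓ (y : E)} := by
      ext y
      simp only [mem_setOf_eq, mem_iUnion]
      constructor
      · intro hy
        obtain ⟨n, hn⟩ := exists_nat_one_div_lt (sub_pos.2 hy)
        exact ⟨n, by rw [one_div] at hn; linarith⟩
      · rintro ⟨n, hn⟩
        have : (0:ℝ) < ((n : ℝ) + 1)⁻¹ := by positivity
        linarith
    have hex : ∃ n : ℕ, (μ : Measure A) {y : A | ℓ x + ((n : ℝ) + 1)⁻¹ ≤ ℓ (y : E)} ≠ 0 := by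
      by_contra hall
      push_neg at hall
      exact hpos (by rw [hcover]; exact measure_iUnion_null hall)
    obtain ⟨n, hB0⟩ := hex
    set δ : ℝ := ((n : ℝ) + 1)⁻¹ with hδdef
    have hδ : 0 < δ := by positivity
    set B : Set A := {y : A | ℓ x + δ ≤ ℓ (y : E)} with hBdef
    have hmB : MeasurableSet B := by
      have : IsClosed B := isClosed_Ici.preimage (ℓ.continuous.comp continuous_subtype_val)
      exact this.measurableSet
    have hℓx : ℓ x = ∫ y : A, ℓ (y : E) ∂(μ : Measure A) := by rw [← hbx]; exact hbar μ ℓ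
    by_cases hBc0 : (μ : Measure A) Bᶜ = 0
    · -- the whole measure sits in the slab
      have hae : ∀ᵐ (y : A) ∂(μ : Measure A), ℓ x + δ ≤ ℓ (y : E) := by
        rw [ae_iff]
        have heq : {y : A | ¬ (ℓ x + δ ≤ ℓ (y : E))} = Bᶜ := by
          ext y; simp [hBdef]
        rw [heq]; exact hBc0
      have h2 : ℓ x + δ ≤ ∫ y : A, ℓ (y : E) ∂(μ : Measure A) := by
        calc ℓ x + δ = ∫ _ : A, (ℓ x + δ) ∂(μ : Measure A) := by simp
          _ ≤ ∫ y : A, ℓ (y : E) ∂(μ : Measure A) :=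
            integral_mono_ae (integrable_const _) (integrable_lin hbdd ℓ) hae
      linarith [hℓx ▸ h2]
    · -- proper splitting
      set t : ℝ := ((μ : Measure A) B).toReal with htdef
      have hBlt : (μ : Measure A) B < ⊤ := lt_of_le_of_lt (prob_le_one) (by norm_num)
      have hBclt : (μ : Measure A) Bᶜ < ⊤ := lt_of_le_of_lt (prob_le_one) (by norm_num)
      have hadd : (μ : Measure A) B + (μ : Measure A) Bᶜ = 1 := by
        rw [measure_add_measure_compl hmB]; exact measure_univ
      have htpos : 0 < t := ENNReal.toReal_pos hB0 hBlt.ne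
      have hts : t + ((μ : Measure A) Bᶜ).toReal = 1 := by
        rw [htdef, ← ENNReal.toReal_add hBlt.ne hBclt.ne, hadd]; simp
      have htpos' : 0 < ((μ : Measure A) Bᶜ).toReal := ENNReal.toReal_pos hBc0 hBclt.ne
      have ht1 : t < 1 := by linarith
      have hm1 : IsProbabilityMeasure ((μ : Measure A)[|B]) :=
        ProbabilityTheory.cond_isProbabilityMeasure hB0
      have hm2 : IsProbabilityMeasure ((μ : Measure A)[|Bᶜ]) :=
        ProbabilityTheory.cond_isProbabilityMeasure hBc0
      set P₁ : ProbabilityMeasure A := ⟨(μ : Measure A)[|B], hm1⟩ with hP₁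
      set P₂ : ProbabilityMeasure A := ⟨(μ : Measure A)[|Bᶜ], hm2⟩ with hP₂
      set b₁ := bar P₁ with hb₁def
      set b₂ := bar P₂ with hb₂def
      have hb₁A : b₁ ∈ A := bar_mem bar hconv hclosed hbdd hbar P₁
      have hb₂A : b₂ ∈ A := bar_mem bar hconv hclosed hbdd hbar P₂
      -- x is the proper convex combination of b₁ and b₂
      have hcomb : t • b₁ + (1 - t) • b₂ = x := by
        apply dual_eq
        intro ℓ₀
        have hint : Integrable (fun y : A => ℓ₀ (y : E)) (μ : Measure A) :=
          integrable_lin hbdd ℓ₀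
        have e₁ : t * ℓ₀ b₁ = ∫ y in B, ℓ₀ (y : E) ∂(μ : Measure A) := by
          rw [hb₁def, hbar P₁ ℓ₀]
          show t * ∫ y : A, ℓ₀ (y:E) ∂((μ : Measure A)[|B]) = _
          rw [integral_cond, ← htdef, ← mul_assoc, mul_inv_cancel₀ htpos.ne', one_mul]
        have e₂ : (1 - t) * ℓ₀ b₂ = ∫ y in Bᶜ, ℓ₀ (y : E) ∂(μ : Measure A) := by
          rw [hb₂def, hbar P₂ ℓ₀]
          show (1 - t) * ∫ y : A, ℓ₀ (y:E) ∂((μ : Measure A)[|Bᶜ]) = _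
          rw [integral_cond,
            show ((μ : Measure A) Bᶜ).toReal = 1 - t by linarith,
            ← mul_assoc, mul_inv_cancel₀ (by linarith : (1:ℝ) - t ≠ 0), one_mul]
        have esum : ∫ y in B, ℓ₀ (y : E) ∂(μ : Measure A)
            + ∫ y in Bᶜ, ℓ₀ (y : E) ∂(μ : Measure A) = ℓ₀ x := by
          rw [integral_add_compl hmB hint, ← hbx, hbar μ ℓ₀]
        have hsplit : ℓ₀ (t • b₁ + (1 - t) • b₂) = t * ℓ₀ b₁ + (1 - t) * ℓ₀ b₂ := by
          rw [map_add, ℓ₀.map_smul, ℓ₀.map_smul, smul_eq_mul, smul_eq_mul]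
        rw [hsplit]
        linarith [e₁, e₂, esum]
      have hseg : x ∈ openSegment ℝ b₁ b₂ :=
        ⟨t, 1 - t, htpos, by linarith, by ring, hcomb⟩
      have hb₁x : b₁ = x := hx.2 hb₁A hb₂A hseg
      -- but the barycenter of P₁ is in the slab, contradiction
      have haeB : ∀ᵐ (y : A) ∂((μ : Measure A)[|B]), ℓ x + δ ≤ ℓ (y : E) := by
        have hnull : ((μ : Measure A)[|B]) Bᶜ = 0 := by
          rw [ProbabilityTheory.cond_apply hmB]
          simp
        refine ae_iff.2 (measure_mono_null ?_ hnull)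
        intro y hy
        simp only [mem_setOf_eq, not_le] at hy
        simp only [mem_compl_iff, hBdef, mem_setOf_eq, not_le]
        exact hy
      have hintP₁ : Integrable (fun y : A => ℓ (y : E)) ((μ : Measure A)[|B]) :=
        integrable_lin hbdd ℓ
      have h3 : ℓ x + δ ≤ ℓ b₁ := by
        have := integral_mono_ae (μ := ((μ : Measure A)[|B])) (integrable_const (ℓ x + δ))
          hintP₁ haeB
        calc ℓ x + δ = ∫ _ : A, (ℓ x + δ) ∂((μ : Measure A)[|B]) := by simp
          _ ≤ ∫ y : A, ℓ (y : E) ∂((μ : Measure A)[|B]) := this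
          _ = ℓ b₁ := (hbar P₁ ℓ).symm
      rw [hb₁x] at h3
      linarith
  -- Step 2: use Lindelöf to cover the complement of {x} by countably many such sets
  have hUopen : ∀ ℓ : E →L[ℝ] ℝ, IsOpen {y : A | ℓ (y : E) ≠ ℓ x} := by
    intro ℓ
    exact isOpen_compl_singleton.preimage (ℓ.continuous.comp continuous_subtype_val)
  obtain ⟨T, hTc, hTeq⟩ := TopologicalSpace.isOpen_iUnion_countable
    (fun ℓ : E →L[ℝ] ℝ => {y : A | ℓ (y : E) ≠ ℓ x}) hUopen
  have hcover : {y : A | (y : E) ≠ x} = ⋃ ℓ ∈ T, {y : A | ℓ (y : E) ≠ ℓ x} := by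
    rw [hTeq]
    ext y
    simp only [mem_setOf_eq, mem_iUnion]
    constructor
    · intro hy
      obtain ⟨ℓ, hℓ⟩ := SeparatingDual.exists_separating_of_ne (R := ℝ) hy
      exact ⟨ℓ, hℓ⟩
    · rintro ⟨ℓ, hℓ⟩ rfl
      exact hℓ rfl
  rw [hcover]
  refine (measure_biUnion_null_iff hTc).2 (fun ℓ _ => ?_)
  have hsub : {y : A | ℓ (y : E) ≠ ℓ x} ⊆
      {y : A | ℓ x < ℓ (y : E)} ∪ {y : A | (-ℓ) x < (-ℓ) (y : E)} := by
    intro y hy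
    rcases lt_or_gt_of_ne hy with h | h
    · right
      show (-ℓ) x < (-ℓ) (y : E)
      simpa using h
    · left
      exact h
  exact measure_mono_null hsub (measure_union_null (key ℓ) (key (-ℓ)))


private lemma le_of_pos_add {a b : ℝ} (h : ∀ ε : ℝ, 0 < ε → a ≤ b + ε) : a ≤ b := by
  by_contra hab
  push_neg at hab
  have := h ((a - b)/2) (by linarith)
  linarith

variable (A) in
/-- The measure-theoretic convex envelope: infimum of integrals of `f` over probability
measures on `A` with prescribed barycenter. -/
private noncomputable def coEnv (f : E → ℝ) (z : E) : ℝ :=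
  sInf {r : ℝ | ∃ μ : ProbabilityMeasure A, bar μ = z ∧ r = ∫ y : A, f ↑y ∂(μ : Measure A)}

variable {f : E → ℝ} {M : ℝ}

private lemma coEnv_bddBelow (hfc : ContinuousOn f A) (hM : ∀ y ∈ A, |f y| ≤ M) (z : E) :
    BddBelow {r : ℝ | ∃ μ : ProbabilityMeasure A, bar μ = z ∧
      r = ∫ y : A, f ↑y ∂(μ : Measure A)} := by
  refine ⟨-M, ?_⟩
  rintro r ⟨μ, -, rfl⟩
  have h1 : ∫ (_ : A), (-M) ∂(μ : Measure A) ≤ ∫ y : A, f ↑y ∂(μ : Measure A) :=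
    integral_mono (integrable_const _) (integrable_of_bound hfc hM)
      (fun y => (abs_le.1 (hM _ y.2)).1)
  simpa using h1

private lemma integral_restrict_dirac (hfc : ContinuousOn f A) (a : A) :
    ∫ y : A, f ↑y ∂(Measure.dirac a) = f ↑a :=
  integral_dirac' (fun y : A => f ↑y) a hfc.restrict.stronglyMeasurable

private lemma coEnv_nonempty
    (hbar : ∀ (μ : ProbabilityMeasure A) (ℓ : E →L[ℝ] ℝ),
      ℓ (bar μ) = ∫ x : A, ℓ (x : E) ∂(μ : Measure A))
    {z : E} (hz : z ∈ A) :
    Set.Nonempty {r : ℝ | ∃ μ : ProbabilityMeasure A, bar μ = z ∧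
      r = ∫ y : A, f ↑y ∂(μ : Measure A)} :=
  ⟨∫ y : A, f ↑y ∂(Measure.dirac (⟨z, hz⟩ : A)),
    ⟨⟨Measure.dirac (⟨z, hz⟩ : A), inferInstance⟩, bar_dirac bar hbar ⟨z, hz⟩, rfl⟩⟩

private lemma coEnv_le
    (hbar : ∀ (μ : ProbabilityMeasure A) (ℓ : E →L[ℝ] ℝ),
      ℓ (bar μ) = ∫ x : A, ℓ (x : E) ∂(μ : Measure A))
    (hfc : ContinuousOn f A) (hM : ∀ y ∈ A, |f y| ≤ M) :
    ∀ z ∈ A, coEnv A bar f z ≤ f z := by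
  intro z hz
  refine csInf_le (coEnv_bddBelow bar hfc hM z) ?_
  exact ⟨⟨Measure.dirac (⟨z, hz⟩ : A), inferInstance⟩, bar_dirac bar hbar ⟨z, hz⟩,
    (integral_restrict_dirac hfc ⟨z, hz⟩).symm⟩

private lemma integral_combo {μ₁ μ₂ : ProbabilityMeasure A} {a b : ℝ}
    (ha : 0 ≤ a) (hb : 0 ≤ b) {h : E → ℝ} (hc : ContinuousOn h A) {M' : ℝ}
    (hM : ∀ y ∈ A, |h y| ≤ M') :
    ∫ y : A, h ↑y ∂(ENNReal.ofReal a • (μ₁ : Measure A) + ENNReal.ofReal b • (μ₂ : Measure A)) =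
      a * ∫ y : A, h ↑y ∂(μ₁ : Measure A) + b * ∫ y : A, h ↑y ∂(μ₂ : Measure A) := by
  have hi₁ : Integrable (fun y : A => h ↑y) (μ₁ : Measure A) := integrable_of_bound hc hM
  have hi₂ : Integrable (fun y : A => h ↑y) (μ₂ : Measure A) := integrable_of_bound hc hM
  rw [integral_add_measure (hi₁.smul_measure ENNReal.ofReal_ne_top)
      (hi₂.smul_measure ENNReal.ofReal_ne_top),
    integral_smul_measure, integral_smul_measure, ENNReal.toReal_ofReal ha,
    ENNReal.toReal_ofReal hb, smul_eq_mul, smul_eq_mul]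

private lemma coEnv_convexOn (hconv : Convex ℝ A) (hbdd : Bornology.IsVonNBounded ℝ A)
    (hbar : ∀ (μ : ProbabilityMeasure A) (ℓ : E →L[ℝ] ℝ),
      ℓ (bar μ) = ∫ x : A, ℓ (x : E) ∂(μ : Measure A))
    (hfc : ContinuousOn f A) (hM : ∀ y ∈ A, |f y| ≤ M) :
    ConvexOn ℝ A (coEnv A bar f) := by
  refine ⟨hconv, fun z₁ hz₁ z₂ hz₂ a b ha hb hab => ?_⟩
  simp only [smul_eq_mul]
  refine le_of_pos_add (fun ε hε => ?_)
  obtain ⟨r₁, ⟨μ₁, hbar₁, hr₁⟩, hlt₁⟩ :=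
    Real.lt_sInf_add_pos (coEnv_nonempty bar hbar hz₁) (half_pos hε)
  obtain ⟨r₂, ⟨μ₂, hbar₂, hr₂⟩, hlt₂⟩ :=
    Real.lt_sInf_add_pos (coEnv_nonempty bar hbar hz₂) (half_pos hε)
  set νm : Measure A := ENNReal.ofReal a • (μ₁ : Measure A) + ENNReal.ofReal b • (μ₂ : Measure A)
    with hνm
  have hνP : IsProbabilityMeasure νm := by
    constructor
    simp [hνm, Measure.smul_apply, smul_eq_mul, measure_univ, mul_one,
      ← ENNReal.ofReal_add ha hb, hab]
  set ν : ProbabilityMeasure A := ⟨νm, hνP⟩ with hν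
  have hbarν : bar ν = a • z₁ + b • z₂ := by
    apply dual_eq
    intro ℓ
    obtain ⟨C, hC⟩ := lin_bound hbdd ℓ
    rw [hbar ν ℓ]
    show ∫ y : A, ℓ (y : E) ∂νm = _
    rw [hνm, integral_combo ha hb ℓ.continuous.continuousOn hC,
      ← hbar μ₁ ℓ, ← hbar μ₂ ℓ, hbar₁, hbar₂, map_add, ℓ.map_smul, ℓ.map_smul,
      smul_eq_mul, smul_eq_mul]
  have hmem : a * r₁ + b * r₂ ∈ {r : ℝ | ∃ μ : ProbabilityMeasure A,
      bar μ = a • z₁ + b • z₂ ∧ r = ∫ y : A, f ↑y ∂(μ : Measure A)} := by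
    refine ⟨ν, hbarν, ?_⟩
    show _ = ∫ y : A, f ↑y ∂νm
    rw [hνm, integral_combo ha hb hfc hM, ← hr₁, ← hr₂]
  have h1 : coEnv A bar f (a • z₁ + b • z₂) ≤ a * r₁ + b * r₂ :=
    csInf_le (coEnv_bddBelow bar hfc hM _) hmem
  have h2 : a * r₁ ≤ a * (coEnv A bar f z₁ + ε/2) := mul_le_mul_of_nonneg_left hlt₁.le ha
  have h3 : b * r₂ ≤ b * (coEnv A bar f z₂ + ε/2) := mul_le_mul_of_nonneg_left hlt₂.le hb
  nlinarith [h1, h2, h3]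

private lemma coEnv_lscOn [PolishSpace A] (hbdd : Bornology.IsVonNBounded ℝ A)
    (hbar : ∀ (μ : ProbabilityMeasure A) (ℓ : E →L[ℝ] ℝ),
      ℓ (bar μ) = ∫ x : A, ℓ (x : E) ∂(μ : Measure A))
    (hmu : ∀ V : Set E, IsCompact V → IsCompact (bar ⁻¹' V))
    (hfc : ContinuousOn f A) (hM : ∀ y ∈ A, |f y| ≤ M) :
    LowerSemicontinuousOn (coEnv A bar f) A := by
  intro x₀ hx₀ r hr
  by_contra hcon
  rw [Filter.not_eventually] at hcon
  set xhat : A := ⟨x₀, hx₀⟩ with hxhatdef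
  rw [← map_nhds_subtype_val xhat, Filter.frequently_map] at hcon
  obtain ⟨ys, hys_tendsto, hys⟩ := exists_seq_forall_of_frequently hcon
  have hysr : ∀ n, coEnv A bar f ↑(ys n) ≤ r := by
    intro n
    have := hys n
    rw [not_lt] at this
    exact this
  have hchoice : ∀ n : ℕ, ∃ μ : ProbabilityMeasure A, bar μ = ↑(ys n) ∧
      ∫ y : A, f ↑y ∂(μ : Measure A) < r + ((n : ℝ) + 1)⁻¹ := by
    intro n
    obtain ⟨rn, ⟨μn, hbarn, hrn⟩, hlt⟩ :=
      Real.lt_sInf_add_pos (coEnv_nonempty bar hbar (ys n).2) (ε := ((n : ℝ) + 1)⁻¹)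
        (by positivity)
    refine ⟨μn, by simpa using hbarn, ?_⟩
    rw [← hrn]
    calc rn < coEnv A bar f ↑(ys n) + ((n : ℝ) + 1)⁻¹ := hlt
      _ ≤ r + ((n : ℝ) + 1)⁻¹ := by linarith [hysr n]
  choose μs hμbar hμint using hchoice
  -- compact preimage
  set V : Set E := Subtype.val '' (insert xhat (Set.range ys)) with hV
  have hVcomp : IsCompact V := (hys_tendsto.isCompact_insert_range).image continuous_subtype_val
  have hK : IsCompact (bar ⁻¹' V) := hmu V hVcomp
  set F : Filter (ProbabilityMeasure A) := Filter.map μs Filter.atTop with hF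
  have hFK : F ≤ Filter.principal (bar ⁻¹' V) := by
    rw [Filter.le_principal_iff, hF, Filter.mem_map]
    refine Filter.univ_mem' (fun n => ?_)
    show bar (μs n) ∈ V
    rw [hμbar n]
    exact Set.mem_image_of_mem _ (Set.mem_insert_of_mem _ (Set.mem_range_self n))
  obtain ⟨nulim, -, hclust⟩ := hK hFK
  haveI hGne : (𝓝 nulim ⊓ F).NeBot := hclust
  have htendG : Filter.Tendsto id (𝓝 nulim ⊓ F) (𝓝 nulim) := Filter.tendsto_id'.2 inf_le_left
  have hIntTend : ∀ h : BoundedContinuousFunction A ℝ,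
      Filter.Tendsto (fun ν : ProbabilityMeasure A => ∫ y, h y ∂(ν : Measure A))
        (𝓝 nulim ⊓ F) (𝓝 (∫ y, h y ∂(nulim : Measure A))) := by
    intro h
    exact ProbabilityMeasure.tendsto_iff_forall_integral_tendsto.1 htendG h
  -- the barycenter of the cluster measure is x₀
  have hbarnulim : bar nulim = x₀ := by
    apply dual_eq
    intro ℓ
    obtain ⟨C, hC⟩ := lin_bound hbdd ℓ
    set lbcf : BoundedContinuousFunction A ℝ :=
      BoundedContinuousFunction.ofNormedAddCommGroup (fun y : A => ℓ ↑y)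
        (ℓ.continuous.continuousOn.restrict) C
        (fun y => by simpa [Real.norm_eq_abs] using hC _ y.2) with hlbcf
    have h1 : Filter.Tendsto (fun ν : ProbabilityMeasure A => ∫ y, lbcf y ∂(ν : Measure A))
        (𝓝 nulim ⊓ F) (𝓝 (∫ y, lbcf y ∂(nulim : Measure A))) := hIntTend lbcf
    have h2 : Filter.Tendsto (fun ν : ProbabilityMeasure A => ∫ y, lbcf y ∂(ν : Measure A))
        (𝓝 nulim ⊓ F) (𝓝 (ℓ x₀)) := by
      refine Filter.Tendsto.mono_left ?_ inf_le_right
      rw [hF, Filter.tendsto_map'_iff]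
      have heq : ((fun ν : ProbabilityMeasure A => ∫ y, lbcf y ∂(ν : Measure A)) ∘ μs)
          = fun n => ℓ ((ys n : E)) := by
        funext n
        show ∫ y : A, ℓ (y : E) ∂(μs n : Measure A) = _
        rw [← hbar (μs n) ℓ, hμbar n]
      rw [heq]
      have hcoe : Filter.Tendsto (fun n => ((ys n : E))) Filter.atTop (𝓝 x₀) :=
        (continuous_subtype_val.tendsto xhat).comp hys_tendsto
      exact (ℓ.continuous.tendsto x₀).comp hcoe
    have h3 := tendsto_nhds_unique h1 h2
    rw [hbar nulim ℓ]
    exact h3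
  -- the limiting integral is at most r
  set fbcf : BoundedContinuousFunction A ℝ :=
    BoundedContinuousFunction.ofNormedAddCommGroup (fun y : A => f ↑y)
      hfc.restrict M (fun y => by simpa [Real.norm_eq_abs] using hM _ y.2) with hfbcf
  have hlim : ∫ y, fbcf y ∂(nulim : Measure A) ≤ r := by
    refine le_of_pos_add (fun ε hε => ?_)
    have htend0 : Filter.Tendsto (fun n : ℕ => ((n : ℝ) + 1)⁻¹) Filter.atTop (𝓝 0) := by
      simpa [one_div] using tendsto_one_div_add_atTop_nhds_zero_nat (𝕜 := ℝ)
    have h1 : ∀ᶠ (n : ℕ) in Filter.atTop, ((n : ℝ) + 1)⁻¹ < ε :=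
      htend0.eventually_lt_const hε
    have hev : ∀ᶠ (ν : ProbabilityMeasure A) in 𝓝 nulim ⊓ F,
        (∫ y, fbcf y ∂(ν : Measure A)) ≤ r + ε := by
      refine Filter.Eventually.filter_mono inf_le_right ?_
      rw [hF, Filter.eventually_map]
      filter_upwards [h1] with n hn
      show ∫ y : A, f ↑y ∂(μs n : Measure A) ≤ r + ε
      linarith [hμint n]
    exact le_of_tendsto (hIntTend fbcf) hev
  have hfinal : coEnv A bar f x₀ ≤ r := by
    refine le_trans (csInf_le (coEnv_bddBelow bar hfc hM x₀) ⟨nulim, hbarnulim, rfl⟩) ?_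
    exact hlim
  linarith

private lemma coEnv_ge_extreme [PolishSpace A]
    (hconv : Convex ℝ A) (hclosed : IsClosed A) (hbdd : Bornology.IsVonNBounded ℝ A)
    (hbar : ∀ (μ : ProbabilityMeasure A) (ℓ : E →L[ℝ] ℝ),
      ℓ (bar μ) = ∫ x : A, ℓ (x : E) ∂(μ : Measure A))
    (hfc : ContinuousOn f A)
    {x : E} (hx : x ∈ A.extremePoints ℝ) :
    f x ≤ coEnv A bar f x := by
  refine le_csInf (coEnv_nonempty bar hbar hx.1) ?_
  rintro r ⟨μ, hbarμ, rfl⟩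
  have hnull := dirac_of_extreme bar hconv hclosed hbdd hbar hx μ hbarμ
  have hae : (fun y : A => f ↑y) =ᵐ[(μ : Measure A)] fun _ => f x := by
    rw [Filter.EventuallyEq, ae_iff]
    refine measure_mono_null ?_ hnull
    intro y hy
    simp only [Set.mem_setOf_eq] at hy ⊢
    intro hyx
    exact hy (by rw [hyx])
  rw [integral_congr_ae hae, integral_const]
  simp

end Aux

/-- For a convex `μ`-compact set `A`, the set of extreme points of `A` equals the
intersection, over all concave continuous bounded functions `f` on `A`, of the sets
`B_f = { x ∈ A : f x = co̅f x }`, where `co̅f` is the convex closure of `f`. -/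
theorem stmt_17 {E : Type*} [AddCommGroup E] [Module ℝ E] [TopologicalSpace E]
    [IsTopologicalAddGroup E] [ContinuousSMul ℝ E] [LocallyConvexSpace ℝ E]
    [T2Space E] [MeasurableSpace E] [BorelSpace E]
    (A : Set E) (hconv : Convex ℝ A) (hclosed : IsClosed A)
    (hbdd : Bornology.IsVonNBounded ℝ A) [PolishSpace A]
    (bar : ProbabilityMeasure A → E)
    (hbar : ∀ (μ : ProbabilityMeasure A) (ℓ : E →L[ℝ] ℝ),
      ℓ (bar μ) = ∫ x : A, ℓ (x : E) ∂(μ : Measure A))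
    (hmu : ∀ V : Set E, IsCompact V → IsCompact (bar ⁻¹' V)) :
    A.extremePoints ℝ =
      ⋂ f ∈ {f : E → ℝ | ContinuousOn f A ∧ ConcaveOn ℝ A f ∧
          ∃ M, ∀ x ∈ A, |f x| ≤ M},
        {x | x ∈ A ∧ f x = sSup {r : ℝ | ∃ g : E → ℝ,
          LowerSemicontinuousOn g A ∧ ConvexOn ℝ A g ∧
          (∀ y ∈ A, g y ≤ f y) ∧ r = g x}} := by
  ext x
  simp only [Set.mem_iInter, Set.mem_setOf_eq]
  constructor
  · -- extreme points are in every B_f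
    intro hx f hf
    obtain ⟨hfc, -, M, hM⟩ := hf
    refine ⟨hx.1, ?_⟩
    have hgval : coEnv A bar f x = f x :=
      le_antisymm (coEnv_le bar hbar hfc hM x hx.1)
        (coEnv_ge_extreme bar hconv hclosed hbdd hbar hfc hx)
    have hgmem : f x ∈ {r : ℝ | ∃ g : E → ℝ,
        LowerSemicontinuousOn g A ∧ ConvexOn ℝ A g ∧
        (∀ y ∈ A, g y ≤ f y) ∧ r = g x} :=
      ⟨coEnv A bar f, coEnv_lscOn bar hbdd hbar hmu hfc hM,
        coEnv_convexOn bar hconv hbdd hbar hfc hM,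
        coEnv_le bar hbar hfc hM, hgval.symm⟩
    have hub : ∀ r ∈ {r : ℝ | ∃ g : E → ℝ,
        LowerSemicontinuousOn g A ∧ ConvexOn ℝ A g ∧
        (∀ y ∈ A, g y ≤ f y) ∧ r = g x}, r ≤ f x := by
      rintro r ⟨g, -, -, hgle, rfl⟩
      exact hgle x hx.1
    exact (le_antisymm (csSup_le ⟨f x, hgmem⟩ hub) (le_csSup ⟨f x, hub⟩ hgmem)).symm
  · -- conversely
    intro hx
    have h0 := hx (fun _ => 0) ⟨continuousOn_const, concaveOn_const 0 hconv, 0, by simp⟩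
    have hxA : x ∈ A := h0.1
    refine ⟨hxA, ?_⟩
    intro x₁ hx₁ x₂ hx₂ hseg
    obtain ⟨a, b, ha, hb, hab, hcomb⟩ := hseg
    have heq : x₁ = x₂ := by
      by_contra hne
      obtain ⟨ℓ, hℓ⟩ := SeparatingDual.exists_separating_of_ne (R := ℝ) hne
      obtain ⟨C, hC⟩ := lin_bound hbdd ℓ
      set f : E → ℝ := fun y => -|ℓ y - ℓ x| with hfdef
      have hfcont : ContinuousOn f A :=
        (Continuous.neg ((ℓ.continuous.sub continuous_const).abs)).continuousOn
      have hfconc : ConcaveOn ℝ A f := by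
        refine ⟨hconv, fun z₁ hz₁ z₂ hz₂ p q hp hq hpq => ?_⟩
        simp only [hfdef, smul_eq_mul]
        have hlin : ℓ (p • z₁ + q • z₂) - ℓ x
            = p * (ℓ z₁ - ℓ x) + q * (ℓ z₂ - ℓ x) := by
          rw [map_add, ℓ.map_smul, ℓ.map_smul, smul_eq_mul, smul_eq_mul]
          linear_combination (ℓ x) * hpq
        have habs : |ℓ (p • z₁ + q • z₂) - ℓ x| ≤ p * |ℓ z₁ - ℓ x| + q * |ℓ z₂ - ℓ x| := by
          rw [hlin]
          calc |p * (ℓ z₁ - ℓ x) + q * (ℓ z₂ - ℓ x)|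
              ≤ |p * (ℓ z₁ - ℓ x)| + |q * (ℓ z₂ - ℓ x)| := abs_add_le _ _
            _ = p * |ℓ z₁ - ℓ x| + q * |ℓ z₂ - ℓ x| := by
                rw [abs_mul, abs_mul, abs_of_nonneg hp, abs_of_nonneg hq]
        linarith
      have hfbdd : ∀ y ∈ A, |f y| ≤ C + |ℓ x| := by
        intro y hy
        rw [hfdef]
        simp only [abs_neg, abs_abs]
        calc |ℓ y - ℓ x| ≤ |ℓ y| + |ℓ x| := abs_sub _ _
          _ ≤ C + |ℓ x| := by linarith [hC y hy]
      have hmem := hx f ⟨hfcont, hfconc, C + |ℓ x|, hfbdd⟩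
      have hfx : f x = 0 := by simp [hfdef]
      set d := ℓ x₁ - ℓ x₂ with hd
      have hd0 : d ≠ 0 := sub_ne_zero.2 hℓ
      have hℓx : ℓ x = a * ℓ x₁ + b * ℓ x₂ := by
        rw [← hcomb, map_add, ℓ.map_smul, ℓ.map_smul, smul_eq_mul, smul_eq_mul]
      have hfx₁ : f x₁ = -(b * |d|) := by
        rw [hfdef]
        have h1 : ℓ x₁ - ℓ x = b * d := by
          rw [hℓx, hd, show b = 1 - a from by linarith]; ring
        simp only
        rw [h1, abs_mul, abs_of_pos hb]
      have hfx₂ : f x₂ = -(a * |d|) := by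
        rw [hfdef]
        have h1 : ℓ x₂ - ℓ x = -(a * d) := by
          rw [hℓx, hd, show b = 1 - a from by linarith]; ring
        simp only
        rw [h1, abs_neg, abs_mul, abs_of_pos ha]
      set S := {r : ℝ | ∃ g : E → ℝ,
        LowerSemicontinuousOn g A ∧ ConvexOn ℝ A g ∧
        (∀ y ∈ A, g y ≤ f y) ∧ r = g x} with hS
      have hbound : ∀ r ∈ S, r ≤ -(2 * a * b * |d|) := by
        rintro r ⟨g, -, hgcvx, hgle, rfl⟩
        have h1 := hgcvx.2 hx₁ hx₂ ha.le hb.le hab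
        rw [hcomb] at h1
        simp only [smul_eq_mul] at h1
        have h2 : a * g x₁ ≤ a * f x₁ := mul_le_mul_of_nonneg_left (hgle x₁ hx₁) ha.le
        have h3 : b * g x₂ ≤ b * f x₂ := mul_le_mul_of_nonneg_left (hgle x₂ hx₂) hb.le
        rw [hfx₁] at h2
        rw [hfx₂] at h3
        nlinarith [h1, h2, h3]
      have hmemc : -(C + |ℓ x|) ∈ S := by
        refine ⟨fun _ => -(C + |ℓ x|),
          (lowerSemicontinuous_const).lowerSemicontinuousOn A,
          convexOn_const _ hconv, fun y hy => ?_, rfl⟩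
        have := hfbdd y hy
        exact (abs_le.1 this).1.trans (le_refl _) |>.trans (le_of_eq rfl) |>.trans_eq rfl
      have hsup : sSup S ≤ -(2 * a * b * |d|) := csSup_le ⟨_, hmemc⟩ hbound
      have habs : 0 < |d| := abs_pos.2 hd0
      have h4 : f x = sSup S := hmem.2
      rw [hfx] at h4
      nlinarith [mul_pos (mul_pos ha hb) habs, hsup, h4]
    subst heq
    rw [← add_smul, hab, one_smul] at hcomb
    exact hcomb
end

section
/- For every p > 1, the map sending a point of the simplex Δ_p = { x ∈ l^p : x ≥ 0, Σ xᵢ ≤ 1 } to the unique probability measure on extr Δ_p with that barycenter is not continuous at 0: the points x_n with first n coordinates equal to 1/n and the rest 0 converge to 0 in l^p, but the corresponding representing measures (the uniform measure on {e₁,…,e_n}) do not converge weakly to the Dirac measure at 0. -/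
open MeasureTheory Filter
open scoped ENNReal

/-- In the simplex `Δ_p` (`p > 1`), the points `x_n = (1/n, …, 1/n, 0, …)` converge
to `0`, but the corresponding representing measures (uniform on `{e₁, …, e_n}`)
do not converge weakly to the Dirac measure at `0`. -/
theorem stmt_18 (p : ℝ≥0∞) [Fact (1 ≤ p)] (hp : 1 < p) (hp' : p ≠ ⊤) :
    letI : MeasurableSpace (lp (fun _ : ℕ => ℝ) p) := borel _
    (Tendsto (fun n : ℕ => (n : ℝ)⁻¹ • ∑ i ∈ Finset.range n, lp.single p i (1 : ℝ))
        atTop (nhds 0)) ∧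
    ¬ ∀ f : lp (fun _ : ℕ => ℝ) p → ℝ, Continuous f → (∃ M, ∀ y, |f y| ≤ M) →
        Tendsto (fun n : ℕ => ∫ y, f y
            ∂((n : ℝ≥0∞)⁻¹ • ∑ i ∈ Finset.range n, Measure.dirac (lp.single p i (1 : ℝ))))
          atTop (nhds (f 0)) := by
  letI : MeasurableSpace (lp (fun _ : ℕ => ℝ) p) := borel _
  haveI : BorelSpace (lp (fun _ : ℕ => ℝ) p) := ⟨rfl⟩
  have hq : 1 < p.toReal := by
    rw [← ENNReal.toReal_one]
    exact ENNReal.toReal_strict_mono hp' hp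
  have hq0 : 0 < p.toReal := by linarith
  set q := p.toReal
  constructor
  · -- convergence of the points
    rw [tendsto_zero_iff_norm_tendsto_zero]
    have hnorm : ∀ n : ℕ, 1 ≤ n →
        ‖(n : ℝ)⁻¹ • ∑ i ∈ Finset.range n, lp.single p i (1 : ℝ)‖
          = (n : ℝ) ^ (-(1 - q⁻¹)) := by
      intro n hn
      have hn0 : (0 : ℝ) < n := by exact_mod_cast hn
      have hS : ‖∑ i ∈ Finset.range n, lp.single p i (1 : ℝ)‖ ^ q = (n : ℝ) := by
        have := lp.norm_sum_single (E := fun _ : ℕ => ℝ) (p := p) hq0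
          (fun _ => (1 : ℝ)) (Finset.range n)
        simpa using this
      have hS' : ‖∑ i ∈ Finset.range n, lp.single p i (1 : ℝ)‖ = (n : ℝ) ^ q⁻¹ := by
        rw [← hS, Real.rpow_rpow_inv (norm_nonneg _) hq0.ne']
      rw [norm_smul, hS', norm_inv, Real.norm_natCast]
      rw [neg_sub, Real.rpow_sub hn0, Real.rpow_one]
      ring
    have hlim : Tendsto (fun n : ℕ => (n : ℝ) ^ (-(1 - q⁻¹))) atTop (nhds 0) := by
      have h1 : (0 : ℝ) < 1 - q⁻¹ := by
        have : q⁻¹ < 1 := by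
          rw [inv_lt_one_iff₀]; right; exact hq
        linarith
      exact (tendsto_rpow_neg_atTop h1).comp tendsto_natCast_atTop_atTop
    refine hlim.congr' ?_
    filter_upwards [eventually_ge_atTop 1] with n hn
    exact (hnorm n hn).symm
  · -- failure of weak convergence
    intro h
    set f : lp (fun _ : ℕ => ℝ) p → ℝ := fun y => min ‖y‖ 1 with hf
    have hfc : Continuous f := continuous_norm.min continuous_const
    have hfb : ∃ M, ∀ y, |f y| ≤ M := by
      refine ⟨1, fun y => ?_⟩
      rw [abs_le]
      constructor
      · have : (0 : ℝ) ≤ min ‖y‖ 1 := le_min (norm_nonneg _) zero_le_one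
        linarith
      · exact min_le_right _ _
    have hzero : f 0 = 0 := by simp [hf]
    have hlim := h f hfc hfb
    rw [hzero] at hlim
    have hint : ∀ n : ℕ, 1 ≤ n → (∫ y, f y
        ∂((n : ℝ≥0∞)⁻¹ • ∑ i ∈ Finset.range n, Measure.dirac (lp.single p i (1 : ℝ)))) = 1 := by
      intro n hn
      have hn0 : (0 : ℝ) < n := by exact_mod_cast hn
      have hmeas : StronglyMeasurable f := hfc.stronglyMeasurable
      have hfe : ∀ i : ℕ, f (lp.single p i (1 : ℝ)) = 1 := by
        intro i
        have : ‖(lp.single p i (1 : ℝ) : lp (fun _ : ℕ => ℝ) p)‖ = 1 := by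
          have := lp.norm_single (E := fun _ : ℕ => ℝ) (p := p) (zero_lt_one.trans hp) i (1 : ℝ)
          simpa using this
        simp [hf, this]
      rw [integral_smul_measure, integral_finset_sum_measure
        (fun i _ => by
          refine (integrable_const (1 : ℝ)).mono' hmeas.aestronglyMeasurable ?_
          filter_upwards with y
          have h0 : (0 : ℝ) ≤ f y := le_min (norm_nonneg _) zero_le_one
          rw [Real.norm_eq_abs, abs_of_nonneg h0]
          exact min_le_right _ _)]
      simp only [fun i => integral_dirac' f (lp.single p i (1 : ℝ)) hmeas, hfe]
      rw [Finset.sum_const, Finset.card_range, nsmul_eq_mul, mul_one]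
      rw [ENNReal.toReal_inv]
      simp [smul_eq_mul, inv_mul_cancel₀ hn0.ne']
    have hone : Tendsto (fun _ : ℕ => (1 : ℝ)) atTop (nhds 0) := by
      refine hlim.congr' ?_
      filter_upwards [eventually_ge_atTop 1] with n hn
      exact hint n hn
    have := tendsto_nhds_unique hone tendsto_const_nhds
    norm_num at this
end

section
/- The finite-dimensional simplex { x ∈ ℝ^N : x ≥ 0, Σᵢ xᵢ ≤ 1 } is stable: the map (x, y) ↦ (x + y)/2 from the simplex × simplex to the simplex is an open map. -/
-- rescale helper: move excess mass from x1 to y1 proportionally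
lemma aux_rescale (N : ℕ) (x1 y1 : Fin N → ℝ)
    (hx0 : ∀ i, 0 ≤ x1 i) (hy0 : ∀ i, 0 ≤ y1 i)
    (hsum : (∑ i, x1 i) + (∑ i, y1 i) ≤ 2) (hT : 1 < ∑ i, x1 i) :
    ∃ x' y' : Fin N → ℝ, (∀ i, 0 ≤ x' i) ∧ (∑ i, x' i) ≤ 1 ∧
      (∀ i, 0 ≤ y' i) ∧ (∑ i, y' i) ≤ 1 ∧
      (∀ i, x' i + y' i = x1 i + y1 i) ∧
      (∀ i, |x' i - x1 i| ≤ (∑ i, x1 i) - 1) ∧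
      (∀ i, |y' i - y1 i| ≤ (∑ i, x1 i) - 1) := by
  set T := ∑ i, x1 i with hTdef
  have hT0 : 0 < T := lt_trans one_pos hT
  have hcoord : ∀ i, x1 i ≤ T := by
    intro i
    exact Finset.single_le_sum (fun j _ => hx0 j) (Finset.mem_univ i)
  refine ⟨fun i => x1 i / T, fun i => y1 i + (1 - 1/T) * x1 i, ?_, ?_, ?_, ?_, ?_, ?_, ?_⟩
  · intro i; exact div_nonneg (hx0 i) hT0.le
  · rw [← Finset.sum_div, div_le_one hT0]
  · intro i
    have h1 : 0 ≤ 1 - 1/T := by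
      rw [sub_nonneg, div_le_one hT0]; linarith
    have := hx0 i; have := hy0 i; nlinarith
  · have : ∑ i, (y1 i + (1 - 1/T) * x1 i) = (∑ i, y1 i) + (1 - 1/T) * T := by
      rw [Finset.sum_add_distrib, ← Finset.mul_sum]
    rw [this]
    have : (1 - 1/T) * T = T - 1 := by field_simp
    rw [this]; linarith
  · intro i; field_simp; ring
  · intro i
    have h1 : x1 i / T - x1 i = -((1 - 1/T) * x1 i) := by field_simp; ring
    rw [h1, abs_neg]
    have h2 : 0 ≤ (1 - 1/T) * x1 i := by
      have : 0 ≤ 1 - 1/T := by rw [sub_nonneg, div_le_one hT0]; linarith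
      exact mul_nonneg this (hx0 i)
    rw [abs_of_nonneg h2]
    have h3 : (1 - 1/T) * x1 i ≤ (1 - 1/T) * T := by
      apply mul_le_mul_of_nonneg_left (hcoord i)
      rw [sub_nonneg, div_le_one hT0]; linarith
    have : (1 - 1/T) * T = T - 1 := by field_simp
    linarith
  · intro i
    have h1 : y1 i + (1 - 1/T) * x1 i - y1 i = (1 - 1/T) * x1 i := by ring
    rw [h1]
    have h2 : 0 ≤ (1 - 1/T) * x1 i := by
      have : 0 ≤ 1 - 1/T := by rw [sub_nonneg, div_le_one hT0]; linarith
      exact mul_nonneg this (hx0 i)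
    rw [abs_of_nonneg h2]
    have h3 : (1 - 1/T) * x1 i ≤ (1 - 1/T) * T := by
      apply mul_le_mul_of_nonneg_left (hcoord i)
      rw [sub_nonneg, div_le_one hT0]; linarith
    have : (1 - 1/T) * T = T - 1 := by field_simp
    linarith



lemma aux_combine (N : ℕ) (x1 y1 : Fin N → ℝ)
    (hx0 : ∀ i, 0 ≤ x1 i) (hy0 : ∀ i, 0 ≤ y1 i)
    (hsum : (∑ i, x1 i) + (∑ i, y1 i) ≤ 2) :
    ∃ x' y' : Fin N → ℝ, (∀ i, 0 ≤ x' i) ∧ (∑ i, x' i) ≤ 1 ∧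
      (∀ i, 0 ≤ y' i) ∧ (∑ i, y' i) ≤ 1 ∧
      (∀ i, x' i + y' i = x1 i + y1 i) ∧
      (∀ i, |x' i - x1 i| ≤ max 0 ((∑ i, x1 i) - 1) + max 0 ((∑ i, y1 i) - 1)) ∧
      (∀ i, |y' i - y1 i| ≤ max 0 ((∑ i, x1 i) - 1) + max 0 ((∑ i, y1 i) - 1)) := by
  rcases le_or_gt (∑ i, x1 i) 1 with h1 | h1
  · rcases le_or_gt (∑ i, y1 i) 1 with h2 | h2
    · refine ⟨x1, y1, hx0, h1, hy0, h2, fun i => rfl, ?_, ?_⟩ <;>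
      · intro i; simp only [sub_self, abs_zero]
        positivity
    · obtain ⟨y', x', hy'0, hy'1, hx'0, hx'1, hsum', hby, hbx⟩ :=
        aux_rescale N y1 x1 hy0 hx0 (by linarith) h2
      refine ⟨x', y', hx'0, hx'1, hy'0, hy'1, fun i => by linarith [hsum' i], ?_, ?_⟩
      · intro i
        calc |x' i - x1 i| ≤ (∑ i, y1 i) - 1 := hbx i
          _ ≤ _ := by
            have := le_max_left (0:ℝ) ((∑ i, x1 i) - 1)
            have := le_max_right (0:ℝ) ((∑ i, y1 i) - 1)
            have h3 : (∑ i, y1 i) - 1 ≤ max 0 ((∑ i, y1 i) - 1) := le_max_right _ _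
            linarith
      · intro i
        calc |y' i - y1 i| ≤ (∑ i, y1 i) - 1 := hby i
          _ ≤ _ := by
            have := le_max_left (0:ℝ) ((∑ i, x1 i) - 1)
            have h3 : (∑ i, y1 i) - 1 ≤ max 0 ((∑ i, y1 i) - 1) := le_max_right _ _
            linarith
  · obtain ⟨x', y', hx'0, hx'1, hy'0, hy'1, hsum', hbx, hby⟩ :=
      aux_rescale N x1 y1 hx0 hy0 hsum h1
    refine ⟨x', y', hx'0, hx'1, hy'0, hy'1, hsum', ?_, ?_⟩
    · intro i
      calc |x' i - x1 i| ≤ (∑ i, x1 i) - 1 := hbx i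
        _ ≤ _ := by
          have := le_max_right (0:ℝ) ((∑ i, x1 i) - 1)
          have := le_max_left (0:ℝ) ((∑ i, y1 i) - 1)
          linarith
    · intro i
      calc |y' i - y1 i| ≤ (∑ i, x1 i) - 1 := hby i
        _ ≤ _ := by
          have := le_max_right (0:ℝ) ((∑ i, x1 i) - 1)
          have := le_max_left (0:ℝ) ((∑ i, y1 i) - 1)
          linarith



lemma aux_core (N : ℕ) (x y z : Fin N → ℝ)
    (hx0 : ∀ i, 0 ≤ x i) (hx1 : (∑ i, x i) ≤ 1)
    (hy0 : ∀ i, 0 ≤ y i) (hy1 : (∑ i, y i) ≤ 1)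
    (hz0 : ∀ i, 0 ≤ z i) (hz1 : (∑ i, z i) ≤ 1) :
    ∃ x' y' : Fin N → ℝ, (∀ i, 0 ≤ x' i) ∧ (∑ i, x' i) ≤ 1 ∧
      (∀ i, 0 ≤ y' i) ∧ (∑ i, y' i) ≤ 1 ∧
      (∀ i, x' i + y' i = 2 * z i) ∧
      (∀ i, |x' i - x i| ≤
        2 * |z i - (x i + y i) / 2| + 4 * ∑ j, |z j - (x j + y j) / 2|) ∧
      (∀ i, |y' i - y i| ≤
        2 * |z i - (x i + y i) / 2| + 4 * ∑ j, |z j - (x j + y j) / 2|) := by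
  set d : Fin N → ℝ := fun i => z i - (x i + y i) / 2 with hd
  set a : Fin N → ℝ := fun i => min (max (d i) (-(x i))) (2 * d i + y i) with ha
  -- basic facts about a
  have hz2 : ∀ i, 2 * d i + y i + x i = 2 * z i := by intro i; simp [hd]; ring
  have ha_ge : ∀ i, -(x i) ≤ a i := by
    intro i
    apply le_min (le_max_right _ _)
    have := hz0 i; have := hz2 i; linarith
  have ha_le : ∀ i, a i ≤ 2 * d i + y i := fun i => min_le_right _ _
  have ha_near : ∀ i, |a i - d i| ≤ |d i| := by
    intro i
    rw [abs_le]
    constructor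
    · -- a i - d i ≥ -|d i|
      have h1 : min (d i) (2 * d i + y i) ≤ a i := by
        apply min_le_min (le_max_left _ _) le_rfl
      have h2 : min (d i) (2 * d i + y i) ≥ min (d i) (2 * d i) := by
        apply min_le_min le_rfl
        have := hy0 i; linarith
      have h3 : min (d i) (2 * d i) - d i = min 0 (d i) := by
        rcases le_total (d i) 0 with h | h
        · rw [min_eq_right (by linarith), min_eq_right h]; ring
        · rw [min_eq_left (by linarith), min_eq_left h]; ring
      have h4 : -|d i| ≤ min 0 (d i) := by
        rcases le_total (d i) 0 with h | h
        · rw [min_eq_right h, abs_of_nonpos h]; linarith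
        · rw [min_eq_left h]; simp [abs_nonneg]
      linarith
    · -- a i - d i ≤ |d i|
      have h1 : a i ≤ max (d i) (-(x i)) := min_le_left _ _
      have h2 : max (d i) (-(x i)) ≤ max (d i) 0 := by
        apply max_le_max le_rfl
        have := hx0 i; linarith
      have h3 : max (d i) 0 - d i = max 0 (-(d i)) := by
        rcases le_total (d i) 0 with h | h
        · rw [max_eq_right h, max_eq_right (by linarith)]; ring
        · rw [max_eq_left h, max_eq_left (by linarith)]; ring
      have h4 : max 0 (-(d i)) ≤ |d i| := by
        rcases le_total (d i) 0 with h | h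
        · rw [max_eq_right (by linarith), abs_of_nonpos h]
        · rw [max_eq_left (by linarith)]; positivity
      linarith
  have ha_abs : ∀ i, |a i| ≤ 2 * |d i| := by
    intro i
    have h := ha_near i
    have : |a i| ≤ |a i - d i| + |d i| := by
      calc |a i| = |(a i - d i) + d i| := by ring_nf
        _ ≤ |a i - d i| + |d i| := abs_add_le _ _
    linarith
  -- stage 1 points
  set x1 : Fin N → ℝ := fun i => x i + a i with hx1def
  set y1 : Fin N → ℝ := fun i => y i + 2 * d i - a i with hy1def
  have hx10 : ∀ i, 0 ≤ x1 i := by intro i; have := ha_ge i; simp [hx1def]; linarith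
  have hy10 : ∀ i, 0 ≤ y1 i := by intro i; have := ha_le i; simp [hy1def]; linarith
  have hsum11 : ∀ i, x1 i + y1 i = 2 * z i := by
    intro i; have := hz2 i; simp [hx1def, hy1def]; linarith
  have hsumtot : (∑ i, x1 i) + (∑ i, y1 i) ≤ 2 := by
    have : (∑ i, x1 i) + (∑ i, y1 i) = ∑ i, (x1 i + y1 i) := by
      rw [← Finset.sum_add_distrib]
    rw [this]
    have : ∑ i, (x1 i + y1 i) = 2 * ∑ i, z i := by
      rw [Finset.mul_sum]; exact Finset.sum_congr rfl fun i _ => hsum11 i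
    rw [this]; linarith
  -- excess bounds
  have hexcess_x : max 0 ((∑ i, x1 i) - 1) ≤ 2 * ∑ j, |d j| := by
    apply max_le
    · positivity
    · have h1 : (∑ i, x1 i) = (∑ i, x i) + ∑ i, a i := by
        simp [hx1def, Finset.sum_add_distrib]
      have h2 : (∑ i, a i) ≤ ∑ i, |a i| :=
        Finset.sum_le_sum fun i _ => le_abs_self _
      have h3 : (∑ i, |a i|) ≤ ∑ i, 2 * |d i| :=
        Finset.sum_le_sum fun i _ => ha_abs i
      have h4 : (∑ i, 2 * |d i|) = 2 * ∑ i, |d i| := by rw [Finset.mul_sum]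
      linarith
  have hb_abs : ∀ i, |2 * d i - a i| ≤ 2 * |d i| := by
    intro i
    have h := ha_near i
    rw [abs_sub_comm] at h
    rw [show 2 * d i - a i = d i + (d i - a i) from by ring]
    calc |d i + (d i - a i)| ≤ |d i| + |d i - a i| := abs_add_le _ _
      _ ≤ 2 * |d i| := by linarith
  have hexcess_y : max 0 ((∑ i, y1 i) - 1) ≤ 2 * ∑ j, |d j| := by
    apply max_le
    · positivity
    · have h1 : (∑ i, y1 i) = (∑ i, y i) + ∑ i, (2 * d i - a i) := by
        rw [← Finset.sum_add_distrib]
        exact Finset.sum_congr rfl fun i _ => by simp [hy1def]; ring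
      have h2 : (∑ i, (2 * d i - a i)) ≤ ∑ i, |2 * d i - a i| :=
        Finset.sum_le_sum fun i _ => le_abs_self _
      have h3 : (∑ i, |2 * d i - a i|) ≤ ∑ i, 2 * |d i| :=
        Finset.sum_le_sum fun i _ => hb_abs i
      have h4 : (∑ i, 2 * |d i|) = 2 * ∑ i, |d i| := by rw [Finset.mul_sum]
      linarith
  -- apply combine
  obtain ⟨x', y', hx'0, hx'1, hy'0, hy'1, hs', hbx, hby⟩ :=
    aux_combine N x1 y1 hx10 hy10 hsumtot
  refine ⟨x', y', hx'0, hx'1, hy'0, hy'1, fun i => by rw [hs' i]; exact hsum11 i, ?_, ?_⟩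
  · intro i
    have h1 : |x' i - x i| ≤ |x' i - x1 i| + |x1 i - x i| := by
      rw [show x' i - x i = (x' i - x1 i) + (x1 i - x i) from by ring]
      exact abs_add_le _ _
    have h2 : |x1 i - x i| = |a i| := by simp [hx1def]
    have h3 := hbx i
    have h4 := ha_abs i
    have h5 : max 0 ((∑ i, x1 i) - 1) + max 0 ((∑ i, y1 i) - 1) ≤ 4 * ∑ j, |d j| := by
      linarith
    have h6 : |a i| ≤ 2 * |d i| := ha_abs i
    simp only [hd] at *
    linarith
  · intro i
    have h1 : |y' i - y i| ≤ |y' i - y1 i| + |y1 i - y i| := by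
      rw [show y' i - y i = (y' i - y1 i) + (y1 i - y i) from by ring]
      exact abs_add_le _ _
    have h2 : |y1 i - y i| = |2 * d i - a i| := by
      rw [show y1 i - y i = 2 * d i - a i from by simp [hy1def]; ring]
    have h3 := hby i
    have h4 := hb_abs i
    have h5 : max 0 ((∑ i, x1 i) - 1) + max 0 ((∑ i, y1 i) - 1) ≤ 4 * ∑ j, |d j| := by
      linarith
    simp only [hd] at *
    linarith



-- coordinate distance bound in EuclideanSpace
lemma aux_coord (N : ℕ) (f g : EuclideanSpace ℝ (Fin N)) (i : Fin N) :
    |f i - g i| ≤ dist f g := by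
  rw [EuclideanSpace.dist_eq]
  have h1 : |f i - g i| = Real.sqrt (|f i - g i| ^ 2) := by
    rw [Real.sqrt_sq (abs_nonneg _)]
  rw [h1]
  apply Real.sqrt_le_sqrt
  have : |f i - g i| ^ 2 = dist (f i) (g i) ^ 2 := by
    rw [Real.dist_eq]
  rw [this]
  exact Finset.single_le_sum (f := fun j => dist (f j) (g j) ^ 2)
    (fun j _ => sq_nonneg _) (Finset.mem_univ i)

-- EuclideanSpace version
lemma aux_euc (N : ℕ) (x y z : EuclideanSpace ℝ (Fin N))
    (hx0 : ∀ i, 0 ≤ x i) (hx1 : (∑ i, x i) ≤ 1)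
    (hy0 : ∀ i, 0 ≤ y i) (hy1 : (∑ i, y i) ≤ 1)
    (hz0 : ∀ i, 0 ≤ z i) (hz1 : (∑ i, z i) ≤ 1) :
    ∃ x' y' : EuclideanSpace ℝ (Fin N),
      (∀ i, 0 ≤ x' i) ∧ (∑ i, x' i) ≤ 1 ∧
      (∀ i, 0 ≤ y' i) ∧ (∑ i, y' i) ≤ 1 ∧
      ((2:ℝ)⁻¹ • (x' + y') = z) ∧
      dist x' x ≤ (N + 1) * (4 * N + 2) * dist z ((2:ℝ)⁻¹ • (x + y)) ∧
      dist y' y ≤ (N + 1) * (4 * N + 2) * dist z ((2:ℝ)⁻¹ • (x + y)) := by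
  obtain ⟨x', y', hx'0, hx'1, hy'0, hy'1, hmid, hbx, hby⟩ :=
    aux_core N x y z hx0 hx1 hy0 hy1 hz0 hz1
  set D := dist z ((2:ℝ)⁻¹ • (x + y)) with hD
  have hD0 : 0 ≤ D := dist_nonneg
  have hcoordD : ∀ i, |z i - (x i + y i) / 2| ≤ D := by
    intro i
    have := aux_coord N z ((2:ℝ)⁻¹ • (x + y)) i
    have he : ((2:ℝ)⁻¹ • (x + y)) i = (x i + y i) / 2 := by
      simp [PiLp.smul_apply, PiLp.add_apply]; ring
    rw [he] at this
    exact this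
  have hsumD : (∑ j, |z j - (x j + y j) / 2|) ≤ N * D := by
    calc (∑ j, |z j - (x j + y j) / 2|) ≤ ∑ _j : Fin N, D :=
          Finset.sum_le_sum fun j _ => hcoordD j
      _ = N * D := by simp [Finset.sum_const, mul_comm]
  have hK : ∀ i, |x' i - x i| ≤ (4 * N + 2) * D := by
    intro i
    have h1 := hbx i
    have h2 := hcoordD i
    have := hsumD
    nlinarith [abs_nonneg (z i - (x i + y i) / 2)]
  have hKy : ∀ i, |y' i - y i| ≤ (4 * N + 2) * D := by
    intro i
    have h1 := hby i
    have h2 := hcoordD i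
    have := hsumD
    nlinarith [abs_nonneg (z i - (x i + y i) / 2)]
  -- convert coordinate bounds to distance bound
  have hdist : ∀ (f g : EuclideanSpace ℝ (Fin N)),
      (∀ i, |f i - g i| ≤ (4 * N + 2) * D) →
      dist f g ≤ (N + 1) * (4 * N + 2) * D := by
    intro f g hfg
    rw [EuclideanSpace.dist_eq]
    have hKnn : (0:ℝ) ≤ (4 * N + 2) * D := by positivity
    have h1 : (∑ i, dist (f i) (g i) ^ 2) ≤ ∑ _i : Fin N, ((4 * N + 2) * D) ^ 2 := by
      apply Finset.sum_le_sum
      intro i _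
      have := hfg i
      rw [Real.dist_eq]
      nlinarith [abs_nonneg (f i - g i)]
    have h2 : (∑ _i : Fin N, ((4 * N + 2) * D) ^ 2) = N * ((4 * N + 2) * D) ^ 2 := by
      simp [Finset.sum_const, mul_comm]
    have h3 : (N:ℝ) * ((4 * N + 2) * D) ^ 2 ≤ ((N + 1) * ((4 * N + 2) * D)) ^ 2 := by
      have hN : (0:ℝ) ≤ N := Nat.cast_nonneg N
      nlinarith [sq_nonneg ((4 * N + 2) * D)]
    calc Real.sqrt (∑ i, dist (f i) (g i) ^ 2)
        ≤ Real.sqrt (((N + 1) * ((4 * N + 2) * D)) ^ 2) := by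
          apply Real.sqrt_le_sqrt; linarith
      _ = (N + 1) * ((4 * N + 2) * D) := by
          apply Real.sqrt_sq; positivity
      _ = (N + 1) * (4 * N + 2) * D := by ring
  refine ⟨WithLp.toLp 2 x', WithLp.toLp 2 y', hx'0, hx'1, hy'0, hy'1, ?_,
    hdist (WithLp.toLp 2 x') x hK, hdist (WithLp.toLp 2 y') y hKy⟩
  · ext i
    have := hmid i
    simp only [PiLp.smul_apply, PiLp.add_apply, PiLp.toLp_apply, smul_eq_mul]
    linarith



/-- The standard simplex in `ℝ^N` is stable: the midpoint map
`(x, y) ↦ (x + y)/2` from the simplex × simplex to the simplex is open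
(images of relatively open sets are relatively open). -/
theorem stmt_19 (N : ℕ) :
    ∀ U : Set (EuclideanSpace ℝ (Fin N) × EuclideanSpace ℝ (Fin N)), IsOpen U →
      ∃ W : Set (EuclideanSpace ℝ (Fin N)), IsOpen W ∧
        (fun q : EuclideanSpace ℝ (Fin N) × EuclideanSpace ℝ (Fin N) =>
            (2 : ℝ)⁻¹ • (q.1 + q.2)) ''
          (U ∩ {x : EuclideanSpace ℝ (Fin N) | (∀ i, 0 ≤ x i) ∧ (∑ i, x i) ≤ 1} ×ˢ
            {x : EuclideanSpace ℝ (Fin N) | (∀ i, 0 ≤ x i) ∧ (∑ i, x i) ≤ 1}) =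
        W ∩ {x : EuclideanSpace ℝ (Fin N) | (∀ i, 0 ≤ x i) ∧ (∑ i, x i) ≤ 1} := by
  intro U hU
  set S : Set (EuclideanSpace ℝ (Fin N)) :=
    {x | (∀ i, 0 ≤ x i) ∧ (∑ i, x i) ≤ 1} with hS
  set C : ℝ := (N + 1) * (4 * N + 2) + 1 with hC
  have hC0 : 0 < C := by positivity
  set mid : EuclideanSpace ℝ (Fin N) × EuclideanSpace ℝ (Fin N) →
      EuclideanSpace ℝ (Fin N) := fun q => (2:ℝ)⁻¹ • (q.1 + q.2) with hmid
  refine ⟨⋃ p ∈ U ∩ S ×ˢ S, ⋃ ε ∈ {ε : ℝ | 0 < ε ∧ Metric.ball p ε ⊆ U},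
      Metric.ball (mid p) (ε / C), ?_, ?_⟩
  · exact isOpen_biUnion fun p _ => isOpen_biUnion fun ε _ => Metric.isOpen_ball
  · apply Set.Subset.antisymm
    · rintro w ⟨p, hp, rfl⟩
      obtain ⟨hpU, hpS⟩ := hp
      obtain ⟨ε, hε0, hball⟩ := Metric.isOpen_iff.mp hU p hpU
      constructor
      · refine Set.mem_biUnion ⟨hpU, hpS⟩ ?_
        refine Set.mem_biUnion (show ε ∈ {ε : ℝ | 0 < ε ∧ Metric.ball p ε ⊆ U}
          from ⟨hε0, hball⟩) ?_
        exact Metric.mem_ball_self (by positivity)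
      · -- mid p ∈ S
        obtain ⟨⟨h10, h11⟩, ⟨h20, h21⟩⟩ := hpS
        constructor
        · intro i
          have he : mid p i = (p.1 i + p.2 i) / 2 := by
            simp [hmid, PiLp.smul_apply, PiLp.add_apply]; ring
          rw [he]
          have := h10 i; have := h20 i; linarith
        · have he : (∑ i, mid p i) = ((∑ i, p.1 i) + (∑ i, p.2 i)) / 2 := by
            rw [← Finset.sum_add_distrib, Finset.sum_div]
            apply Finset.sum_congr rfl
            intro i _
            simp [hmid, PiLp.smul_apply, PiLp.add_apply]; ring
          rw [he]; linarith
    · rintro z ⟨hzW, hzS⟩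
      obtain ⟨p, hp, hz2⟩ := Set.mem_iUnion₂.mp hzW
      obtain ⟨ε, hε, hzball⟩ := Set.mem_iUnion₂.mp hz2
      obtain ⟨hε0, hballU⟩ := hε
      obtain ⟨hpU, ⟨h10, h11⟩, ⟨h20, h21⟩⟩ := hp
      obtain ⟨hz0, hz1⟩ := hzS
      obtain ⟨x', y', hx'0, hx'1, hy'0, hy'1, hmideq, hdx, hdy⟩ :=
        aux_euc N p.1 p.2 z h10 h11 h20 h21 hz0 hz1
      have hdlt : dist z (mid p) < ε / C := Metric.mem_ball.mp hzball
      have hd0 : 0 ≤ dist z (mid p) := dist_nonneg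
      have hA0 : (0:ℝ) ≤ ((N:ℝ) + 1) * (4 * N + 2) := by positivity
      have h2 : dist z (mid p) * C < ε := (lt_div_iff₀ hC0).mp hdlt
      have hlt : ((N:ℝ) + 1) * (4 * N + 2) * dist z (mid p) < ε := by
        have hAC : ((N:ℝ) + 1) * (4 * N + 2) ≤ C := by rw [hC]; linarith
        nlinarith
      have hmemU : (x', y') ∈ U := by
        apply hballU
        rw [Metric.mem_ball, Prod.dist_eq]
        apply max_lt
        · exact lt_of_le_of_lt hdx hlt
        · exact lt_of_le_of_lt hdy hlt
      exact ⟨(x', y'), ⟨hmemU, ⟨hx'0, hx'1⟩, ⟨hy'0, hy'1⟩⟩, hmideq⟩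
end
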